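/- arXiv:1308.4077 — 11 statements merged into one kernel-verified Lean document; each statement's English description precedes it below -/
import Mathlib

section
/- Let G be a simple connected graph on vertex set {1,...,p} with all vertex degrees at most k, let Ã ∈ ℝ^{p×p} be its adjacency matrix, let h > k, and set Θ := −h·I + Ã. Then Θ is negative definite (in particular invertible), the matrix Q := −(1/2)·Θ⁻¹ satisfies ΘQ + QΘᵀ + I = 0, and for every nonempty proper subset S ⊆ {1,...,p}: ‖Q_{S^c,S} (Q_{S,S})⁻¹‖∞ = ‖(Θ_{S^c,S^c})⁻¹ Θ_{S^c,S}‖∞ ≤ k/h. -/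
open scoped Matrix

/-- The `ℓ∞` operator norm of a real matrix: maximum over rows of the sum of
absolute values of the entries. -/
noncomputable def matInfNorm {I J : Type*} [Fintype I] [Fintype J]
    (A : Matrix I J ℝ) : ℝ :=
  ⨆ i, ∑ j, |A i j|

/-- The submatrix of `A` with rows indexed by `S` and columns indexed by `T`. -/
def subm {p : ℕ} (A : Matrix (Fin p) (Fin p) ℝ) (S T : Finset (Fin p)) :
    Matrix S T ℝ :=
  A.submatrix (fun i => (i : Fin p)) (fun j => (j : Fin p))

lemma matInfNorm_neg {I J : Type*} [Fintype I] [Fintype J] (A : Matrix I J ℝ) :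
    matInfNorm (-A) = matInfNorm A := by
  simp [matInfNorm, abs_neg]

lemma matInfNorm_eq_max {I J : Type*} [Fintype I] [Fintype J] [Nonempty I]
    (A : Matrix I J ℝ) : ∃ i0, matInfNorm A = ∑ j, |A i0 j| ∧
      ∀ i, ∑ j, |A i j| ≤ ∑ j, |A i0 j| := by
  obtain ⟨i0, hi0⟩ := Finite.exists_max (fun i => ∑ j, |A i j|)
  refine ⟨i0, ?_, hi0⟩
  unfold matInfNorm
  exact le_antisymm (ciSup_le hi0)
    (le_ciSup (Set.Finite.bddAbove (Set.finite_range fun i => ∑ j, |A i j|)) i0)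

lemma posDef_submatrix {n m : Type*} [Fintype n] [Fintype m] [DecidableEq n] [DecidableEq m]
    {M : Matrix n n ℝ} (hM : M.PosDef) (e : m → n) (he : Function.Injective e) :
    (M.submatrix e e).PosDef := by
  rw [Matrix.posDef_iff_dotProduct_mulVec]
  constructor
  · rw [Matrix.IsHermitian, Matrix.conjTranspose_submatrix, hM.1]
  · intro x hx
    set y : n → ℝ := fun j => ∑ i, if e i = j then x i else 0 with hy
    have hsum : ∀ (f : n → ℝ), ∑ j, y j * f j = ∑ i, x i * f (e i) := by
      intro f
      simp only [hy, Finset.sum_mul, ite_mul, zero_mul]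
      rw [Finset.sum_comm]
      simp
    have hyne : y ≠ 0 := by
      obtain ⟨i, hi⟩ := Function.ne_iff.mp hx
      intro hzero
      apply hi
      have : y (e i) = x i := by simp [hy, he.eq_iff]
      rw [hzero] at this
      simpa using this.symm
    have inner : ∀ i, (M *ᵥ y) (e i) = ∑ i', x i' * M (e i) (e i') := by
      intro i
      simp only [Matrix.mulVec, dotProduct]
      rw [← hsum fun j => M (e i) j]
      exact Finset.sum_congr rfl fun j _ => mul_comm _ _
    have key : (star y) ⬝ᵥ (M *ᵥ y) = (star x) ⬝ᵥ ((M.submatrix e e) *ᵥ x) := by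
      simp only [dotProduct, Pi.star_apply, star_trivial]
      rw [hsum fun j => (M *ᵥ y) j]
      refine Finset.sum_congr rfl fun i _ => ?_
      rw [inner i]
      congr 1
      simp only [Matrix.mulVec, dotProduct, Matrix.submatrix_apply]
      exact Finset.sum_congr rfl fun i' _ => mul_comm _ _
    rw [← key]
    exact hM.dotProduct_mulVec_pos hyne

lemma scalar_bound {a d m h k : ℝ} (h0 : 0 < h) (hk : k < h) (ha0 : 0 ≤ a)
    (hd0 : 0 ≤ d) (hm0 : 0 ≤ m) (hk0 : 0 ≤ k) (hadk : a + d ≤ k)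
    (hmain : h * m ≤ a * m + d) : m * h ≤ k := by
  have t1 : 0 ≤ d - (h - a) * m := by nlinarith
  have t2 : 0 ≤ (k - d) * (h - k) := mul_nonneg (by linarith) (by linarith)
  have t3 : 0 ≤ k * (k - a - d) := mul_nonneg hk0 (by linarith)
  have hha : 0 < h - a := by linarith
  nlinarith [mul_nonneg h0.le t1, t2, t3, hha]

theorem stmt1 {p k : ℕ} (G : SimpleGraph (Fin p)) [DecidableRel G.Adj]
    (hconn : G.Connected) (hdeg : ∀ v, G.degree v ≤ k)
    (h : ℝ) (hk : (k : ℝ) < h)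
    (Θ : Matrix (Fin p) (Fin p) ℝ)
    (hΘ : Θ = -(h • (1 : Matrix (Fin p) (Fin p) ℝ)) + G.adjMatrix ℝ)
    (Q : Matrix (Fin p) (Fin p) ℝ)
    (hQ : Q = -((1 / 2 : ℝ) • Θ⁻¹)) :
    (-Θ).PosDef ∧ IsUnit Θ ∧
    Θ * Q + Q * Θᵀ + 1 = 0 ∧
    ∀ S : Finset (Fin p), S.Nonempty → Sᶜ.Nonempty →
      matInfNorm (subm Q Sᶜ S * (subm Q S S)⁻¹)
        = matInfNorm ((subm Θ Sᶜ Sᶜ)⁻¹ * subm Θ Sᶜ S) ∧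
      matInfNorm (subm Q Sᶜ S * (subm Q S S)⁻¹) ≤ (k : ℝ) / h := by
  have h0 : (0 : ℝ) < h := lt_of_le_of_lt (Nat.cast_nonneg k) hk
  set A := G.adjMatrix ℝ with hA
  have hAnn : ∀ i j, 0 ≤ A i j := by
    intro i j; simp only [hA, SimpleGraph.adjMatrix_apply]; positivity
  have hAsymm : ∀ i j, A i j = A j i := by
    intro i j; simp [hA, SimpleGraph.adjMatrix_apply, G.adj_comm]
  have hAdiag : ∀ i, A i i = 0 := by
    intro i; simp [hA, SimpleGraph.adjMatrix_apply]
  have rowsum : ∀ v, ∑ w, A v w = (G.degree v : ℝ) := by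
    intro v
    simp [hA, SimpleGraph.adjMatrix_apply, SimpleGraph.degree,
      SimpleGraph.neighborFinset_eq_filter, Finset.sum_boole]
  have hΘentry : ∀ i j, Θ i j = -(h * (if i = j then 1 else 0)) + A i j := by
    intro i j
    rw [hΘ]
    simp [Matrix.add_apply, Matrix.neg_apply, Matrix.smul_apply, Matrix.one_apply]
  have hnegΘ : -Θ = h • (1 : Matrix (Fin p) (Fin p) ℝ) - A := by
    rw [hΘ, neg_add, neg_neg, ← sub_eq_add_neg]
  -- Part 1: positive definiteness of -Θ
  have hpos : (-Θ).PosDef := by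
    rw [Matrix.posDef_iff_dotProduct_mulVec]
    constructor
    · rw [Matrix.IsHermitian, hnegΘ]
      ext i j
      simp [Matrix.conjTranspose_apply, Matrix.sub_apply, Matrix.smul_apply,
        Matrix.one_apply, hA, SimpleGraph.adjMatrix_apply, G.adj_comm, eq_comm]
    · intro x hx
      have hform : (star x) ⬝ᵥ ((-Θ) *ᵥ x)
          = h * (∑ i, x i ^ 2) - ∑ i, ∑ j, A i j * (x i * x j) := by
        rw [hnegΘ, Matrix.sub_mulVec, dotProduct_sub, Matrix.smul_mulVec,
          Matrix.one_mulVec]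
        congr 1
        · simp only [dotProduct, Pi.smul_apply, smul_eq_mul, star_trivial,
            Finset.mul_sum]
          exact Finset.sum_congr rfl fun i _ => by ring
        · simp only [star_trivial, dotProduct, Matrix.mulVec, Finset.mul_sum]
          exact Finset.sum_congr rfl fun i _ => Finset.sum_congr rfl fun j _ => by ring
      have hbound : ∑ i, ∑ j, A i j * (x i * x j) ≤ (k : ℝ) * ∑ i, x i ^ 2 := by
        have step1 : ∑ i, ∑ j, A i j * (x i * x j)
            ≤ ∑ i, ∑ j, A i j * ((x i ^ 2 + x j ^ 2) / 2) := by
          refine Finset.sum_le_sum fun i _ => Finset.sum_le_sum fun j _ => ?_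
          exact mul_le_mul_of_nonneg_left (by nlinarith [sq_nonneg (x i - x j)]) (hAnn i j)
        have step2 : ∑ i, ∑ j, A i j * ((x i ^ 2 + x j ^ 2) / 2)
            = ∑ i, (G.degree i : ℝ) * x i ^ 2 := by
          have e1 : ∀ i, ∑ j, A i j * ((x i ^ 2 + x j ^ 2) / 2)
              = (∑ j, A i j) * x i ^ 2 / 2 + (∑ j, A i j * x j ^ 2) / 2 := by
            intro i
            rw [Finset.sum_mul, Finset.sum_div, Finset.sum_div, ← Finset.sum_add_distrib]
            exact Finset.sum_congr rfl fun j _ => by ring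
          simp only [e1, rowsum]
          rw [Finset.sum_add_distrib]
          have e2 : ∑ i, (∑ j, A i j * x j ^ 2) / 2 = ∑ j, (G.degree j : ℝ) * x j ^ 2 / 2 := by
            rw [← Finset.sum_div, Finset.sum_comm]
            rw [Finset.sum_div]
            refine Finset.sum_congr rfl fun j _ => ?_
            rw [← Finset.sum_mul, ← rowsum j]
            rw [Finset.sum_congr rfl fun i _ => hAsymm i j]
          rw [e2, ← Finset.sum_add_distrib]
          exact Finset.sum_congr rfl fun i _ => by ring
        have step3 : ∑ i, (G.degree i : ℝ) * x i ^ 2 ≤ (k : ℝ) * ∑ i, x i ^ 2 := by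
          rw [Finset.mul_sum]
          refine Finset.sum_le_sum fun i _ => ?_
          have : (G.degree i : ℝ) ≤ (k : ℝ) := by exact_mod_cast hdeg i
          exact mul_le_mul_of_nonneg_right this (sq_nonneg _)
        linarith
      have hxsq : 0 < ∑ i, x i ^ 2 := by
        obtain ⟨i, hi⟩ := Function.ne_iff.mp hx
        exact Finset.sum_pos' (fun i _ => sq_nonneg _)
          ⟨i, Finset.mem_univ i, sq_pos_of_ne_zero hi⟩
      rw [hform]
      nlinarith
  -- Part 2: invertibility of Θ
  have hunit : IsUnit Θ := by
    have := hpos.isUnit.neg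
    rwa [neg_neg] at this
  have hdet : IsUnit Θ.det := (Matrix.isUnit_iff_isUnit_det Θ).mp hunit
  have hΘinv : Θ * Θ⁻¹ = 1 := Matrix.mul_nonsing_inv Θ hdet
  have hinvΘ : Θ⁻¹ * Θ = 1 := Matrix.nonsing_inv_mul Θ hdet
  have hΘsymm : Θᵀ = Θ := by
    have := hpos.1
    have h2 : (-Θ)ᵀ = -Θ := this
    have : Θᵀ = Θ := by
      have := congrArg Neg.neg h2
      simpa [Matrix.transpose_neg] using this
    exact this
  refine ⟨hpos, hunit, ?_, ?_⟩
  · -- Lyapunov equation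
    rw [hQ, hΘsymm]
    rw [Matrix.mul_neg, Matrix.neg_mul, Matrix.mul_smul, Matrix.smul_mul, hΘinv, hinvΘ]
    ext i j
    simp only [Matrix.add_apply, Matrix.neg_apply, Matrix.smul_apply, Matrix.one_apply,
      Matrix.zero_apply, smul_eq_mul]
    split_ifs <;> norm_num
  · -- Part 4
    intro S hS hSc
    obtain ⟨v0, hv0⟩ := hS
    obtain ⟨w0, hw0⟩ := hSc
    haveI : Nonempty ↥(S : Finset (Fin p)) := ⟨⟨v0, hv0⟩⟩
    haveI : Nonempty ↥(Sᶜ : Finset (Fin p)) := ⟨⟨w0, hw0⟩⟩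
    set D := subm Θ Sᶜ Sᶜ with hD
    set C := subm Θ Sᶜ S with hC
    -- D is invertible
    have hDneg : (-Θ).submatrix (fun i : ↥(Sᶜ : Finset (Fin p)) => (i : Fin p))
        (fun i : ↥(Sᶜ : Finset (Fin p)) => (i : Fin p)) = -D := by
      ext i j; simp [hD, subm, Matrix.submatrix_apply]
    have hDpd : (-D).PosDef := by
      rw [← hDneg]; exact posDef_submatrix hpos _ Subtype.val_injective
    have hDunit : IsUnit D := by have := hDpd.isUnit.neg; rwa [neg_neg] at this
    have hDdet : IsUnit D.det := (Matrix.isUnit_iff_isUnit_det D).mp hDunit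
    have hDD : D⁻¹ * D = 1 := Matrix.nonsing_inv_mul D hDdet
    have hDD' : D * D⁻¹ = 1 := Matrix.mul_nonsing_inv D hDdet
    -- (Θ⁻¹)_{S,S} is invertible
    have hninv : (-Θ)⁻¹ = -(Θ⁻¹) := Matrix.inv_eq_right_inv (by
      rw [Matrix.neg_mul, Matrix.mul_neg, neg_neg, hΘinv])
    have hPpd : (-(Θ⁻¹)).PosDef := by rw [← hninv]; exact hpos.inv
    have hP11neg : (-(Θ⁻¹)).submatrix (fun i : ↥(S : Finset (Fin p)) => (i : Fin p))
        (fun i : ↥(S : Finset (Fin p)) => (i : Fin p)) = -(subm Θ⁻¹ S S) := by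
      ext i j; simp [subm, Matrix.submatrix_apply]
    have hP11pd : (-(subm Θ⁻¹ S S)).PosDef := by
      rw [← hP11neg]; exact posDef_submatrix hPpd _ Subtype.val_injective
    have hP11unit : IsUnit (subm Θ⁻¹ S S) := by
      have := hP11pd.isUnit.neg; rwa [neg_neg] at this
    have hP11det : IsUnit (subm Θ⁻¹ S S).det :=
      (Matrix.isUnit_iff_isUnit_det _).mp hP11unit
    have hP11 : subm Θ⁻¹ S S * (subm Θ⁻¹ S S)⁻¹ = 1 :=
      Matrix.mul_nonsing_inv _ hP11det
    -- the key block identity from Θ * Θ⁻¹ = 1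
    have key : C * subm Θ⁻¹ S S + D * subm Θ⁻¹ Sᶜ S = 0 := by
      ext i j
      have e := congrFun (congrFun hΘinv (i : Fin p)) (j : Fin p)
      rw [Matrix.mul_apply] at e
      have hij : ((i : Fin p)) ≠ ((j : Fin p)) := by
        intro hq
        have hiS : (i : Fin p) ∉ S := Finset.mem_compl.mp i.2
        exact hiS (hq ▸ j.2)
      rw [Matrix.one_apply_ne hij] at e
      have split : ∑ l : Fin p, Θ (i : Fin p) l * Θ⁻¹ l (j : Fin p)
          = (∑ l ∈ S, Θ (i : Fin p) l * Θ⁻¹ l (j : Fin p))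
            + ∑ l ∈ Sᶜ, Θ (i : Fin p) l * Θ⁻¹ l (j : Fin p) :=
        (Finset.sum_add_sum_compl S _).symm
      rw [split] at e
      simp only [Matrix.add_apply, Matrix.zero_apply, Matrix.mul_apply, hC, hD, subm,
        Matrix.submatrix_apply]
      rw [Finset.sum_coe_sort S (fun l => Θ (i : Fin p) l * Θ⁻¹ l (j : Fin p)),
        Finset.sum_coe_sort Sᶜ (fun l => Θ (i : Fin p) l * Θ⁻¹ l (j : Fin p))]
      exact e
    set M := D⁻¹ * C with hM
    have hDM : D * M = C := by rw [hM, ← Matrix.mul_assoc, hDD', Matrix.one_mul]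
    -- the matrix in the statement equals -M
    have hQ21 : subm Q Sᶜ S = -((1 / 2 : ℝ) • subm Θ⁻¹ Sᶜ S) := by
      ext i j; simp [hQ, subm, Matrix.submatrix_apply]
    have hQ11 : subm Q S S = -((1 / 2 : ℝ) • subm Θ⁻¹ S S) := by
      ext i j; simp [hQ, subm, Matrix.submatrix_apply]
    have hQ11inv : (subm Q S S)⁻¹ = -((2 : ℝ) • (subm Θ⁻¹ S S)⁻¹) :=
      Matrix.inv_eq_right_inv (by
        rw [hQ11, Matrix.neg_mul, Matrix.mul_neg, neg_neg, Matrix.smul_mul,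
          Matrix.mul_smul, hP11, smul_smul]
        norm_num)
    have hP21 : subm Θ⁻¹ Sᶜ S = -(D⁻¹ * (C * subm Θ⁻¹ S S)) := by
      have h1 : D * subm Θ⁻¹ Sᶜ S = -(C * subm Θ⁻¹ S S) :=
        eq_neg_of_add_eq_zero_right key
      calc subm Θ⁻¹ Sᶜ S = (D⁻¹ * D) * subm Θ⁻¹ Sᶜ S := by rw [hDD, Matrix.one_mul]
        _ = D⁻¹ * (D * subm Θ⁻¹ Sᶜ S) := by rw [Matrix.mul_assoc]
        _ = D⁻¹ * (-(C * subm Θ⁻¹ S S)) := by rw [h1]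
        _ = -(D⁻¹ * (C * subm Θ⁻¹ S S)) := by rw [Matrix.mul_neg]
    have E : subm Q Sᶜ S * (subm Q S S)⁻¹ = -M := by
      rw [hQ21, hQ11inv, Matrix.neg_mul, Matrix.mul_neg, neg_neg, Matrix.smul_mul,
        Matrix.mul_smul, smul_smul]
      norm_num
      rw [hP21, Matrix.neg_mul, Matrix.mul_assoc, Matrix.mul_assoc, hP11, Matrix.mul_one, hM]
    refine ⟨by rw [E, matInfNorm_neg], ?_⟩
    rw [E, matInfNorm_neg]
    -- the ℓ∞ bound
    obtain ⟨i0, hnorm, hall⟩ := matInfNorm_eq_max M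
    set m := ∑ j, |M i0 j| with hm
    have hm0 : 0 ≤ m := Finset.sum_nonneg fun j _ => abs_nonneg _
    set a := ∑ l : ↥(Sᶜ : Finset (Fin p)), A (i0 : Fin p) (l : Fin p) with ha
    set d := ∑ j : ↥(S : Finset (Fin p)), A (i0 : Fin p) (j : Fin p) with hd
    have ha0 : 0 ≤ a := Finset.sum_nonneg fun l _ => hAnn _ _
    have hd0 : 0 ≤ d := Finset.sum_nonneg fun j _ => hAnn _ _
    have had : a + d = (G.degree (i0 : Fin p) : ℝ) := by
      rw [ha, hd, Finset.sum_coe_sort Sᶜ (fun v => A (i0 : Fin p) v),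
        Finset.sum_coe_sort S (fun v => A (i0 : Fin p) v)]
      have := Finset.sum_add_sum_compl Sᶜ (fun v => A (i0 : Fin p) v)
      rw [compl_compl] at this
      rw [this, rowsum]
    have hadk : a + d ≤ (k : ℝ) := by
      rw [had]; exact_mod_cast hdeg (i0 : Fin p)
    -- row relation from D * M = C
    have hrow : ∀ j : ↥(S : Finset (Fin p)), h * M i0 j
        = (∑ l : ↥(Sᶜ : Finset (Fin p)), A (i0 : Fin p) (l : Fin p) * M l j)
          - A (i0 : Fin p) (j : Fin p) := by
      intro j
      have e := congrFun (congrFun hDM i0) j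
      rw [Matrix.mul_apply] at e
      have hsplit : ∀ l : ↥(Sᶜ : Finset (Fin p)), D i0 l * M l j
          = (if i0 = l then -(h * M l j) else 0) + A (i0 : Fin p) (l : Fin p) * M l j := by
        intro l
        have : D i0 l = Θ (i0 : Fin p) (l : Fin p) := by simp [hD, subm]
        rw [this, hΘentry]
        by_cases hc : i0 = l
        · rw [if_pos hc, if_pos (by rw [hc])]; ring
        · rw [if_neg hc, if_neg (fun hcc => hc (Subtype.ext hcc))]; ring
      rw [Finset.sum_congr rfl fun l _ => hsplit l, Finset.sum_add_distrib,
        Finset.sum_ite_eq] at e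
      have hCij : C i0 j = A (i0 : Fin p) (j : Fin p) := by
        have hij : ((i0 : Fin p)) ≠ ((j : Fin p)) := by
          intro hq
          exact (Finset.mem_compl.mp i0.2) (hq ▸ j.2)
        simp [hC, subm, hΘentry, if_neg hij]
      rw [hCij] at e
      simp only [Finset.mem_univ, if_true] at e
      linarith [e]
    have habs : ∀ j : ↥(S : Finset (Fin p)), h * |M i0 j|
        ≤ (∑ l : ↥(Sᶜ : Finset (Fin p)), A (i0 : Fin p) (l : Fin p) * |M l j|)
          + A (i0 : Fin p) (j : Fin p) := by
      intro j
      have e := hrow j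
      calc h * |M i0 j| = |h * M i0 j| := by rw [abs_mul, abs_of_pos h0]
        _ = |(∑ l : ↥(Sᶜ : Finset (Fin p)), A (i0 : Fin p) (l : Fin p) * M l j)
              - A (i0 : Fin p) (j : Fin p)| := by rw [e]
        _ ≤ |∑ l : ↥(Sᶜ : Finset (Fin p)), A (i0 : Fin p) (l : Fin p) * M l j|
              + |A (i0 : Fin p) (j : Fin p)| := abs_sub _ _
        _ ≤ (∑ l : ↥(Sᶜ : Finset (Fin p)), A (i0 : Fin p) (l : Fin p) * |M l j|)
              + A (i0 : Fin p) (j : Fin p) := by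
            refine add_le_add ?_ (le_of_eq (abs_of_nonneg (hAnn _ _)))
            refine le_trans (Finset.abs_sum_le_sum_abs _ _) ?_
            refine Finset.sum_le_sum fun l _ => ?_
            rw [abs_mul, abs_of_nonneg (hAnn _ _)]
      
    have hmain : h * m ≤ a * m + d := by
      have h1 : h * m = ∑ j : ↥(S : Finset (Fin p)), h * |M i0 j| := by
        rw [hm, Finset.mul_sum]
      have h2 : ∑ j : ↥(S : Finset (Fin p)), h * |M i0 j|
          ≤ (∑ j : ↥(S : Finset (Fin p)), ∑ l : ↥(Sᶜ : Finset (Fin p)),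
              A (i0 : Fin p) (l : Fin p) * |M l j|) + d := by
        rw [hd, ← Finset.sum_add_distrib]
        exact Finset.sum_le_sum fun j _ => habs j
      have h3 : (∑ j : ↥(S : Finset (Fin p)), ∑ l : ↥(Sᶜ : Finset (Fin p)),
          A (i0 : Fin p) (l : Fin p) * |M l j|) ≤ a * m := by
        rw [Finset.sum_comm, ha, Finset.sum_mul]
        refine Finset.sum_le_sum fun l _ => ?_
        rw [← Finset.mul_sum]
        exact mul_le_mul_of_nonneg_left (hall l) (hAnn _ _)
      linarith
    rw [hnorm, le_div_iff₀ h0]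
    exact scalar_bound h0 hk ha0 hd0 hm0 (Nat.cast_nonneg k) hadk hmain
end

section
/- Fix integers p, n, m ≥ 1, indices r, j ∈ {1,...,p}, η > 0, and Θ ∈ ℝ^{p×p} with σmax := σmax(I + ηΘ) < 1. For τ ≥ 0 let ρ(τ) ∈ ℝ^{p×p} be the matrix all of whose rows are zero except row r, which equals the j-th row of (I + ηΘ)^τ. Let R̃ ∈ ℝ^{(n+m+1)p×(n+m+1)p} be the block matrix with p×p blocks indexed by (a,b) ∈ {1,...,n+m+1}², whose block (a,b) equals ρ(a−1−b) if m+2 ≤ a ≤ n+m+1 and 1 ≤ b ≤ a−1, and is zero otherwise. Let R := (R̃ + R̃ᵀ)/2 and let ν_1,...,ν_{(n+m+1)p} be the eigenvalues of R. Then: Σ_i ν_i = 0; max_i |ν_i| ≤ 1/(1 − σmax); and Σ_i ν_i² ≤ (1/2)·n/(1 − σmax). -/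
open scoped Matrix

/-- The largest singular value of a real matrix, characterized as the supremum of
`‖A x‖₂` over unit vectors `x` (Euclidean norms). -/
noncomputable def sigmaMax {I J : Type*} [Fintype I] [Fintype J]
    (A : Matrix I J ℝ) : ℝ :=
  sSup { r : ℝ | ∃ x : J → ℝ, ∑ j, (x j) ^ 2 = 1 ∧
    r = Real.sqrt (∑ i, (A.mulVec x i) ^ 2) }

section aux

variable {I J : Type*} [Fintype I] [Fintype J]

lemma sigmaMax_bddAbove (A : Matrix I J ℝ) :
    BddAbove { r : ℝ | ∃ x : J → ℝ, ∑ j, (x j) ^ 2 = 1 ∧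
      r = Real.sqrt (∑ i, (A.mulVec x i) ^ 2) } := by
  refine ⟨Real.sqrt (∑ i, ∑ j, (A i j) ^ 2), ?_⟩
  rintro t ⟨x, hx, rfl⟩
  apply Real.sqrt_le_sqrt
  apply Finset.sum_le_sum
  intro i _
  have h := Finset.sum_mul_sq_le_sq_mul_sq Finset.univ (fun j => A i j) x
  rw [hx, mul_one] at h
  simpa [Matrix.mulVec, dotProduct] using h

lemma sigmaMax_nonneg [Nonempty J] (A : Matrix I J ℝ) : 0 ≤ sigmaMax A := by
  classical
  obtain ⟨j0⟩ := ‹Nonempty J›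
  refine le_trans (Real.sqrt_nonneg (∑ i, (A.mulVec (fun l => if l = j0 then 1 else 0) i) ^ 2))
    (le_csSup (sigmaMax_bddAbove A) ⟨fun l => if l = j0 then 1 else 0, ?_, rfl⟩)
  simp [apply_ite (· ^ (2:ℕ))]

lemma sigmaMax_mulVec_sq (A : Matrix I J ℝ) (v : J → ℝ) :
    ∑ i, (A.mulVec v i) ^ 2 ≤ (sigmaMax A) ^ 2 * ∑ j, (v j) ^ 2 := by
  classical
  have hs0 : (0:ℝ) ≤ ∑ j, (v j) ^ 2 := Finset.sum_nonneg fun _ _ => sq_nonneg _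
  rcases eq_or_lt_of_le hs0 with h | h
  · have hv : v = 0 := by
      funext jj
      have := (Finset.sum_eq_zero_iff_of_nonneg (fun _ _ => sq_nonneg (v _))).mp h.symm jj
        (Finset.mem_univ _)
      exact pow_eq_zero_iff (two_ne_zero) |>.mp this
    simp [hv, Matrix.mulVec_zero]
  · set s : ℝ := ∑ j, (v j) ^ 2 with hsdef
    set c : ℝ := Real.sqrt s with hcdef
    have hc : 0 < c := Real.sqrt_pos.mpr h
    have hc2 : c ^ 2 = s := Real.sq_sqrt hs0
    have hxx : ∑ jj, ((c⁻¹ • v) jj) ^ 2 = 1 := by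
      simp only [Pi.smul_apply, smul_eq_mul, mul_pow, ← Finset.mul_sum]
      rw [← hsdef, ← hc2]
      field_simp
    have hmem := le_csSup (sigmaMax_bddAbove A) ⟨c⁻¹ • v, hxx, rfl⟩
    have hexp : ∑ i, (A.mulVec (c⁻¹ • v) i) ^ 2 = c⁻¹ ^ 2 * ∑ i, (A.mulVec v i) ^ 2 := by
      rw [Matrix.mulVec_smul]
      simp [mul_pow, Finset.mul_sum]
    have hT0 : (0:ℝ) ≤ ∑ i, (A.mulVec v i) ^ 2 := Finset.sum_nonneg fun _ _ => sq_nonneg _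
    have h1 : c⁻¹ ^ 2 * ∑ i, (A.mulVec v i) ^ 2 ≤ (sigmaMax A) ^ 2 := by
      have h0 : (0:ℝ) ≤ c⁻¹ ^ 2 * ∑ i, (A.mulVec v i) ^ 2 := by positivity
      calc c⁻¹ ^ 2 * ∑ i, (A.mulVec v i) ^ 2
          = (Real.sqrt (c⁻¹ ^ 2 * ∑ i, (A.mulVec v i) ^ 2)) ^ 2 := (Real.sq_sqrt h0).symm
        _ ≤ (sigmaMax A) ^ 2 := by
            apply pow_le_pow_left₀ (Real.sqrt_nonneg _)
            rw [← hexp]; exact hmem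
    have hcne : c ≠ 0 := ne_of_gt hc
    calc ∑ i, (A.mulVec v i) ^ 2 = c ^ 2 * (c⁻¹ ^ 2 * ∑ i, (A.mulVec v i) ^ 2) := by
          field_simp
      _ ≤ c ^ 2 * (sigmaMax A) ^ 2 := by
          apply mul_le_mul_of_nonneg_left h1 (by positivity)
      _ = (sigmaMax A) ^ 2 * s := by rw [hc2]; ring

lemma sigmaMax_pow_mulVec_sq {I : Type*} [Fintype I] [DecidableEq I]
    (A : Matrix I I ℝ) (τ : ℕ) (v : I → ℝ) :
    ∑ i, ((A ^ τ).mulVec v i) ^ 2 ≤ ((sigmaMax A) ^ 2) ^ τ * ∑ j, (v j) ^ 2 := by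
  induction τ generalizing v with
  | zero => simp [Matrix.one_mulVec]
  | succ k ih =>
    rw [pow_succ, ← Matrix.mulVec_mulVec]
    calc ∑ i, ((A ^ k).mulVec (A.mulVec v) i) ^ 2
        ≤ ((sigmaMax A) ^ 2) ^ k * ∑ jj, (A.mulVec v jj) ^ 2 := ih _
      _ ≤ ((sigmaMax A) ^ 2) ^ k * ((sigmaMax A) ^ 2 * ∑ j, (v j) ^ 2) := by
          apply mul_le_mul_of_nonneg_left (sigmaMax_mulVec_sq A v) (by positivity)
      _ = ((sigmaMax A) ^ 2) ^ (k + 1) * ∑ j, (v j) ^ 2 := by ring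

lemma row_sq_le {I : Type*} [Fintype I] (A : Matrix I I ℝ) (C : ℝ) (hC : 0 ≤ C)
    (h : ∀ v : I → ℝ, ∑ i, (A.mulVec v i) ^ 2 ≤ C * ∑ jj, (v jj) ^ 2) (j : I) :
    ∑ l, (A j l) ^ 2 ≤ C := by
  set w : I → ℝ := fun l => A j l with hw
  have hkey : A.mulVec w j = ∑ l, (A j l) ^ 2 := by
    simp [Matrix.mulVec, dotProduct, hw, pow_two]
  set s : ℝ := ∑ l, (A j l) ^ 2 with hsdef
  have hs0 : 0 ≤ s := Finset.sum_nonneg fun _ _ => sq_nonneg _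
  rcases eq_or_lt_of_le hs0 with hz | hz
  · exact hz ▸ hC
  · have h1 : s ^ 2 ≤ ∑ i, (A.mulVec w i) ^ 2 := by
      rw [← hkey]
      exact Finset.single_le_sum (fun i _ => sq_nonneg (A.mulVec w i)) (Finset.mem_univ j)
    have h2 := h w
    have h3 : ∑ jj, (w jj) ^ 2 = s := rfl
    rw [h3] at h2
    nlinarith

end aux

section trace
variable {ι : Type*} [Fintype ι] [DecidableEq ι]

lemma trace_eq_sum_eig (A : Matrix ι ι ℝ) (hA : A.IsHermitian) :
    A.trace = ∑ i, hA.eigenvalues i := by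
  conv_lhs => rw [hA.spectral_theorem, Unitary.conjStarAlgAut_apply]
  rw [Matrix.trace_mul_cycle,
    Matrix.mem_unitaryGroup_iff'.mp (hA.eigenvectorUnitary).2, one_mul, Matrix.trace_diagonal]
  simp

lemma trace_sq_eq_sum_eig_sq (A : Matrix ι ι ℝ) (hA : A.IsHermitian) :
    (A * A).trace = ∑ i, hA.eigenvalues i ^ 2 := by
  set U : Matrix ι ι ℝ := (hA.eigenvectorUnitary : Matrix ι ι ℝ) with hU
  set D : Matrix ι ι ℝ := Matrix.diagonal (RCLike.ofReal ∘ hA.eigenvalues) with hD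
  have hU1 : star U * U = 1 := Matrix.mem_unitaryGroup_iff'.mp (hA.eigenvectorUnitary).2
  have hsq : A * A = U * (D * D) * star U := by
    conv_lhs => rw [hA.spectral_theorem, Unitary.conjStarAlgAut_apply]
    simp only [← hU, ← hD, Matrix.mul_assoc]
    rw [← Matrix.mul_assoc (star U) U, hU1, Matrix.one_mul]
  rw [hsq, Matrix.trace_mul_cycle, ← Matrix.mul_assoc, hU1, Matrix.one_mul]
  rw [hD, Matrix.diagonal_mul_diagonal, Matrix.trace_diagonal]
  simp [pow_two]

end trace

section geo

lemma geo_bound (q : ℝ) (h0 : 0 ≤ q) (h1 : q < 1) (K : ℕ) :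
    ∑ t ∈ Finset.range K, q ^ t ≤ 1 / (1 - q) := by
  have h1' : (0:ℝ) < 1 - q := by linarith
  rw [geom_sum_eq (by intro h; rw [h] at h1; exact lt_irrefl 1 h1 : q ≠ 1)]
  have heq : (q ^ K - 1) / (q - 1) = (1 - q ^ K) / (1 - q) := by
    rw [← neg_div_neg_eq]; ring_nf
  rw [heq, div_le_div_iff_of_pos_right h1']
  have hqK : 0 ≤ q ^ K := by positivity
  linarith

lemma L_b (q : ℝ) (h0 : 0 ≤ q) (h1 : q < 1) {N : ℕ} (a : Fin N) :
    ∑ b : Fin N, (if (b : ℕ) < (a : ℕ) then q ^ ((a : ℕ) - (b : ℕ) - 1) else 0)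
      ≤ 1 / (1 - q) := by
  have h : ∑ b : Fin N, (if (b : ℕ) < (a : ℕ) then q ^ ((a : ℕ) - (b : ℕ) - 1) else 0)
      = ∑ t ∈ Finset.range N, (if t < (a : ℕ) then q ^ ((a : ℕ) - t - 1) else 0) :=
    Fin.sum_univ_eq_sum_range (fun t => if t < (a : ℕ) then q ^ ((a : ℕ) - t - 1) else 0) N
  rw [h, ← Finset.sum_filter]
  have hfil : (Finset.range N).filter (fun t => t < (a : ℕ)) = Finset.range (a : ℕ) := by
    ext t
    simp only [Finset.mem_filter, Finset.mem_range]
    have := a.isLt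
    omega
  rw [hfil]
  have hre : ∑ t ∈ Finset.range (a : ℕ), q ^ ((a : ℕ) - t - 1)
      = ∑ t ∈ Finset.range (a : ℕ), q ^ t := by
    have := Finset.sum_range_reflect (fun s => q ^ s) (a : ℕ)
    simpa [Nat.sub_sub, Nat.add_comm] using this
  rw [hre]
  exact geo_bound q h0 h1 _

lemma L_a (q : ℝ) (h0 : 0 ≤ q) (h1 : q < 1) {N m : ℕ} (b : Fin N) :
    ∑ a : Fin N, (if m + 1 ≤ (a : ℕ) ∧ (b : ℕ) < (a : ℕ)
        then q ^ ((a : ℕ) - (b : ℕ) - 1) else 0) ≤ 1 / (1 - q) := by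
  have step : ∑ a : Fin N, (if m + 1 ≤ (a : ℕ) ∧ (b : ℕ) < (a : ℕ)
        then q ^ ((a : ℕ) - (b : ℕ) - 1) else 0)
      ≤ ∑ a : Fin N, (if (b : ℕ) < (a : ℕ) then q ^ ((a : ℕ) - (b : ℕ) - 1) else 0) := by
    apply Finset.sum_le_sum
    intro a _
    by_cases hc : m + 1 ≤ (a : ℕ) ∧ (b : ℕ) < (a : ℕ)
    · rw [if_pos hc, if_pos hc.2]
    · rw [if_neg hc]
      split_ifs with h2
      · positivity
      · exact le_refl 0
  refine le_trans step ?_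
  have h : ∑ a : Fin N, (if (b : ℕ) < (a : ℕ) then q ^ ((a : ℕ) - (b : ℕ) - 1) else 0)
      = ∑ t ∈ Finset.range N, (if (b : ℕ) < t then q ^ (t - (b : ℕ) - 1) else 0) :=
    Fin.sum_univ_eq_sum_range (fun t => if (b : ℕ) < t then q ^ (t - (b : ℕ) - 1) else 0) N
  rw [h, ← Finset.sum_filter]
  have hfil : (Finset.range N).filter (fun t => (b : ℕ) < t) = Finset.Ico ((b : ℕ) + 1) N := by
    ext t
    simp only [Finset.mem_filter, Finset.mem_range, Finset.mem_Ico]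
    omega
  rw [hfil, Finset.sum_Ico_eq_sum_range]
  have h2 : ∀ s : ℕ, q ^ ((b : ℕ) + 1 + s - (b : ℕ) - 1) = q ^ s := by
    intro s; congr 1; omega
  calc ∑ s ∈ Finset.range (N - ((b : ℕ) + 1)), q ^ ((b : ℕ) + 1 + s - (b : ℕ) - 1)
      = ∑ s ∈ Finset.range (N - ((b : ℕ) + 1)), q ^ s :=
        Finset.sum_congr rfl (fun s _ => h2 s)
    _ ≤ 1 / (1 - q) := geo_bound q h0 h1 _

lemma L_count (n m : ℕ) (C : ℝ) :
    ∑ a : Fin (n + m + 1), (if m + 1 ≤ (a : ℕ) then C else 0) = n * C := by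
  rw [Fin.sum_univ_eq_sum_range (fun t => if m + 1 ≤ t then C else 0) (n + m + 1),
    ← Finset.sum_filter]
  have hfil : (Finset.range (n + m + 1)).filter (fun t => m + 1 ≤ t)
      = Finset.Ico (m + 1) (n + m + 1) := by
    ext t
    simp only [Finset.mem_filter, Finset.mem_range, Finset.mem_Ico]
    omega
  rw [hfil, Finset.sum_const, Nat.card_Ico]
  have h : n + m + 1 - (m + 1) = n := by omega
  rw [h, nsmul_eq_mul]

end geo

set_option maxHeartbeats 1000000 in
theorem stmt3 {p n m : ℕ} (hp : 1 ≤ p) (hn : 1 ≤ n) (hm : 1 ≤ m)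
    (r j : Fin p) (η : ℝ) (hη : 0 < η)
    (Θ : Matrix (Fin p) (Fin p) ℝ)
    (hσ : sigmaMax ((1 : Matrix (Fin p) (Fin p) ℝ) + η • Θ) < 1)
    (ρ : ℕ → Matrix (Fin p) (Fin p) ℝ)
    (hρ : ∀ (τ : ℕ) (i l : Fin p),
      ρ τ i l = if i = r then (((1 : Matrix (Fin p) (Fin p) ℝ) + η • Θ) ^ τ) j l else 0)
    (Rt : Matrix (Fin (n + m + 1) × Fin p) (Fin (n + m + 1) × Fin p) ℝ)
    (hRt : ∀ (a b : Fin (n + m + 1)) (i l : Fin p),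
      Rt (a, i) (b, l) =
        if m + 1 ≤ (a : ℕ) ∧ (b : ℕ) < (a : ℕ) then ρ ((a : ℕ) - (b : ℕ) - 1) i l else 0)
    (R : Matrix (Fin (n + m + 1) × Fin p) (Fin (n + m + 1) × Fin p) ℝ)
    (hR : R = (1 / 2 : ℝ) • (Rt + Rtᵀ))
    (hRh : R.IsHermitian) :
    (∑ i, hRh.eigenvalues i = 0) ∧
    (∀ i, |hRh.eigenvalues i| ≤ 1 / (1 - sigmaMax ((1 : Matrix (Fin p) (Fin p) ℝ) + η • Θ))) ∧
    (∑ i, (hRh.eigenvalues i) ^ 2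
      ≤ (1 / 2) * ((n : ℝ) / (1 - sigmaMax ((1 : Matrix (Fin p) (Fin p) ℝ) + η • Θ)))) := by
  classical
  set M : Matrix (Fin p) (Fin p) ℝ := (1 : Matrix (Fin p) (Fin p) ℝ) + η • Θ with hMdef
  haveI : Nonempty (Fin p) := ⟨r⟩
  set σ : ℝ := sigmaMax M with hσdef
  have hσ1 : σ < 1 := hσ
  have hσ0 : 0 ≤ σ := sigmaMax_nonneg M
  have h1σ : 0 < 1 - σ := by linarith
  have hinv0 : (0:ℝ) ≤ 1 / (1 - σ) := by positivity
  -- row norm bound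
  have hrow : ∀ τ : ℕ, ∑ l, ((M ^ τ) j l) ^ 2 ≤ (σ ^ 2) ^ τ := fun τ =>
    row_sq_le (M ^ τ) ((σ ^ 2) ^ τ) (by positivity)
      (fun v => sigmaMax_pow_mulVec_sq M τ v) j
  -- pointwise facts
  have hRsym : ∀ x y : Fin (n + m + 1) × Fin p, R x y = (Rt x y + Rt y x) / 2 := by
    intro x y
    rw [hR]
    simp [Matrix.transpose_apply]
    ring
  have hcross : ∀ x y : Fin (n + m + 1) × Fin p, Rt x y * Rt y x = 0 := by
    rintro ⟨a, i⟩ ⟨b, l⟩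
    rw [hRt a b i l, hRt b a l i]
    split_ifs with h1 h2 h2
    · exact absurd h2.2 (not_lt.mpr (le_of_lt h1.2))
    · exact mul_zero _
    · exact zero_mul _
    · exact zero_mul _
  have hdiag : ∀ x : Fin (n + m + 1) × Fin p, Rt x x = 0 := by
    rintro ⟨a, i⟩
    rw [hRt a a i i]
    simp
  -- Part 1
  have part1 : ∑ i, hRh.eigenvalues i = 0 := by
    rw [← trace_eq_sum_eig R hRh]
    have hzero : ∀ x : Fin (n + m + 1) × Fin p, R x x = 0 := fun x => by
      rw [hRsym x x, hdiag x]; ring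
    simp [Matrix.trace, Matrix.diag, hzero]
  -- the block sum reorganization
  have hreorg : ∀ (f : (Fin (n + m + 1) × Fin p) → (Fin (n + m + 1) × Fin p) → ℝ),
      ∑ x, ∑ y, f x y
        = ∑ a : Fin (n + m + 1), ∑ b : Fin (n + m + 1), ∑ i : Fin p, ∑ l : Fin p,
            f (a, i) (b, l) := by
    intro f
    rw [Fintype.sum_prod_type (fun x => ∑ y, f x y)]
    refine Finset.sum_congr rfl fun a _ => ?_
    have h1 : ∀ i : Fin p, ∑ y, f (a, i) y = ∑ b, ∑ l, f (a, i) (b, l) := fun i =>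
      Fintype.sum_prod_type (f (a, i))
    rw [Finset.sum_congr rfl (fun i _ => h1 i)]
    exact Finset.sum_comm
  -- Part 3
  have part3 : ∑ i, (hRh.eigenvalues i) ^ 2 ≤ (1 / 2) * ((n : ℝ) / (1 - σ)) := by
    rw [← trace_sq_eq_sum_eig_sq R hRh]
    have htr2 : (R * R).trace = ∑ x, ∑ y, R x y * R y x := by
      simp [Matrix.trace, Matrix.diag, Matrix.mul_apply]
    rw [htr2]
    have hterm : ∀ x y, R x y * R y x = ((Rt x y) ^ 2 + (Rt y x) ^ 2) / 4 := by
      intro x y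
      rw [hRsym x y, hRsym y x]
      linear_combination (hcross x y) / 2
    have heq1 : ∑ x, ∑ y, R x y * R y x = (1 / 2) * ∑ x, ∑ y, (Rt x y) ^ 2 := by
      rw [Finset.sum_congr rfl (fun x _ => Finset.sum_congr rfl (fun y _ => hterm x y))]
      have hswap : ∑ x, ∑ y, (Rt y x) ^ 2 = ∑ x, ∑ y, (Rt x y) ^ 2 := Finset.sum_comm
      simp only [add_div, Finset.sum_add_distrib, ← Finset.sum_div]
      rw [hswap]
      ring
    rw [heq1]
    have hS : ∑ x, ∑ y, (Rt x y) ^ 2 ≤ (n : ℝ) / (1 - σ) := by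
      rw [hreorg (fun x y => (Rt x y) ^ 2)]
      have hblock : ∀ a b : Fin (n + m + 1),
          ∑ i : Fin p, ∑ l : Fin p, (Rt (a, i) (b, l)) ^ 2
            ≤ (if m + 1 ≤ (a : ℕ) ∧ (b : ℕ) < (a : ℕ)
                then (σ ^ 2) ^ ((a : ℕ) - (b : ℕ) - 1) else 0) := by
        intro a b
        by_cases hc : m + 1 ≤ (a : ℕ) ∧ (b : ℕ) < (a : ℕ)
        · rw [if_pos hc]
          have hent : ∀ i l : Fin p, Rt (a, i) (b, l)
              = if i = r then (M ^ ((a : ℕ) - (b : ℕ) - 1)) j l else 0 := by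
            intro i l; rw [hRt a b i l, if_pos hc, hρ]
          calc (∑ i : Fin p, ∑ l : Fin p, (Rt (a, i) (b, l)) ^ 2)
              = (∑ i : Fin p, (if i = r
                  then ∑ l : Fin p, ((M ^ ((a : ℕ) - (b : ℕ) - 1)) j l) ^ 2 else 0)) := by
                refine Finset.sum_congr rfl fun i _ => ?_
                split_ifs with hi
                · exact Finset.sum_congr rfl fun l _ => by rw [hent i l, if_pos hi]
                · exact Finset.sum_eq_zero fun l _ => by rw [hent i l, if_neg hi]; ring
            _ = (∑ l : Fin p, ((M ^ ((a : ℕ) - (b : ℕ) - 1)) j l) ^ 2) := by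
                rw [Finset.sum_ite_eq' Finset.univ r]
                simp
            _ ≤ (σ ^ 2) ^ ((a : ℕ) - (b : ℕ) - 1) := hrow _
        · rw [if_neg hc]
          have hent : ∀ i l : Fin p, Rt (a, i) (b, l) = 0 := by
            intro i l; rw [hRt a b i l, if_neg hc]
          simp [hent]
      calc (∑ a : Fin (n + m + 1), ∑ b : Fin (n + m + 1), ∑ i : Fin p, ∑ l : Fin p,
              (Rt (a, i) (b, l)) ^ 2)
          ≤ (∑ a : Fin (n + m + 1), ∑ b : Fin (n + m + 1),
              (if m + 1 ≤ (a : ℕ) ∧ (b : ℕ) < (a : ℕ)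
                then (σ ^ 2) ^ ((a : ℕ) - (b : ℕ) - 1) else 0)) :=
            Finset.sum_le_sum fun a _ => Finset.sum_le_sum fun b _ => hblock a b
        _ ≤ (∑ a : Fin (n + m + 1), (if m + 1 ≤ (a : ℕ) then 1 / (1 - σ) else 0)) := by
            apply Finset.sum_le_sum
            intro a _
            by_cases ha : m + 1 ≤ (a : ℕ)
            · rw [if_pos ha]
              have hh : ∀ b : Fin (n + m + 1),
                  (if m + 1 ≤ (a : ℕ) ∧ (b : ℕ) < (a : ℕ)
                    then (σ ^ 2) ^ ((a : ℕ) - (b : ℕ) - 1) else 0)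
                  = (if (b : ℕ) < (a : ℕ) then (σ ^ 2) ^ ((a : ℕ) - (b : ℕ) - 1) else 0) := by
                intro b
                by_cases hb : (b : ℕ) < (a : ℕ) <;> simp [ha, hb]
              rw [Finset.sum_congr rfl (fun b _ => hh b)]
              have hq1 : σ ^ 2 < 1 := by nlinarith
              have hq0 : (0:ℝ) ≤ σ ^ 2 := sq_nonneg σ
              refine le_trans (L_b (σ ^ 2) hq0 hq1 a) ?_
              apply one_div_le_one_div_of_le h1σ
              nlinarith
            · have hh : ∀ b : Fin (n + m + 1),
                  (if m + 1 ≤ (a : ℕ) ∧ (b : ℕ) < (a : ℕ)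
                    then (σ ^ 2) ^ ((a : ℕ) - (b : ℕ) - 1) else 0) = 0 := by
                intro b
                rw [if_neg (by tauto)]
              rw [Finset.sum_congr rfl (fun b _ => hh b), if_neg ha]
              simp
        _ = (n : ℝ) * (1 / (1 - σ)) := L_count n m _
        _ = (n : ℝ) / (1 - σ) := by ring
    exact mul_le_mul_of_nonneg_left hS (by norm_num)
  -- Part 2
  have part2 : ∀ i0, |hRh.eigenvalues i0| ≤ 1 / (1 - σ) := by
    intro i0
    set v : (Fin (n + m + 1) × Fin p) → ℝ := ⇑(hRh.eigenvectorBasis i0) with hvdef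
    have hv1 : ∑ x, (v x) ^ 2 = 1 := by
      have hb := hRh.eigenvectorBasis.orthonormal.1 i0
      rw [EuclideanSpace.norm_eq] at hb
      have h2 := Real.sqrt_eq_one.mp hb
      simpa [Real.norm_eq_abs, sq_abs] using h2
    have hmv := hRh.mulVec_eigenvectorBasis i0
    have hνB : hRh.eigenvalues i0 = ∑ x, ∑ y, v x * (Rt x y * v y) := by
      have h2 : ∑ x, v x * ((R *ᵥ v) x) = hRh.eigenvalues i0 := by
        rw [hmv]
        calc (∑ x, v x * ((hRh.eigenvalues i0 • v) x))
            = hRh.eigenvalues i0 * (∑ x, (v x) ^ 2) := by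
              rw [Finset.mul_sum]
              exact Finset.sum_congr rfl fun x _ => by
                simp only [Pi.smul_apply, smul_eq_mul]; ring
          _ = hRh.eigenvalues i0 := by rw [hv1, mul_one]
      have h3 : ∑ x, v x * ((R *ᵥ v) x) = ∑ x, ∑ y, v x * (R x y * v y) := by
        refine Finset.sum_congr rfl fun x _ => ?_
        rw [show (R *ᵥ v) x = ∑ y, R x y * v y from by
          simp [Matrix.mulVec, dotProduct]]
        rw [Finset.mul_sum]
      have hBsym : ∑ x, ∑ y, v x * (Rt y x * v y) = ∑ x, ∑ y, v x * (Rt x y * v y) := by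
        rw [Finset.sum_comm]
        exact Finset.sum_congr rfl fun x _ => Finset.sum_congr rfl fun y _ => by ring
      have h4 : ∑ x, ∑ y, v x * (R x y * v y) = ∑ x, ∑ y, v x * (Rt x y * v y) := by
        calc (∑ x, ∑ y, v x * (R x y * v y))
            = (∑ x, ∑ y, (v x * (Rt x y * v y) / 2 + v x * (Rt y x * v y) / 2)) := by
              refine Finset.sum_congr rfl fun x _ => Finset.sum_congr rfl fun y _ => ?_
              rw [hRsym x y]; ring
          _ = (∑ x, ∑ y, v x * (Rt x y * v y)) / 2
              + (∑ x, ∑ y, v x * (Rt y x * v y)) / 2 := by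
              simp only [Finset.sum_add_distrib, Finset.sum_div]
          _ = (∑ x, ∑ y, v x * (Rt x y * v y)) := by rw [hBsym]; ring
      rw [← h2, h3, h4]
    -- bound
    have hsnn : ∀ b : Fin (n + m + 1), (0:ℝ) ≤ ∑ l, (v (b, l)) ^ 2 :=
      fun b => Finset.sum_nonneg fun _ _ => sq_nonneg _
    have hT : ∀ a b : Fin (n + m + 1),
        |∑ i : Fin p, ∑ l : Fin p, v (a, i) * (Rt (a, i) (b, l) * v (b, l))|
          ≤ (if m + 1 ≤ (a : ℕ) ∧ (b : ℕ) < (a : ℕ)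
              then σ ^ ((a : ℕ) - (b : ℕ) - 1)
                * ((v (a, r)) ^ 2 + ∑ l, (v (b, l)) ^ 2) / 2 else 0) := by
      intro a b
      by_cases hc : m + 1 ≤ (a : ℕ) ∧ (b : ℕ) < (a : ℕ)
      · rw [if_pos hc]
        set τ : ℕ := (a : ℕ) - (b : ℕ) - 1 with hτ
        set w : Fin p → ℝ := fun l => v (b, l) with hwdef
        set s : ℝ := ∑ l, (w l) ^ 2 with hsdef
        have hs0 : 0 ≤ s := Finset.sum_nonneg fun _ _ => sq_nonneg _
        have hent : ∀ i l : Fin p, Rt (a, i) (b, l)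
            = if i = r then (M ^ τ) j l else 0 := by
          intro i l; rw [hRt a b i l, if_pos hc, hρ]
        have hTeq : ∑ i : Fin p, ∑ l : Fin p, v (a, i) * (Rt (a, i) (b, l) * v (b, l))
            = v (a, r) * ((M ^ τ) *ᵥ w) j := by
          calc (∑ i : Fin p, ∑ l : Fin p, v (a, i) * (Rt (a, i) (b, l) * v (b, l)))
              = (∑ i : Fin p, (if i = r then v (a, i) * ∑ l, (M ^ τ) j l * w l else 0)) := by
                refine Finset.sum_congr rfl fun i _ => ?_
                split_ifs with hi
                · rw [Finset.mul_sum]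
                  refine Finset.sum_congr rfl fun l _ => ?_
                  rw [hent i l, if_pos hi]
                  try ring
                · exact Finset.sum_eq_zero fun l _ => by rw [hent i l, if_neg hi]; ring
            _ = v (a, r) * (∑ l, (M ^ τ) j l * w l) := by
                rw [Finset.sum_ite_eq' Finset.univ r]
                simp
            _ = v (a, r) * ((M ^ τ) *ᵥ w) j := by
                simp [Matrix.mulVec, dotProduct]
        have hj : |((M ^ τ) *ᵥ w) j| ≤ σ ^ τ * Real.sqrt s := by
          have h1 : (((M ^ τ) *ᵥ w) j) ^ 2 ≤ ∑ ii, (((M ^ τ) *ᵥ w) ii) ^ 2 :=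
            Finset.single_le_sum (f := fun ii => (((M ^ τ) *ᵥ w) ii) ^ 2)
              (fun _ _ => sq_nonneg _) (Finset.mem_univ j)
          have h2 := sigmaMax_pow_mulVec_sq M τ w
          have hpow : ((σ:ℝ) ^ 2) ^ τ = (σ ^ τ) ^ 2 := by
            rw [← pow_mul, ← pow_mul, Nat.mul_comm]
          have h3 : (((M ^ τ) *ᵥ w) j) ^ 2 ≤ (σ ^ τ) ^ 2 * s := by
            rw [← hpow]
            exact le_trans h1 h2
          calc |((M ^ τ) *ᵥ w) j| = Real.sqrt ((((M ^ τ) *ᵥ w) j) ^ 2) :=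
                (Real.sqrt_sq_eq_abs _).symm
            _ ≤ Real.sqrt ((σ ^ τ) ^ 2 * s) := Real.sqrt_le_sqrt h3
            _ = σ ^ τ * Real.sqrt s := by
                rw [Real.sqrt_mul (sq_nonneg _), Real.sqrt_sq (pow_nonneg hσ0 τ)]
        rw [hTeq, abs_mul]
        calc |v (a, r)| * |((M ^ τ) *ᵥ w) j|
            ≤ |v (a, r)| * (σ ^ τ * Real.sqrt s) :=
              mul_le_mul_of_nonneg_left hj (abs_nonneg _)
          _ ≤ σ ^ τ * ((v (a, r)) ^ 2 + s) / 2 := by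
              have h4 := two_mul_le_add_sq (|v (a, r)|) (Real.sqrt s)
              have h5 : (Real.sqrt s) ^ 2 = s := Real.sq_sqrt hs0
              have h6 : (|v (a, r)|) ^ 2 = (v (a, r)) ^ 2 := sq_abs _
              have h7 : |v (a, r)| * Real.sqrt s ≤ ((v (a, r)) ^ 2 + s) / 2 := by
                nlinarith
              have h8 : (0:ℝ) ≤ σ ^ τ := pow_nonneg hσ0 τ
              calc |v (a, r)| * (σ ^ τ * Real.sqrt s)
                  = σ ^ τ * (|v (a, r)| * Real.sqrt s) := by ring
                _ ≤ σ ^ τ * (((v (a, r)) ^ 2 + s) / 2) :=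
                    mul_le_mul_of_nonneg_left h7 h8
                _ = σ ^ τ * ((v (a, r)) ^ 2 + s) / 2 := by ring
      · rw [if_neg hc]
        have hent : ∀ i l : Fin p, Rt (a, i) (b, l) = 0 := by
          intro i l; rw [hRt a b i l, if_neg hc]
        simp [hent]
    -- assemble
    rw [hνB, hreorg (fun x y => v x * (Rt x y * v y))]
    have habs : |∑ a : Fin (n + m + 1), ∑ b : Fin (n + m + 1),
          ∑ i : Fin p, ∑ l : Fin p, v (a, i) * (Rt (a, i) (b, l) * v (b, l))|
        ≤ ∑ a : Fin (n + m + 1), ∑ b : Fin (n + m + 1),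
          |∑ i : Fin p, ∑ l : Fin p, v (a, i) * (Rt (a, i) (b, l) * v (b, l))| := by
      refine le_trans (Finset.abs_sum_le_sum_abs _ _) ?_
      exact Finset.sum_le_sum fun a _ => Finset.abs_sum_le_sum_abs _ _
    refine le_trans habs ?_
    have hstep := Finset.sum_le_sum (s := (Finset.univ : Finset (Fin (n + m + 1))))
      (fun a _ => Finset.sum_le_sum (s := (Finset.univ : Finset (Fin (n + m + 1))))
        (fun b _ => hT a b))
    refine le_trans hstep ?_
    -- split the ite bound
    have hsplit : ∀ a b : Fin (n + m + 1),
        (if m + 1 ≤ (a : ℕ) ∧ (b : ℕ) < (a : ℕ)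
            then σ ^ ((a : ℕ) - (b : ℕ) - 1)
              * ((v (a, r)) ^ 2 + ∑ l, (v (b, l)) ^ 2) / 2 else 0)
        = (v (a, r)) ^ 2 * (if m + 1 ≤ (a : ℕ) ∧ (b : ℕ) < (a : ℕ)
            then σ ^ ((a : ℕ) - (b : ℕ) - 1) else 0) / 2
          + (∑ l, (v (b, l)) ^ 2) * (if m + 1 ≤ (a : ℕ) ∧ (b : ℕ) < (a : ℕ)
            then σ ^ ((a : ℕ) - (b : ℕ) - 1) else 0) / 2 := by
      intro a b
      split_ifs with hc
      · ring
      · ring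
    rw [Finset.sum_congr rfl (fun a _ => Finset.sum_congr rfl (fun b _ => hsplit a b))]
    simp only [Finset.sum_add_distrib]
    -- first piece
    have hA : ∑ a : Fin (n + m + 1), ∑ b : Fin (n + m + 1),
        (v (a, r)) ^ 2 * (if m + 1 ≤ (a : ℕ) ∧ (b : ℕ) < (a : ℕ)
          then σ ^ ((a : ℕ) - (b : ℕ) - 1) else 0) / 2 ≤ (1 / (1 - σ)) / 2 := by
      have hinner : ∀ a : Fin (n + m + 1),
          ∑ b : Fin (n + m + 1), (if m + 1 ≤ (a : ℕ) ∧ (b : ℕ) < (a : ℕ)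
            then σ ^ ((a : ℕ) - (b : ℕ) - 1) else 0) ≤ 1 / (1 - σ) := by
        intro a
        have hh : ∀ b : Fin (n + m + 1),
            (if m + 1 ≤ (a : ℕ) ∧ (b : ℕ) < (a : ℕ)
              then σ ^ ((a : ℕ) - (b : ℕ) - 1) else 0)
            ≤ (if (b : ℕ) < (a : ℕ) then σ ^ ((a : ℕ) - (b : ℕ) - 1) else 0) := by
          intro b
          split_ifs with h1 h2 h2
          · exact le_refl _
          · exact absurd h1.2 h2
          · positivity
          · exact le_refl 0
        exact le_trans (Finset.sum_le_sum fun b _ => hh b) (L_b σ hσ0 hσ1 a)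
      have hαsum : ∑ a : Fin (n + m + 1), (v (a, r)) ^ 2 ≤ 1 := by
        have hfull : ∑ a : Fin (n + m + 1), ∑ i : Fin p, (v (a, i)) ^ 2 = 1 :=
          (Fintype.sum_prod_type (fun x : Fin (n + m + 1) × Fin p => (v x) ^ 2)).symm.trans hv1
        calc ∑ a : Fin (n + m + 1), (v (a, r)) ^ 2
            ≤ ∑ a : Fin (n + m + 1), ∑ i : Fin p, (v (a, i)) ^ 2 :=
              Finset.sum_le_sum fun a _ =>
                Finset.single_le_sum (f := fun i : Fin p => (v (a, i)) ^ 2)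
                  (fun _ _ => sq_nonneg _) (Finset.mem_univ r)
          _ = 1 := hfull
      calc (∑ a : Fin (n + m + 1), ∑ b : Fin (n + m + 1),
          (v (a, r)) ^ 2 * (if m + 1 ≤ (a : ℕ) ∧ (b : ℕ) < (a : ℕ)
            then σ ^ ((a : ℕ) - (b : ℕ) - 1) else 0) / 2)
          = (∑ a : Fin (n + m + 1), (v (a, r)) ^ 2
              * (∑ b : Fin (n + m + 1), (if m + 1 ≤ (a : ℕ) ∧ (b : ℕ) < (a : ℕ)
                then σ ^ ((a : ℕ) - (b : ℕ) - 1) else 0)) / 2) := by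
            refine Finset.sum_congr rfl fun a _ => ?_
            rw [Finset.mul_sum, Finset.sum_div]
        _ ≤ (∑ a : Fin (n + m + 1), (v (a, r)) ^ 2 * (1 / (1 - σ)) / 2) := by
            apply Finset.sum_le_sum
            intro a _
            have := hinner a
            have h9 : (0:ℝ) ≤ (v (a, r)) ^ 2 := sq_nonneg _
            nlinarith
        _ = (∑ a : Fin (n + m + 1), (v (a, r)) ^ 2) * (1 / (1 - σ)) / 2 := by
            rw [← Finset.sum_div, ← Finset.sum_mul]
        _ ≤ 1 * (1 / (1 - σ)) / 2 := by nlinarith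
        _ = (1 / (1 - σ)) / 2 := by ring
    -- second piece
    have hB : ∑ a : Fin (n + m + 1), ∑ b : Fin (n + m + 1),
        (∑ l, (v (b, l)) ^ 2) * (if m + 1 ≤ (a : ℕ) ∧ (b : ℕ) < (a : ℕ)
          then σ ^ ((a : ℕ) - (b : ℕ) - 1) else 0) / 2 ≤ (1 / (1 - σ)) / 2 := by
      rw [Finset.sum_comm]
      have hinner : ∀ b : Fin (n + m + 1),
          ∑ a : Fin (n + m + 1), (if m + 1 ≤ (a : ℕ) ∧ (b : ℕ) < (a : ℕ)
            then σ ^ ((a : ℕ) - (b : ℕ) - 1) else 0) ≤ 1 / (1 - σ) :=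
        fun b => L_a σ hσ0 hσ1 b
      have hssum : ∑ b : Fin (n + m + 1), ∑ l : Fin p, (v (b, l)) ^ 2 = 1 :=
        (Fintype.sum_prod_type (fun x : Fin (n + m + 1) × Fin p => (v x) ^ 2)).symm.trans hv1
      calc (∑ b : Fin (n + m + 1), ∑ a : Fin (n + m + 1),
          (∑ l, (v (b, l)) ^ 2) * (if m + 1 ≤ (a : ℕ) ∧ (b : ℕ) < (a : ℕ)
            then σ ^ ((a : ℕ) - (b : ℕ) - 1) else 0) / 2)
          = (∑ b : Fin (n + m + 1), (∑ l, (v (b, l)) ^ 2)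
              * (∑ a : Fin (n + m + 1), (if m + 1 ≤ (a : ℕ) ∧ (b : ℕ) < (a : ℕ)
                then σ ^ ((a : ℕ) - (b : ℕ) - 1) else 0)) / 2) := by
            refine Finset.sum_congr rfl fun b _ => ?_
            rw [Finset.mul_sum, Finset.sum_div]
        _ ≤ (∑ b : Fin (n + m + 1), (∑ l, (v (b, l)) ^ 2) * (1 / (1 - σ)) / 2) := by
            apply Finset.sum_le_sum
            intro b _
            have := hinner b
            have h9 := hsnn b
            nlinarith
        _ = (∑ b : Fin (n + m + 1), ∑ l, (v (b, l)) ^ 2) * (1 / (1 - σ)) / 2 := by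
            rw [← Finset.sum_div, ← Finset.sum_mul]
        _ = (1 / (1 - σ)) / 2 := by rw [hssum]; ring
    calc (∑ a : Fin (n + m + 1), ∑ b : Fin (n + m + 1),
          (v (a, r)) ^ 2 * (if m + 1 ≤ (a : ℕ) ∧ (b : ℕ) < (a : ℕ)
            then σ ^ ((a : ℕ) - (b : ℕ) - 1) else 0) / 2)
        + (∑ a : Fin (n + m + 1), ∑ b : Fin (n + m + 1),
          (∑ l, (v (b, l)) ^ 2) * (if m + 1 ≤ (a : ℕ) ∧ (b : ℕ) < (a : ℕ)
            then σ ^ ((a : ℕ) - (b : ℕ) - 1) else 0) / 2)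
        ≤ (1 / (1 - σ)) / 2 + (1 / (1 - σ)) / 2 := add_le_add hA hB
      _ = 1 / (1 - σ) := by ring
  exact ⟨part1, part2, part3⟩
end

section
/- Fix integers p, n, m ≥ 1, indices i, j ∈ {1,...,p}, η > 0, and Θ ∈ ℝ^{p×p} with σmax := σmax(I + ηΘ) < 1. For τ ≥ 0 and l ∈ {1,...,p}, let ρ(τ,l) ∈ ℝ^{1×p} denote the l-th row of (I + ηΘ)^τ. For l ∈ {i,j} let Φ_l ∈ ℝ^{n×(n+m)p} be the matrix whose columns are grouped into n+m consecutive blocks of size p, and whose s-th row (s = 1,...,n) has its b-th block equal to ρ(m+s−b, l) for 1 ≤ b ≤ m+s and equal to zero forب b > m+s. Let R := (Φ_jᵀΦ_i + Φ_iᵀΦ_j)/2 ∈ ℝ^{(n+m)p×(n+m)p} and let ν_1,...,ν_{(n+m)p} be its eigenvalues. Then max_l |ν_l| ≤ 1/(1 − σmax)² and (1/n)·Σ_l ν_l² ≤ (2/(1 − σmax)³)·(1 + (3/(2n))·1/(1 − σmax)). -/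
open scoped Matrix

open Finset in
lemma aux_geom {σ : ℝ} (h0 : 0 ≤ σ) (h1 : σ < 1) (N : ℕ) :
    ∑ k ∈ Finset.range N, σ ^ k ≤ 1 / (1 - σ) := by
  have hσ1 : σ ≠ 1 := ne_of_lt h1
  rw [geom_sum_eq hσ1]
  have he : (σ ^ N - 1) / (σ - 1) = (1 - σ ^ N) / (1 - σ) := by
    rw [div_eq_div_iff (by linarith) (by linarith)]; ring
  rw [he]
  gcongr
  · linarith [pow_nonneg h0 N]

open Finset in
lemma aux_inj_sum {σ : ℝ} {α : Type*} (h0 : 0 ≤ σ) (h1 : σ < 1) (f : α → ℕ)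
    (s : Finset α) (hinj : Set.InjOn f s) : ∑ x ∈ s, σ ^ (f x) ≤ 1 / (1 - σ) := by
  have himg : ∑ x ∈ s, σ ^ f x = ∑ k ∈ s.image f, σ ^ k :=
    (Finset.sum_image (fun a ha b hb h => hinj ha hb h)).symm
  rw [himg]
  have hsub : s.image f ⊆ Finset.range (s.sup f + 1) := by
    intro k hk
    simp only [Finset.mem_image] at hk
    obtain ⟨a, ha, rfl⟩ := hk
    simp [Nat.lt_succ_iff, Finset.le_sup ha]
  exact le_trans (Finset.sum_le_sum_of_subset_of_nonneg hsub
    (fun k _ _ => pow_nonneg h0 k)) (aux_geom h0 h1 _)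

open Finset in
lemma aux_schur {α β : Type*} [Fintype α] [Fintype β] (K : α → β → ℝ)
    (hK : ∀ a b, 0 ≤ K a b) {S : ℝ} (hS : 0 ≤ S)
    (hrow : ∀ a, ∑ b, K a b ≤ S) (hcol : ∀ b, ∑ a, K a b ≤ S)
    (w : β → ℝ) :
    ∑ a, (∑ b, K a b * w b) ^ 2 ≤ S ^ 2 * ∑ b, (w b) ^ 2 := by
  have key : ∀ a, (∑ b, K a b * w b) ^ 2 ≤ S * ∑ b, K a b * (w b) ^ 2 := by
    intro a
    have cs := Finset.sum_mul_sq_le_sq_mul_sq Finset.univ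
      (fun b => Real.sqrt (K a b)) (fun b => Real.sqrt (K a b) * w b)
    have e1 : ∀ b, Real.sqrt (K a b) * (Real.sqrt (K a b) * w b) = K a b * w b := by
      intro b; rw [← mul_assoc, Real.mul_self_sqrt (hK a b)]
    have e2 : ∀ b, Real.sqrt (K a b) ^ 2 = K a b := fun b => Real.sq_sqrt (hK a b)
    have e3 : ∀ b, (Real.sqrt (K a b) * w b) ^ 2 = K a b * w b ^ 2 := by
      intro b; rw [mul_pow, e2]
    simp only [e1, e2, e3] at cs
    refine le_trans cs ?_
    have h2 : 0 ≤ ∑ b, K a b * w b ^ 2 :=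
      Finset.sum_nonneg fun b _ => mul_nonneg (hK a b) (sq_nonneg _)
    exact mul_le_mul_of_nonneg_right (hrow a) h2
  calc ∑ a, (∑ b, K a b * w b) ^ 2 ≤ ∑ a, S * ∑ b, K a b * (w b) ^ 2 :=
        Finset.sum_le_sum fun a _ => key a
    _ = S * ∑ b, (∑ a, K a b) * (w b) ^ 2 := by
        rw [← Finset.mul_sum, Finset.sum_comm]
        simp_rw [Finset.sum_mul]
    _ ≤ S * ∑ b, S * (w b) ^ 2 := by
        refine mul_le_mul_of_nonneg_left (Finset.sum_le_sum fun b _ => ?_) hS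
        exact mul_le_mul_of_nonneg_right (hcol b) (sq_nonneg _)
    _ = S ^ 2 * ∑ b, (w b) ^ 2 := by rw [← Finset.mul_sum]; ring


lemma sig_mem_le {I J : Type*} [Fintype I] [Fintype J] (A : Matrix I J ℝ) {x : J → ℝ}
    (hx : ∑ j, (x j) ^ 2 = 1) :
    Real.sqrt (∑ i, (A.mulVec x i) ^ 2) ≤ sigmaMax A := by
  apply le_csSup
  · refine ⟨Real.sqrt (∑ i, ∑ j, A i j ^ 2), ?_⟩
    rintro r ⟨y, hy, rfl⟩
    apply Real.sqrt_le_sqrt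
    apply Finset.sum_le_sum; intro ii _
    calc (A.mulVec y ii) ^ 2 = (∑ j, A ii j * y j) ^ 2 := by
          simp [Matrix.mulVec, dotProduct]
      _ ≤ (∑ j, A ii j ^ 2) * ∑ j, (y j) ^ 2 := Finset.sum_mul_sq_le_sq_mul_sq _ _ _
      _ = ∑ j, A ii j ^ 2 := by rw [hy, mul_one]
  · exact ⟨x, hx, rfl⟩

lemma sig_nonneg {I J : Type*} [Fintype I] [Fintype J] [Nonempty J]
    (A : Matrix I J ℝ) : 0 ≤ sigmaMax A := by
  classical
  set x : J → ℝ := fun j => if j = Classical.arbitrary J then 1 else 0 with hxdef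
  have hx : ∑ j, (x j) ^ 2 = 1 := by
    simp [hxdef, ite_pow, Finset.sum_ite_eq']
  exact le_trans (Real.sqrt_nonneg _) (sig_mem_le A hx)

lemma sig_op {I J : Type*} [Fintype I] [Fintype J] (A : Matrix I J ℝ) (x : J → ℝ) :
    ∑ i, (A.mulVec x i) ^ 2 ≤ (sigmaMax A) ^ 2 * ∑ j, (x j) ^ 2 := by
  by_cases hx : ∑ j, (x j) ^ 2 = 0
  · have hx0 : x = 0 := by
      funext j
      have := (Finset.sum_eq_zero_iff_of_nonneg (fun j _ => sq_nonneg (x j))).mp hx j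
        (Finset.mem_univ j)
      exact pow_eq_zero_iff (n := 2) (by norm_num) |>.mp this
    simp [hx0, Matrix.mulVec_zero]
  · have hpos : 0 < ∑ j, (x j) ^ 2 :=
      lt_of_le_of_ne (Finset.sum_nonneg fun j _ => sq_nonneg _) (Ne.symm hx)
    set t := Real.sqrt (∑ j, (x j) ^ 2) with ht
    have htpos : 0 < t := Real.sqrt_pos.mpr hpos
    have ht2 : t ^ 2 = ∑ j, (x j) ^ 2 := Real.sq_sqrt hpos.le
    set y : J → ℝ := t⁻¹ • x with hy
    have hy1 : ∑ j, (y j) ^ 2 = 1 := by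
      simp only [hy, Pi.smul_apply, smul_eq_mul, mul_pow, ← Finset.mul_sum, ← ht2]
      field_simp
    have hkey := sig_mem_le A hy1
    have hAy : ∀ i, A.mulVec y i = t⁻¹ * A.mulVec x i := by
      intro i; rw [hy, Matrix.mulVec_smul]; simp
    have hsum : ∑ i, (A.mulVec y i) ^ 2 = t⁻¹ ^ 2 * ∑ i, (A.mulVec x i) ^ 2 := by
      simp_rw [hAy, mul_pow, ← Finset.mul_sum]
    have hnn : 0 ≤ ∑ i, (A.mulVec y i) ^ 2 := Finset.sum_nonneg fun _ _ => sq_nonneg _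
    have h2 : ∑ i, (A.mulVec y i) ^ 2 ≤ (sigmaMax A) ^ 2 := by
      have := pow_le_pow_left₀ (Real.sqrt_nonneg _) hkey 2
      rwa [Real.sq_sqrt hnn] at this
    rw [hsum] at h2
    have h3 := mul_le_mul_of_nonneg_right h2 (le_of_lt (by positivity : (0:ℝ) < t ^ 2))
    calc ∑ i, (A.mulVec x i) ^ 2 = t⁻¹ ^ 2 * (∑ i, (A.mulVec x i) ^ 2) * t ^ 2 := by
          field_simp
      _ ≤ (sigmaMax A) ^ 2 * t ^ 2 := h3
      _ = (sigmaMax A) ^ 2 * ∑ j, (x j) ^ 2 := by rw [ht2]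

lemma sig_pow {I : Type*} [Fintype I] [DecidableEq I] (A : Matrix I I ℝ) (τ : ℕ) (x : I → ℝ) :
    ∑ i, ((A ^ τ).mulVec x i) ^ 2 ≤ ((sigmaMax A) ^ 2) ^ τ * ∑ j, (x j) ^ 2 := by
  induction τ generalizing x with
  | zero => simp [Matrix.one_mulVec]
  | succ k ih =>
    have h1 : (A ^ (k + 1)).mulVec x = (A ^ k).mulVec (A.mulVec x) := by
      rw [Matrix.mulVec_mulVec, ← pow_succ]
    rw [h1]
    calc ∑ i, ((A ^ k).mulVec (A.mulVec x) i) ^ 2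
        ≤ ((sigmaMax A) ^ 2) ^ k * ∑ jj, (A.mulVec x jj) ^ 2 := ih (A.mulVec x)
      _ ≤ ((sigmaMax A) ^ 2) ^ k * ((sigmaMax A) ^ 2 * ∑ j, (x j) ^ 2) :=
          mul_le_mul_of_nonneg_left (sig_op A x) (pow_nonneg (sq_nonneg _) k)
      _ = ((sigmaMax A) ^ 2) ^ (k + 1) * ∑ j, (x j) ^ 2 := by ring

lemma sig_row {I : Type*} [Fintype I] [DecidableEq I] (A : Matrix I I ℝ) (τ : ℕ) (l : I) :
    ∑ c, ((A ^ τ) l c) ^ 2 ≤ ((sigmaMax A) ^ 2) ^ τ := by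
  set x : I → ℝ := fun c => (A ^ τ) l c with hx
  set Q := ∑ c, (x c) ^ 2 with hQ
  have hQnn : 0 ≤ Q := Finset.sum_nonneg fun _ _ => sq_nonneg _
  have h1 : (A ^ τ).mulVec x l = Q := by
    simp [Matrix.mulVec, dotProduct, hx, hQ, sq]
  have h2 : Q ^ 2 ≤ ((sigmaMax A) ^ 2) ^ τ * Q := by
    calc Q ^ 2 = ((A ^ τ).mulVec x l) ^ 2 := by rw [h1]
      _ ≤ ∑ i, ((A ^ τ).mulVec x i) ^ 2 :=
          Finset.single_le_sum (f := fun i => ((A ^ τ).mulVec x i) ^ 2)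
            (fun i _ => sq_nonneg _) (Finset.mem_univ l)
      _ ≤ ((sigmaMax A) ^ 2) ^ τ * Q := sig_pow A τ x
  rcases eq_or_lt_of_le hQnn with h | h
  · rw [← h]; positivity
  · exact le_of_mul_le_mul_right (by nlinarith) h

lemma sig_ent {I : Type*} [Fintype I] [DecidableEq I] (A : Matrix I I ℝ)
    (h0 : 0 ≤ sigmaMax A) (τ τ' : ℕ) (l l' : I) :
    |∑ c, (A ^ τ) l c * (A ^ τ') l' c| ≤ (sigmaMax A) ^ (τ + τ') := by
  apply abs_le_of_sq_le_sq _ (pow_nonneg h0 _)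
  calc (∑ c, (A ^ τ) l c * (A ^ τ') l' c) ^ 2
      ≤ (∑ c, ((A ^ τ) l c) ^ 2) * ∑ c, ((A ^ τ') l' c) ^ 2 :=
        Finset.sum_mul_sq_le_sq_mul_sq _ _ _
    _ ≤ ((sigmaMax A) ^ 2) ^ τ * ((sigmaMax A) ^ 2) ^ τ' :=
        mul_le_mul (sig_row A τ l) (sig_row A τ' l')
          (Finset.sum_nonneg fun _ _ => sq_nonneg _) (pow_nonneg (sq_nonneg _) τ)
    _ = ((sigmaMax A) ^ (τ + τ')) ^ 2 := by ring

lemma ksum_row {n m : ℕ} {σ : ℝ} (h0 : 0 ≤ σ) (h1 : σ < 1) (s : Fin n) :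
    ∑ b : Fin (n + m), (if (b : ℕ) ≤ m + (s : ℕ) then σ ^ (m + (s : ℕ) - (b : ℕ)) else 0)
      ≤ 1 / (1 - σ) := by
  classical
  rw [← Finset.sum_filter]
  apply aux_inj_sum h0 h1
  intro a ha b hb hab
  simp only [Finset.coe_filter, Set.mem_setOf_eq, Finset.mem_univ, true_and] at ha hb
  have hab' : m + (s : ℕ) - (a : ℕ) = m + (s : ℕ) - (b : ℕ) := hab
  have : (a : ℕ) = (b : ℕ) := by omega
  exact Fin.ext this

lemma ksum_col {n m : ℕ} {σ : ℝ} (h0 : 0 ≤ σ) (h1 : σ < 1) (b : Fin (n + m)) :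
    ∑ s : Fin n, (if (b : ℕ) ≤ m + (s : ℕ) then σ ^ (m + (s : ℕ) - (b : ℕ)) else 0)
      ≤ 1 / (1 - σ) := by
  classical
  rw [← Finset.sum_filter]
  apply aux_inj_sum h0 h1
  intro a ha c hc hac
  simp only [Finset.coe_filter, Set.mem_setOf_eq, Finset.mem_univ, true_and] at ha hc
  have hac' : m + (a : ℕ) - (b : ℕ) = m + (c : ℕ) - (b : ℕ) := hac
  have : (a : ℕ) = (c : ℕ) := by omega
  exact Fin.ext this

lemma phi_op {p n m : ℕ} (A : Matrix (Fin p) (Fin p) ℝ) (l : Fin p)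
    (h0 : 0 ≤ sigmaMax A) (h1 : sigmaMax A < 1)
    (Φ : Matrix (Fin n) (Fin (n + m) × Fin p) ℝ)
    (hΦ : ∀ (s : Fin n) (b : Fin (n + m)) (c : Fin p),
      Φ s (b, c) = if (b : ℕ) ≤ m + (s : ℕ) then (A ^ (m + (s : ℕ) - (b : ℕ))) l c else 0)
    (v : Fin (n + m) × Fin p → ℝ) :
    ∑ s, (Φ.mulVec v s) ^ 2 ≤ (1 / (1 - sigmaMax A)) ^ 2 * ∑ a, (v a) ^ 2 := by
  classical
  set σ := sigmaMax A with hσdef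
  set S := 1 / (1 - σ) with hSdef
  have hS0 : 0 ≤ S := by
    have h2 : 0 < 1 - σ := by linarith
    rw [hSdef]; positivity
  set K : Fin n → Fin (n + m) → ℝ :=
    fun s b => if (b : ℕ) ≤ m + (s : ℕ) then σ ^ (m + (s : ℕ) - (b : ℕ)) else 0 with hK
  have hKnn : ∀ s b, 0 ≤ K s b := by
    intro s b; rw [hK]; dsimp only; split
    · exact pow_nonneg h0 _
    · exact le_refl 0
  set w : Fin (n + m) → ℝ := fun b => Real.sqrt (∑ c, (v (b, c)) ^ 2) with hw
  have hw2 : ∀ b, (w b) ^ 2 = ∑ c, (v (b, c)) ^ 2 := by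
    intro b; exact Real.sq_sqrt (Finset.sum_nonneg fun _ _ => sq_nonneg _)
  have hwnn : ∀ b, 0 ≤ w b := fun b => Real.sqrt_nonneg _
  have habs : ∀ s, |Φ.mulVec v s| ≤ ∑ b, K s b * w b := by
    intro s
    have hexp : Φ.mulVec v s = ∑ b, ∑ c, Φ s (b, c) * v (b, c) := by
      simp [Matrix.mulVec, dotProduct, Fintype.sum_prod_type]
    rw [hexp]
    refine le_trans (Finset.abs_sum_le_sum_abs _ _) (Finset.sum_le_sum ?_)
    intro b _
    by_cases hb : (b : ℕ) ≤ m + (s : ℕ)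
    · have he : ∑ c, Φ s (b, c) * v (b, c)
          = ∑ c, (A ^ (m + (s : ℕ) - (b : ℕ))) l c * v (b, c) := by
        simp [hΦ, hb]
      rw [he]
      have hKb : K s b = σ ^ (m + (s : ℕ) - (b : ℕ)) := by rw [hK]; simp [hb]
      rw [hKb]
      apply abs_le_of_sq_le_sq _ (mul_nonneg (pow_nonneg h0 _) (hwnn b))
      calc (∑ c, (A ^ (m + (s : ℕ) - (b : ℕ))) l c * v (b, c)) ^ 2
          ≤ (∑ c, ((A ^ (m + (s : ℕ) - (b : ℕ))) l c) ^ 2) * ∑ c, (v (b, c)) ^ 2 :=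
            Finset.sum_mul_sq_le_sq_mul_sq _ _ _
        _ ≤ (σ ^ 2) ^ (m + (s : ℕ) - (b : ℕ)) * (w b) ^ 2 := by
            rw [hw2]
            exact mul_le_mul_of_nonneg_right (sig_row A _ l)
              (Finset.sum_nonneg fun _ _ => sq_nonneg _)
        _ = (σ ^ (m + (s : ℕ) - (b : ℕ)) * w b) ^ 2 := by ring
    · have he : ∑ c, Φ s (b, c) * v (b, c) = 0 := by simp [hΦ, hb]
      have hKb : K s b = 0 := by rw [hK]; simp [hb]
      rw [he, hKb, abs_zero, zero_mul]
  calc ∑ s, (Φ.mulVec v s) ^ 2 ≤ ∑ s, (∑ b, K s b * w b) ^ 2 := by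
        refine Finset.sum_le_sum fun s _ => ?_
        rw [← sq_abs]
        exact pow_le_pow_left₀ (abs_nonneg _) (habs s) 2
    _ ≤ S ^ 2 * ∑ b, (w b) ^ 2 :=
        aux_schur K hKnn hS0 (fun s => ksum_row h0 h1 s) (fun b => ksum_col h0 h1 b) w
    _ = S ^ 2 * ∑ a, (v a) ^ 2 := by
        simp_rw [hw2]
        rw [Fintype.sum_prod_type]

lemma phi_opT {p n m : ℕ} (A : Matrix (Fin p) (Fin p) ℝ) (l : Fin p)
    (h0 : 0 ≤ sigmaMax A) (h1 : sigmaMax A < 1)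
    (Φ : Matrix (Fin n) (Fin (n + m) × Fin p) ℝ)
    (hΦ : ∀ (s : Fin n) (b : Fin (n + m)) (c : Fin p),
      Φ s (b, c) = if (b : ℕ) ≤ m + (s : ℕ) then (A ^ (m + (s : ℕ) - (b : ℕ))) l c else 0)
    (u : Fin n → ℝ) :
    ∑ a, (Φᵀ.mulVec u a) ^ 2 ≤ (1 / (1 - sigmaMax A)) ^ 2 * ∑ s, (u s) ^ 2 := by
  classical
  set σ := sigmaMax A with hσdef
  set S := 1 / (1 - σ) with hSdef
  have hS0 : 0 ≤ S := by
    have h2 : 0 < 1 - σ := by linarith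
    rw [hSdef]; positivity
  set K : Fin n → Fin (n + m) → ℝ :=
    fun s b => if (b : ℕ) ≤ m + (s : ℕ) then σ ^ (m + (s : ℕ) - (b : ℕ)) else 0 with hK
  have hKnn : ∀ s b, 0 ≤ K s b := by
    intro s b; rw [hK]; dsimp only; split
    · exact pow_nonneg h0 _
    · exact le_refl 0
  have hmain : ∀ b : Fin (n + m),
      ∑ c, (∑ s, Φ s (b, c) * u s) ^ 2 ≤ (∑ s, K s b * |u s|) ^ 2 := by
    intro b
    have hinner : ∀ s s' : Fin n,
        u s * u s' * (∑ c, Φ s (b, c) * Φ s' (b, c)) ≤ (K s b * |u s|) * (K s' b * |u s'|) := by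
      intro s s'
      have hX : |∑ c, Φ s (b, c) * Φ s' (b, c)| ≤ K s b * K s' b := by
        by_cases hb : (b : ℕ) ≤ m + (s : ℕ)
        · by_cases hb' : (b : ℕ) ≤ m + (s' : ℕ)
          · have he : ∑ c, Φ s (b, c) * Φ s' (b, c)
                = ∑ c, (A ^ (m + (s : ℕ) - (b : ℕ))) l c * (A ^ (m + (s' : ℕ) - (b : ℕ))) l c := by
              simp [hΦ, hb, hb']
            rw [he]
            have := sig_ent A h0 (m + (s : ℕ) - (b : ℕ)) (m + (s' : ℕ) - (b : ℕ)) l l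
            have hKe : K s b * K s' b
                = σ ^ ((m + (s : ℕ) - (b : ℕ)) + (m + (s' : ℕ) - (b : ℕ))) := by
              rw [hK]; simp [hb, hb', ← pow_add]
            rw [hKe]
            exact this
          · have he : ∑ c, Φ s (b, c) * Φ s' (b, c) = 0 := by simp [hΦ, hb']
            have hKe : K s' b = 0 := by rw [hK]; simp [hb']
            rw [he, hKe, abs_zero, mul_zero]
        · have he : ∑ c, Φ s (b, c) * Φ s' (b, c) = 0 := by simp [hΦ, hb]
          have hKe : K s b = 0 := by rw [hK]; simp [hb]
          rw [he, hKe, abs_zero, zero_mul]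
      calc u s * u s' * (∑ c, Φ s (b, c) * Φ s' (b, c))
          ≤ |u s * u s' * (∑ c, Φ s (b, c) * Φ s' (b, c))| := le_abs_self _
        _ = |u s| * |u s'| * |∑ c, Φ s (b, c) * Φ s' (b, c)| := by rw [abs_mul, abs_mul]
        _ ≤ |u s| * |u s'| * (K s b * K s' b) := by
            exact mul_le_mul_of_nonneg_left hX (by positivity)
        _ = (K s b * |u s|) * (K s' b * |u s'|) := by ring
    calc ∑ c, (∑ s, Φ s (b, c) * u s) ^ 2
        = ∑ c, ∑ s, ∑ s', (Φ s (b, c) * u s) * (Φ s' (b, c) * u s') := by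
          refine Finset.sum_congr rfl fun c _ => ?_
          rw [sq, Finset.sum_mul_sum]
      _ = ∑ s, ∑ c, ∑ s', (Φ s (b, c) * u s) * (Φ s' (b, c) * u s') := Finset.sum_comm
      _ = ∑ s, ∑ s', ∑ c, (Φ s (b, c) * u s) * (Φ s' (b, c) * u s') :=
          Finset.sum_congr rfl fun s _ => Finset.sum_comm
      _ = ∑ s, ∑ s', u s * u s' * ∑ c, Φ s (b, c) * Φ s' (b, c) := by
          refine Finset.sum_congr rfl fun s _ => Finset.sum_congr rfl fun s' _ => ?_
          rw [Finset.mul_sum]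
          exact Finset.sum_congr rfl fun c _ => by ring
      _ ≤ ∑ s, ∑ s', (K s b * |u s|) * (K s' b * |u s'|) :=
          Finset.sum_le_sum fun s _ => Finset.sum_le_sum fun s' _ => hinner s s'
      _ = (∑ s, K s b * |u s|) ^ 2 := by rw [sq, Finset.sum_mul_sum]
  have hexp : ∀ (b : Fin (n + m)) (c : Fin p),
      Φᵀ.mulVec u (b, c) = ∑ s, Φ s (b, c) * u s := by
    intro b c
    simp [Matrix.mulVec, dotProduct, Matrix.transpose_apply]
  calc ∑ a, (Φᵀ.mulVec u a) ^ 2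
      = ∑ b, ∑ c, (∑ s, Φ s (b, c) * u s) ^ 2 := by
        rw [Fintype.sum_prod_type]
        exact Finset.sum_congr rfl fun b _ => Finset.sum_congr rfl fun c _ => by rw [hexp]
    _ ≤ ∑ b, (∑ s, K s b * |u s|) ^ 2 := Finset.sum_le_sum fun b _ => hmain b
    _ ≤ S ^ 2 * ∑ s, |u s| ^ 2 :=
        aux_schur (fun b s => K s b) (fun b s => hKnn s b) hS0
          (fun b => ksum_col h0 h1 b) (fun s => ksum_row h0 h1 s) (fun s => |u s|)
    _ = S ^ 2 * ∑ s, (u s) ^ 2 := by simp [sq_abs]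

lemma phi_fro {p n m : ℕ} (A : Matrix (Fin p) (Fin p) ℝ) (l : Fin p)
    (h0 : 0 ≤ sigmaMax A) (h1 : sigmaMax A < 1)
    (Φ : Matrix (Fin n) (Fin (n + m) × Fin p) ℝ)
    (hΦ : ∀ (s : Fin n) (b : Fin (n + m)) (c : Fin p),
      Φ s (b, c) = if (b : ℕ) ≤ m + (s : ℕ) then (A ^ (m + (s : ℕ) - (b : ℕ))) l c else 0) :
    ∑ s, ∑ a, (Φ s a) ^ 2 ≤ (n : ℝ) * (1 / (1 - sigmaMax A)) := by
  classical
  set σ := sigmaMax A with hσdef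
  have h20 : 0 ≤ σ ^ 2 := sq_nonneg σ
  have h21 : σ ^ 2 < 1 := by nlinarith
  have hstep : ∀ s : Fin n, ∑ a, (Φ s a) ^ 2 ≤ 1 / (1 - σ) := by
    intro s
    have hrow : ∑ a, (Φ s a) ^ 2
        ≤ ∑ b : Fin (n + m),
            (if (b : ℕ) ≤ m + (s : ℕ) then (σ ^ 2) ^ (m + (s : ℕ) - (b : ℕ)) else 0) := by
      rw [Fintype.sum_prod_type]
      refine Finset.sum_le_sum fun b _ => ?_
      by_cases hb : (b : ℕ) ≤ m + (s : ℕ)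
      · simp only [hΦ, hb, if_true]
        exact sig_row A _ l
      · simp [hΦ, hb]
    refine le_trans hrow (le_trans (ksum_row h20 h21 s) ?_)
    have hd1 : 0 < 1 - σ := by linarith
    have hd2 : 1 - σ ≤ 1 - σ ^ 2 := by nlinarith
    exact one_div_le_one_div_of_le hd1 hd2
  calc ∑ s, ∑ a, (Φ s a) ^ 2 ≤ ∑ _s : Fin n, 1 / (1 - σ) :=
        Finset.sum_le_sum fun s _ => hstep s
    _ = (n : ℝ) * (1 / (1 - σ)) := by simp [Finset.sum_const, nsmul_eq_mul]

theorem stmt4 {p n m : ℕ} (hp : 1 ≤ p) (hn : 1 ≤ n) (hm : 1 ≤ m)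
    (i j : Fin p) (η : ℝ) (hη : 0 < η)
    (Θ : Matrix (Fin p) (Fin p) ℝ)
    (hσ : sigmaMax ((1 : Matrix (Fin p) (Fin p) ℝ) + η • Θ) < 1)
    (Φi Φj : Matrix (Fin n) (Fin (n + m) × Fin p) ℝ)
    (hΦi : ∀ (s : Fin n) (b : Fin (n + m)) (c : Fin p),
      Φi s (b, c) =
        if (b : ℕ) ≤ m + (s : ℕ)
          then (((1 : Matrix (Fin p) (Fin p) ℝ) + η • Θ) ^ (m + (s : ℕ) - (b : ℕ))) i c
          else 0)
    (hΦj : ∀ (s : Fin n) (b : Fin (n + m)) (c : Fin p),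
      Φj s (b, c) =
        if (b : ℕ) ≤ m + (s : ℕ)
          then (((1 : Matrix (Fin p) (Fin p) ℝ) + η • Θ) ^ (m + (s : ℕ) - (b : ℕ))) j c
          else 0)
    (R : Matrix (Fin (n + m) × Fin p) (Fin (n + m) × Fin p) ℝ)
    (hR : R = (1 / 2 : ℝ) • (Φjᵀ * Φi + Φiᵀ * Φj))
    (hRh : R.IsHermitian) :
    (∀ l, |hRh.eigenvalues l|
        ≤ 1 / (1 - sigmaMax ((1 : Matrix (Fin p) (Fin p) ℝ) + η • Θ)) ^ 2) ∧
    ((1 / (n : ℝ)) * ∑ l, (hRh.eigenvalues l) ^ 2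
      ≤ (2 / (1 - sigmaMax ((1 : Matrix (Fin p) (Fin p) ℝ) + η • Θ)) ^ 3)
          * (1 + (3 / (2 * (n : ℝ)))
              * (1 / (1 - sigmaMax ((1 : Matrix (Fin p) (Fin p) ℝ) + η • Θ))))) := by
  classical
  haveI : NeZero p := ⟨by omega⟩
  set A : Matrix (Fin p) (Fin p) ℝ := (1 : Matrix (Fin p) (Fin p) ℝ) + η • Θ with hA
  set σ := sigmaMax A with hσdef
  have h0 : 0 ≤ σ := sig_nonneg A
  have h1 : σ < 1 := hσ
  have hd : 0 < 1 - σ := by linarith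
  set S : ℝ := 1 / (1 - σ) with hSdef
  have hS0 : 0 ≤ S := by positivity
  set ν := hRh.eigenvalues with hν
  set V : Matrix (Fin (n + m) × Fin p) (Fin (n + m) × Fin p) ℝ :=
    (hRh.eigenvectorUnitary : Matrix (Fin (n + m) × Fin p) (Fin (n + m) × Fin p) ℝ) with hV
  have hVmem := hRh.eigenvectorUnitary.2
  have hstar : star V = Vᵀ := by
    rw [Matrix.star_eq_conjTranspose, Matrix.conjTranspose_eq_transpose_of_trivial]
  have hVVt : V * Vᵀ = 1 := by
    rw [← hstar]; exact (Matrix.mem_unitaryGroup_iff).mp hVmem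
  have hVtV : Vᵀ * V = 1 := by
    rw [← hstar]; exact (Matrix.mem_unitaryGroup_iff').mp hVmem
  have hVapp : ∀ a l, V a l = hRh.eigenvectorBasis l a := fun a l => rfl
  have hunit : ∀ l, ∑ a, (V a l) ^ 2 = 1 := by
    intro l
    have := congrFun (congrFun hVtV l) l
    simp only [Matrix.mul_apply, Matrix.transpose_apply, Matrix.one_apply_eq] at this
    rw [← this]
    exact Finset.sum_congr rfl fun a _ => (sq (V a l)).symm ▸ by ring
  have hmv : ∀ l, R *ᵥ (fun a => V a l) = fun a => ν l * V a l := by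
    intro l
    have h := hRh.mulVec_eigenvectorBasis l
    funext a
    have : R *ᵥ (fun a => V a l) = R *ᵥ ⇑(hRh.eigenvectorBasis l) := rfl
    rw [this, h]
    simp [hVapp, hν]
  -- quadratic form identity
  have key : ∀ (P Q : Matrix (Fin n) (Fin (n + m) × Fin p) ℝ)
      (v : Fin (n + m) × Fin p → ℝ),
      ∑ a, ((Pᵀ * Q) *ᵥ v) a * v a = ∑ s, (Q *ᵥ v) s * (P *ᵥ v) s := by
    intro P Q v
    have h1 : ∀ a, ((Pᵀ * Q) *ᵥ v) a = ∑ s, P s a * (Q *ᵥ v) s := by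
      intro a
      rw [← Matrix.mulVec_mulVec]
      simp [Matrix.mulVec, dotProduct, Matrix.transpose_apply]
    simp_rw [h1, Finset.sum_mul]
    rw [Finset.sum_comm]
    refine Finset.sum_congr rfl fun s _ => ?_
    simp only [Matrix.mulVec, dotProduct, Finset.mul_sum]
    refine Finset.sum_congr rfl fun a _ => ?_
    rw [Finset.sum_mul, Finset.sum_mul]
    exact Finset.sum_congr rfl fun c _ => by ring
  have hval : ∀ l, ν l = ∑ s, (Φi *ᵥ (fun a => V a l)) s * (Φj *ᵥ (fun a => V a l)) s := by
    intro l
    set v : Fin (n + m) × Fin p → ℝ := fun a => V a l with hvd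
    have step1 : ν l = ∑ a, (R *ᵥ v) a * v a := by
      calc ν l = ν l * ∑ a, (v a) ^ 2 := by rw [hunit l, mul_one]
        _ = ∑ a, (ν l * v a) * v a := by
            rw [Finset.mul_sum]
            exact Finset.sum_congr rfl fun a _ => by ring
        _ = ∑ a, (R *ᵥ v) a * v a := by
            refine Finset.sum_congr rfl fun a _ => ?_
            rw [hmv l]
    rw [step1, hR]
    have step2 : ∀ a, (((1 / 2 : ℝ) • (Φjᵀ * Φi + Φiᵀ * Φj)) *ᵥ v) a
        = (1 / 2 : ℝ) * (((Φjᵀ * Φi) *ᵥ v) a + ((Φiᵀ * Φj) *ᵥ v) a) := by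
      intro a
      rw [Matrix.smul_mulVec, Matrix.add_mulVec]
      simp
    simp_rw [step2]
    calc ∑ a, (1 / 2 : ℝ) * (((Φjᵀ * Φi) *ᵥ v) a + ((Φiᵀ * Φj) *ᵥ v) a) * v a
        = (1 / 2 : ℝ) * ((∑ a, ((Φjᵀ * Φi) *ᵥ v) a * v a)
            + ∑ a, ((Φiᵀ * Φj) *ᵥ v) a * v a) := by
          rw [mul_add, Finset.mul_sum, Finset.mul_sum, ← Finset.sum_add_distrib]
          exact Finset.sum_congr rfl fun a _ => by ring
      _ = (1 / 2 : ℝ) * ((∑ s, (Φi *ᵥ v) s * (Φj *ᵥ v) s)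
            + ∑ s, (Φj *ᵥ v) s * (Φi *ᵥ v) s) := by rw [key Φj Φi v, key Φi Φj v]
      _ = ∑ s, (Φi *ᵥ v) s * (Φj *ᵥ v) s := by
          rw [show ∑ s, (Φj *ᵥ v) s * (Φi *ᵥ v) s = ∑ s, (Φi *ᵥ v) s * (Φj *ᵥ v) s from
            Finset.sum_congr rfl fun s _ => by ring]
          ring
  -- first bound
  have part1 : ∀ l, |ν l| ≤ 1 / (1 - σ) ^ 2 := by
    intro l
    set v : Fin (n + m) × Fin p → ℝ := fun a => V a l with hvd
    have hcs : (ν l) ^ 2 ≤ (S ^ 2) ^ 2 := by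
      rw [hval l]
      calc (∑ s, (Φi *ᵥ v) s * (Φj *ᵥ v) s) ^ 2
          ≤ (∑ s, ((Φi *ᵥ v) s) ^ 2) * ∑ s, ((Φj *ᵥ v) s) ^ 2 :=
            Finset.sum_mul_sq_le_sq_mul_sq _ _ _
        _ ≤ (S ^ 2 * ∑ a, (v a) ^ 2) * (S ^ 2 * ∑ a, (v a) ^ 2) := by
            apply mul_le_mul (phi_op A i h0 h1 Φi hΦi v) (phi_op A j h0 h1 Φj hΦj v)
              (Finset.sum_nonneg fun _ _ => sq_nonneg _)
            positivity
        _ = (S ^ 2) ^ 2 := by rw [hunit l]; ring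
    have := abs_le_of_sq_le_sq hcs (sq_nonneg S)
    calc |ν l| ≤ S ^ 2 := this
      _ = 1 / (1 - σ) ^ 2 := by rw [hSdef, div_pow, one_pow]
  -- Frobenius identity
  have hFro : ∑ l, (ν l) ^ 2 = ∑ a, ∑ b, (R a b) ^ 2 := by
    calc ∑ l, (ν l) ^ 2 = ∑ l, ∑ a, ((R * V) a l) ^ 2 := by
          refine Finset.sum_congr rfl fun l _ => ?_
          have hRV : ∀ a, (R * V) a l = ν l * V a l := by
            intro a
            have h := congrFun (hmv l) a
            simpa [Matrix.mul_apply, Matrix.mulVec, dotProduct] using h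
          simp_rw [hRV, mul_pow, ← Finset.mul_sum, hunit l, mul_one]
      _ = ∑ a, ∑ l, ((R * V) a l) ^ 2 := Finset.sum_comm
      _ = ∑ a, ((R * V) * (R * V)ᵀ) a a := by
          refine Finset.sum_congr rfl fun a _ => ?_
          rw [Matrix.mul_apply]
          refine Finset.sum_congr rfl fun x _ => ?_
          rw [Matrix.transpose_apply, ← pow_two]
      _ = ∑ a, (R * Rᵀ) a a := by
          have : (R * V) * (R * V)ᵀ = R * Rᵀ := by
            rw [Matrix.transpose_mul, show R * V * (Vᵀ * Rᵀ) = R * (V * Vᵀ) * Rᵀ by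
              noncomm_ring, hVVt, Matrix.mul_one]
          rw [this]
      _ = ∑ a, ∑ b, (R a b) ^ 2 := by
          refine Finset.sum_congr rfl fun a _ => ?_
          rw [Matrix.mul_apply]
          refine Finset.sum_congr rfl fun b _ => ?_
          rw [Matrix.transpose_apply, ← pow_two]
  -- Frobenius bound
  have hXfro : ∀ (P Q : Matrix (Fin n) (Fin (n + m) × Fin p) ℝ) (lP lQ : Fin p)
      (hP : ∀ (s : Fin n) (b : Fin (n + m)) (c : Fin p),
        P s (b, c) = if (b : ℕ) ≤ m + (s : ℕ) then (A ^ (m + (s : ℕ) - (b : ℕ))) lP c else 0)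
      (hQ : ∀ (s : Fin n) (b : Fin (n + m)) (c : Fin p),
        Q s (b, c) = if (b : ℕ) ≤ m + (s : ℕ) then (A ^ (m + (s : ℕ) - (b : ℕ))) lQ c else 0),
      ∑ a, ∑ b, ((Pᵀ * Q) a b) ^ 2 ≤ S ^ 2 * ((n : ℝ) * S) := by
    intro P Q lP lQ hP hQ
    have hcol : ∀ b, ∑ a, ((Pᵀ * Q) a b) ^ 2 ≤ S ^ 2 * ∑ s, (Q s b) ^ 2 := by
      intro b
      have he : ∀ a, (Pᵀ * Q) a b = Pᵀ.mulVec (fun s => Q s b) a := by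
        intro a
        simp [Matrix.mul_apply, Matrix.mulVec, dotProduct, Matrix.transpose_apply]
      simp_rw [he]
      exact phi_opT A lP h0 h1 P hP _
    calc ∑ a, ∑ b, ((Pᵀ * Q) a b) ^ 2 = ∑ b, ∑ a, ((Pᵀ * Q) a b) ^ 2 := Finset.sum_comm
      _ ≤ ∑ b, S ^ 2 * ∑ s, (Q s b) ^ 2 := Finset.sum_le_sum fun b _ => hcol b
      _ = S ^ 2 * ∑ s, ∑ b, (Q s b) ^ 2 := by
          rw [← Finset.mul_sum, Finset.sum_comm]
      _ ≤ S ^ 2 * ((n : ℝ) * S) := by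
          apply mul_le_mul_of_nonneg_left _ (sq_nonneg S)
          exact phi_fro A lQ h0 h1 Q hQ
  have hbound : ∑ a, ∑ b, (R a b) ^ 2 ≤ (n : ℝ) * S ^ 3 := by
    have hRe : ∀ a b, R a b = (1 / 2 : ℝ) * ((Φjᵀ * Φi) a b + (Φiᵀ * Φj) a b) := by
      intro a b; rw [hR]; simp
    have hsq : ∀ a b, (R a b) ^ 2
        ≤ (1 / 2 : ℝ) * (((Φjᵀ * Φi) a b) ^ 2 + ((Φiᵀ * Φj) a b) ^ 2) := by
      intro a b; rw [hRe a b]; nlinarith [sq_nonneg ((Φjᵀ * Φi) a b - (Φiᵀ * Φj) a b)]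
    calc ∑ a, ∑ b, (R a b) ^ 2
        ≤ ∑ a, ∑ b, (1 / 2 : ℝ) * (((Φjᵀ * Φi) a b) ^ 2 + ((Φiᵀ * Φj) a b) ^ 2) :=
          Finset.sum_le_sum fun a _ => Finset.sum_le_sum fun b _ => hsq a b
      _ = (1 / 2 : ℝ) * ((∑ a, ∑ b, ((Φjᵀ * Φi) a b) ^ 2)
            + ∑ a, ∑ b, ((Φiᵀ * Φj) a b) ^ 2) := by
          rw [mul_add, Finset.mul_sum, Finset.mul_sum, ← Finset.sum_add_distrib]
          refine Finset.sum_congr rfl fun a _ => ?_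
          rw [Finset.mul_sum, Finset.mul_sum, ← Finset.sum_add_distrib]
          exact Finset.sum_congr rfl fun b _ => by ring
      _ ≤ (1 / 2 : ℝ) * ((S ^ 2 * ((n : ℝ) * S)) + (S ^ 2 * ((n : ℝ) * S))) := by
          apply mul_le_mul_of_nonneg_left _ (by norm_num : (0:ℝ) ≤ 1/2)
          exact add_le_add (hXfro Φj Φi j i hΦj hΦi) (hXfro Φi Φj i j hΦi hΦj)
      _ = (n : ℝ) * S ^ 3 := by ring
  refine ⟨part1, ?_⟩
  have hnpos : (0 : ℝ) < n := by exact_mod_cast hn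
  have hsum : ∑ l, (ν l) ^ 2 ≤ (n : ℝ) * S ^ 3 := hFro ▸ hbound
  have hS3 : (1 / (n : ℝ)) * ∑ l, (ν l) ^ 2 ≤ S ^ 3 := by
    rw [div_mul_eq_mul_div, one_mul, div_le_iff₀ hnpos]
    calc ∑ l, (ν l) ^ 2 ≤ (n : ℝ) * S ^ 3 := hsum
      _ = S ^ 3 * n := by ring
  refine le_trans hS3 ?_
  have hSd : S ^ 3 = 1 / (1 - σ) ^ 3 := by rw [hSdef, div_pow, one_pow]
  have hextra : 0 ≤ (3 / (2 * (n : ℝ))) * (1 / (1 - σ)) := by positivity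
  calc S ^ 3 = 1 / (1 - σ) ^ 3 := hSd
    _ ≤ (2 / (1 - σ) ^ 3) * 1 := by
        rw [mul_one]
        have h3 : 0 < (1 - σ) ^ 3 := by positivity
        rw [div_le_div_iff₀ h3 h3]
        nlinarith
    _ ≤ (2 / (1 - σ) ^ 3) * (1 + (3 / (2 * (n : ℝ))) * (1 / (1 - σ))) := by
        apply mul_le_mul_of_nonneg_left _ (by positivity)
        linarith
end

section
/- Let ρ ∈ ℝ^{p×p} with σmax(ρ) < 1, let η > 0, and let n, m ≥ 1 be integers. Then for all i, j ∈ {1,...,p}: | η·Σ_{l=0}^{n+m−1} ((m+n−l)/(m+n))·(ρ^l (ρᵀ)^l)_{ij} − η·Σ_{l=0}^{∞} (ρ^l (ρᵀ)^l)_{ij} | ≤ η / ((n+m)·(1 − σmax(ρ))²), where the infinite series converges. -/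
set_option synthInstance.maxHeartbeats 1000000
set_option maxHeartbeats 1000000

open scoped Matrix

namespace SigmaAux

open Matrix

variable {p : ℕ}

lemma norm_equiv_symm (v : Fin p → ℝ) :
    ‖(WithLp.equiv 2 (Fin p → ℝ)).symm v‖ = Real.sqrt (∑ i, v i ^ 2) := by
  rw [EuclideanSpace.norm_eq]
  simp [Real.norm_eq_abs, sq_abs]

lemma clm_apply (A : Matrix (Fin p) (Fin p) ℝ) (x : Fin p → ℝ) :
    Matrix.toEuclideanCLM (𝕜 := ℝ) A ((WithLp.equiv 2 (Fin p → ℝ)).symm x) =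
      (WithLp.equiv 2 (Fin p → ℝ)).symm (A.mulVec x) := by
  simp [Matrix.toLin'_apply]

lemma mem_le (A : Matrix (Fin p) (Fin p) ℝ) {r : ℝ}
    (hr : r ∈ { r : ℝ | ∃ x : Fin p → ℝ, ∑ j, (x j) ^ 2 = 1 ∧
      r = Real.sqrt (∑ i, (A.mulVec x i) ^ 2) }) :
    r ≤ ‖Matrix.toEuclideanCLM (𝕜 := ℝ) A‖ := by
  obtain ⟨x, hx, rfl⟩ := hr
  have h1 : Real.sqrt (∑ i, (A.mulVec x i) ^ 2)
      = ‖Matrix.toEuclideanCLM (𝕜 := ℝ) A ((WithLp.equiv 2 (Fin p → ℝ)).symm x)‖ := by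
    rw [clm_apply, norm_equiv_symm]
  rw [h1]
  calc ‖Matrix.toEuclideanCLM (𝕜 := ℝ) A ((WithLp.equiv 2 (Fin p → ℝ)).symm x)‖
      ≤ ‖Matrix.toEuclideanCLM (𝕜 := ℝ) A‖ * ‖(WithLp.equiv 2 (Fin p → ℝ)).symm x‖ :=
        ContinuousLinearMap.le_opNorm _ _
    _ = ‖Matrix.toEuclideanCLM (𝕜 := ℝ) A‖ := by
        rw [norm_equiv_symm, hx, Real.sqrt_one, mul_one]

lemma sigmaMax_le (A : Matrix (Fin p) (Fin p) ℝ) :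
    sigmaMax A ≤ ‖Matrix.toEuclideanCLM (𝕜 := ℝ) A‖ :=
  Real.sSup_le (fun _ hr => mem_le A hr) (norm_nonneg _)

lemma sigmaMax_eq [Nonempty (Fin p)] (A : Matrix (Fin p) (Fin p) ℝ) :
    sigmaMax A = ‖Matrix.toEuclideanCLM (𝕜 := ℝ) A‖ := by
  refine le_antisymm (sigmaMax_le A) ?_
  set S := { r : ℝ | ∃ x : Fin p → ℝ, ∑ j, (x j) ^ 2 = 1 ∧
      r = Real.sqrt (∑ i, (A.mulVec x i) ^ 2) } with hS
  have hbdd : BddAbove S := ⟨_, fun _ hr => mem_le A hr⟩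
  have hmem : Real.sqrt (∑ i, (A.mulVec (Pi.single (Classical.arbitrary (Fin p)) 1) i) ^ 2) ∈ S := by
    refine ⟨Pi.single (Classical.arbitrary (Fin p)) 1, ?_, rfl⟩
    simp [Pi.single_apply]
  have hS0 : 0 ≤ sigmaMax A :=
    le_trans (Real.sqrt_nonneg _) (le_csSup hbdd hmem)
  refine ContinuousLinearMap.opNorm_le_bound _ hS0 fun y => ?_
  rcases eq_or_ne y 0 with rfl | hy
  · simp
  · have hy0 : (0:ℝ) < ‖y‖ := norm_pos_iff.2 hy
    set v : Fin p → ℝ := fun j => ‖y‖⁻¹ * (WithLp.equiv 2 (Fin p → ℝ)) y j with hv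
    have hyv : (WithLp.equiv 2 (Fin p → ℝ)).symm v = ‖y‖⁻¹ • y := by
      ext j; simp [hv]
    have hsum : ∑ j, ((WithLp.equiv 2 (Fin p → ℝ)) y j) ^ 2 = ‖y‖ ^ 2 := by
      have := norm_equiv_symm (p := p) ((WithLp.equiv 2 (Fin p → ℝ)) y)
      simp only [Equiv.symm_apply_apply] at this
      rw [this, Real.sq_sqrt (Finset.sum_nonneg fun _ _ => sq_nonneg _)]
    have hv1 : ∑ j, (v j) ^ 2 = 1 := by
      simp only [hv, mul_pow, ← Finset.mul_sum, hsum]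
      field_simp
    have hmemv : Real.sqrt (∑ i, (A.mulVec v i) ^ 2) ∈ S := ⟨v, hv1, rfl⟩
    have hle : Real.sqrt (∑ i, (A.mulVec v i) ^ 2) ≤ sigmaMax A := le_csSup hbdd hmemv
    have heq : ‖Matrix.toEuclideanCLM (𝕜 := ℝ) A y‖
        = ‖y‖ * Real.sqrt (∑ i, (A.mulVec v i) ^ 2) := by
      have h2 : Matrix.toEuclideanCLM (𝕜 := ℝ) A ((WithLp.equiv 2 (Fin p → ℝ)).symm v)
          = ‖y‖⁻¹ • Matrix.toEuclideanCLM (𝕜 := ℝ) A y := by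
        rw [hyv]; exact (Matrix.toEuclideanCLM (𝕜 := ℝ) A).map_smul _ _
      have h3 := clm_apply A v
      rw [h2] at h3
      have h4 : ‖(‖y‖⁻¹ • Matrix.toEuclideanCLM (𝕜 := ℝ) A y : EuclideanSpace ℝ (Fin p))‖
          = Real.sqrt (∑ i, (A.mulVec v i) ^ 2) := by
        rw [h3, norm_equiv_symm]
      rw [norm_smul, Real.norm_eq_abs, abs_inv, abs_norm] at h4
      field_simp at h4
      linarith [h4]
    rw [heq, mul_comm]
    exact mul_le_mul_of_nonneg_right hle (norm_nonneg _)

lemma entry_le (A : Matrix (Fin p) (Fin p) ℝ) (i j : Fin p) :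
    |A i j| ≤ ‖Matrix.toEuclideanCLM (𝕜 := ℝ) A‖ := by
  classical
  have h1 : A.mulVec (Pi.single j 1) i = A i j := by
    simp [Matrix.mulVec_single]
  have h2 : |A i j| ≤ Real.sqrt (∑ k, (A.mulVec (Pi.single j 1) k) ^ 2) := by
    rw [← Real.sqrt_sq_eq_abs]
    exact Real.sqrt_le_sqrt (by
      rw [← h1]
      exact Finset.single_le_sum (f := fun k => (A.mulVec (Pi.single j 1) k) ^ 2)
        (fun _ _ => sq_nonneg _) (Finset.mem_univ i))
  exact h2.trans (mem_le A ⟨Pi.single j 1, by simp [Pi.single_apply], rfl⟩)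

lemma transpose_norm (A : Matrix (Fin p) (Fin p) ℝ) :
    ‖Matrix.toEuclideanCLM (𝕜 := ℝ) Aᵀ‖ = ‖Matrix.toEuclideanCLM (𝕜 := ℝ) A‖ := by
  have h : Aᵀ = star A := by
    ext i j
    simp [Matrix.star_eq_conjTranspose, Matrix.conjTranspose_apply]
  rw [h, map_star, ContinuousLinearMap.star_eq_adjoint]; exact ContinuousLinearMap.adjoint.norm_map _

end SigmaAux

theorem stmt8 {p : ℕ} (ρ : Matrix (Fin p) (Fin p) ℝ) (hσ : sigmaMax ρ < 1)
    (η : ℝ) (hη : 0 < η) (n m : ℕ) (hn : 1 ≤ n) (hm : 1 ≤ m)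
    (i j : Fin p) :
    Summable (fun l : ℕ => (ρ ^ l * (ρᵀ) ^ l) i j) ∧
    |η * ∑ l ∈ Finset.range (n + m),
        (((m : ℝ) + n - l) / ((m : ℝ) + n)) * ((ρ ^ l * (ρᵀ) ^ l) i j)
      - η * ∑' l : ℕ, (ρ ^ l * (ρᵀ) ^ l) i j|
      ≤ η / (((n : ℝ) + m) * (1 - sigmaMax ρ) ^ 2) := by
  have hne : Nonempty (Fin p) := ⟨i⟩
  have hσeq : sigmaMax ρ = ‖Matrix.toEuclideanCLM (𝕜 := ℝ) ρ‖ := SigmaAux.sigmaMax_eq ρ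
  set σ : ℝ := sigmaMax ρ with hσdef
  have hσ0 : 0 ≤ σ := hσeq ▸ norm_nonneg _
  set c : ℝ := σ ^ 2 with hc
  have hc0 : 0 ≤ c := sq_nonneg σ
  have hc1 : c < 1 := by nlinarith
  set a : ℕ → ℝ := fun l => (ρ ^ l * (ρᵀ) ^ l) i j with ha
  -- entrywise bound
  have hab : ∀ l, |a l| ≤ c ^ l := by
    intro l
    cases l with
    | zero =>
      simp only [ha, pow_zero, mul_one, Matrix.one_apply]
      split <;> simp
    | succ k =>
      have h1 : |a (k+1)| ≤ ‖Matrix.toEuclideanCLM (𝕜 := ℝ) (ρ ^ (k+1) * (ρᵀ) ^ (k+1))‖ :=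
        SigmaAux.entry_le (ρ ^ (k+1) * (ρᵀ) ^ (k+1)) i j
      have h2 : ‖Matrix.toEuclideanCLM (𝕜 := ℝ) (ρ ^ (k+1) * (ρᵀ) ^ (k+1))‖
          ≤ ‖Matrix.toEuclideanCLM (𝕜 := ℝ) ρ‖ ^ (k+1)
            * ‖Matrix.toEuclideanCLM (𝕜 := ℝ) (ρᵀ)‖ ^ (k+1) := by
        rw [map_mul, map_pow, map_pow]
        calc ‖(Matrix.toEuclideanCLM (𝕜 := ℝ) ρ) ^ (k+1)
              * (Matrix.toEuclideanCLM (𝕜 := ℝ) (ρᵀ)) ^ (k+1)‖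
            ≤ ‖(Matrix.toEuclideanCLM (𝕜 := ℝ) ρ) ^ (k+1)‖
              * ‖(Matrix.toEuclideanCLM (𝕜 := ℝ) (ρᵀ)) ^ (k+1)‖ := norm_mul_le _ _
          _ ≤ _ := mul_le_mul (norm_pow_le' _ k.succ_pos) (norm_pow_le' _ k.succ_pos)
              (norm_nonneg _) (by positivity)
      rw [SigmaAux.transpose_norm, ← hσeq] at h2
      calc |a (k+1)| ≤ σ ^ (k+1) * σ ^ (k+1) := h1.trans h2
        _ = c ^ (k+1) := by rw [hc, ← mul_pow, ← sq]
  have hgeom : Summable (fun l : ℕ => c ^ l) := summable_geometric_of_lt_one hc0 hc1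
  have habs : Summable (fun l => |a l|) :=
    Summable.of_nonneg_of_le (fun _ => abs_nonneg _) hab hgeom
  have hsa : Summable a := by
    refine Summable.of_norm ?_
    simpa [Real.norm_eq_abs] using habs
  refine ⟨hsa, ?_⟩
  set N : ℕ := n + m with hN
  have hNpos : 0 < N := by omega
  set Nr : ℝ := (n : ℝ) + m with hNr
  have hNr0 : (0:ℝ) < Nr := by positivity
  have hNrN : (N : ℝ) = Nr := by push_cast [hN, hNr]; ring
  have hmn : (m : ℝ) + n = Nr := by rw [hNr]; ring
  show |η * ∑ l ∈ Finset.range N, (((m : ℝ) + n - l) / ((m : ℝ) + n)) * a l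
      - η * ∑' l : ℕ, a l| ≤ η / (Nr * (1 - σ) ^ 2)
  have h1 : ∑ l ∈ Finset.range N, a l + ∑' k, a (k + N) = ∑' l, a l :=
    Summable.sum_add_tsum_nat_add N hsa
  have hE : η * ∑ l ∈ Finset.range N, (((m : ℝ) + n - l) / ((m : ℝ) + n)) * a l
      - η * ∑' l : ℕ, a l
      = η * ((∑ l ∈ Finset.range N, ((((m : ℝ) + n - l) / ((m : ℝ) + n)) - 1) * a l)
          - ∑' k, a (k + N)) := by
    rw [← h1]
    have e0 : ∑ l ∈ Finset.range N, ((((m : ℝ) + n - l) / ((m : ℝ) + n)) - 1) * a l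
        = ∑ l ∈ Finset.range N, ((((m : ℝ) + n - l) / ((m : ℝ) + n)) * a l - a l) :=
      Finset.sum_congr rfl fun l _ => by ring
    rw [e0, Finset.sum_sub_distrib]
    ring
  have htail_abs : Summable (fun k => |a (k + N)|) := (summable_nat_add_iff (f := fun l => |a l|) N).2 habs
  have htail_geom : Summable (fun k : ℕ => c ^ (k + N)) := (summable_nat_add_iff (f := fun l : ℕ => c ^ l) N).2 hgeom
  have hw : ∀ l ∈ Finset.range N, |((((m : ℝ) + n - l) / ((m : ℝ) + n)) - 1) * a l|
      ≤ ((l : ℝ) / Nr) * c ^ l := by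
    intro l _
    rw [abs_mul]
    have hwl : ((((m : ℝ) + n - l) / ((m : ℝ) + n)) - 1) = -(l / Nr) := by
      rw [hmn]; field_simp; ring
    rw [hwl, abs_neg, abs_div, abs_of_nonneg (by positivity : (0:ℝ) ≤ (l:ℝ)),
      abs_of_pos hNr0]
    exact mul_le_mul_of_nonneg_left (hab l) (by positivity)
  have bound1 : |(∑ l ∈ Finset.range N, ((((m : ℝ) + n - l) / ((m : ℝ) + n)) - 1) * a l)
      - ∑' k, a (k + N)|
      ≤ (∑ l ∈ Finset.range N, ((l : ℝ) / Nr) * c ^ l) + ∑' k : ℕ, c ^ (k + N) := by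
    refine (abs_sub _ _).trans (add_le_add ?_ ?_)
    · exact (Finset.abs_sum_le_sum_abs _ _).trans (Finset.sum_le_sum hw)
    · refine le_trans ?_ (Summable.tsum_le_tsum (fun k => hab (k + N)) htail_abs htail_geom)
      simpa [Real.norm_eq_abs] using norm_tsum_le_tsum_norm (f := fun k => a (k + N))
        (by simpa [Real.norm_eq_abs] using htail_abs)
  have hs1 : Summable (fun l : ℕ => (l : ℝ) * c ^ l) := by
    simpa using summable_pow_mul_geometric_of_norm_lt_one 1
      (by rwa [Real.norm_eq_abs, abs_of_nonneg hc0])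
  have htot : ∑' l : ℕ, (l : ℝ) * c ^ l = c / (1 - c) ^ 2 :=
    tsum_coe_mul_geometric_of_norm_lt_one (by rwa [Real.norm_eq_abs, abs_of_nonneg hc0])
  have key : (∑ l ∈ Finset.range N, ((l : ℝ) / Nr) * c ^ l) + ∑' k : ℕ, c ^ (k + N)
      ≤ (c / (1 - c) ^ 2) / Nr := by
    rw [← htot, le_div_iff₀ hNr0]
    have e1 : (∑' k : ℕ, c ^ (k + N)) * Nr = ∑' k : ℕ, Nr * c ^ (k + N) := by
      rw [← tsum_mul_right]
      exact tsum_congr fun k => mul_comm _ _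
    calc ((∑ l ∈ Finset.range N, ((l : ℝ) / Nr) * c ^ l) + ∑' k : ℕ, c ^ (k + N)) * Nr
        = (∑ l ∈ Finset.range N, (l : ℝ) * c ^ l) + ∑' k : ℕ, Nr * c ^ (k + N) := by
          rw [add_mul, Finset.sum_mul, e1]
          congr 1
          exact Finset.sum_congr rfl fun l _ => by field_simp
      _ ≤ (∑ l ∈ Finset.range N, (l : ℝ) * c ^ l)
          + ∑' k : ℕ, ((k + N : ℕ) : ℝ) * c ^ (k + N) := by
          refine add_le_add_right (Summable.tsum_le_tsum (fun k => ?_) (htail_geom.mul_left Nr)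
            ((summable_nat_add_iff (f := fun l : ℕ => (l : ℝ) * c ^ l) N).2 hs1)) _
          refine mul_le_mul_of_nonneg_right ?_ (pow_nonneg hc0 _)
          rw [← hNrN]; push_cast; linarith [Nat.cast_nonneg (α := ℝ) k]
      _ = ∑' l : ℕ, (l : ℝ) * c ^ l := Summable.sum_add_tsum_nat_add N hs1
  have hX : c / (1 - c) ^ 2 ≤ 1 / (1 - σ) ^ 2 := by
    rw [div_le_div_iff₀ (pow_pos (by linarith) 2) (pow_pos (by linarith) 2)]
    nlinarith [sq_nonneg (1 - σ), sq_nonneg (1 + σ), sq_nonneg σ]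
  calc |η * ∑ l ∈ Finset.range N, (((m : ℝ) + n - l) / ((m : ℝ) + n)) * a l
      - η * ∑' l : ℕ, a l|
      = η * |(∑ l ∈ Finset.range N, ((((m : ℝ) + n - l) / ((m : ℝ) + n)) - 1) * a l)
          - ∑' k, a (k + N)| := by rw [hE, abs_mul, abs_of_pos hη]
    _ ≤ η * ((c / (1 - c) ^ 2) / Nr) :=
        mul_le_mul_of_nonneg_left (bound1.trans key) hη.le
    _ ≤ η * ((1 / (1 - σ) ^ 2) / Nr) := by
        exact mul_le_mul_of_nonneg_left ((div_le_div_iff_of_pos_right hNr0).2 hX) hη.le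
    _ = η / (Nr * (1 - σ) ^ 2) := by
        field_simp
end

section
/- Let Q̂, Q⁰ ∈ ℝ^{p×p} and let S ⊆ {1,...,p} be nonempty with Q̂_{S,S} and Q⁰_{S,S} invertible. Define T₁ := Q⁰_{S^c,S}·((Q̂_{S,S})⁻¹ − (Q⁰_{S,S})⁻¹), T₂ := (Q̂_{S^c,S} − Q⁰_{S^c,S})·(Q⁰_{S,S})⁻¹, and T₃ := (Q̂_{S^c,S} − Q⁰_{S^c,S})·((Q̂_{S,S})⁻¹ − (Q⁰_{S,S})⁻¹). Then Q̂_{S^c,S}(Q̂_{S,S})⁻¹ = T₁ + T₂ + T₃ + Q⁰_{S^c,S}(Q⁰_{S,S})⁻¹. Moreover, if |S| ≤ k, ‖Q⁰_{S^c,S}(Q⁰_{S,S})⁻¹‖∞ < 1, Q̂_{S,S} and Q⁰_{S,S} are symmetric, λmin(Q̂_{S,S}) ≥ Cmin/2 > 0 and λmin(Q⁰_{S,S}) ≥ Cmin, then ‖T₁‖∞ ≤ (2√k/Cmin)·‖Q̂_{S,S} − Q⁰_{S,S}‖∞, ‖T₂‖∞ ≤ (√k/Cmin)·‖Q̂_{S^c,S}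 − Q⁰_{S^c,S}‖∞, and ‖T₃‖∞ ≤ (2√k/Cmin²)·‖Q̂_{S^c,S} − Q⁰_{S^c,S}‖∞·‖Q̂_{S,S} − Q⁰_{S,S}‖∞. -/
open scoped Matrix

/-- The smallest eigenvalue of a real symmetric matrix, characterized as the infimum
of the Rayleigh quotient over unit vectors. -/
noncomputable def lambdaMin {I : Type*} [Fintype I] (A : Matrix I I ℝ) : ℝ :=
  sInf { r : ℝ | ∃ x : I → ℝ, ∑ i, (x i) ^ 2 = 1 ∧ r = x ⬝ᵥ A.mulVec x }

open Finset

section helpers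
variable {I J K : Type*} [Fintype I] [Fintype J] [Fintype K]

lemma rowsum_le (A : Matrix I J ℝ) (i : I) : ∑ j, |A i j| ≤ matInfNorm A := by
  exact le_ciSup (Set.Finite.bddAbove (Set.finite_range fun i => ∑ j, |A i j|)) i

lemma matInfNorm_nonneg (A : Matrix I J ℝ) : 0 ≤ matInfNorm A :=
  Real.iSup_nonneg fun _ => Finset.sum_nonneg fun _ _ => abs_nonneg _

lemma matInfNorm_le {A : Matrix I J ℝ} {M : ℝ} (hM : 0 ≤ M)
    (h : ∀ i, ∑ j, |A i j| ≤ M) : matInfNorm A ≤ M := Real.iSup_le h hM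

lemma matInfNorm_sub_comm (A B : Matrix I J ℝ) :
    matInfNorm (A - B) = matInfNorm (B - A) := by
  unfold matInfNorm
  congr 1; funext i; congr 1; funext j
  simp [abs_sub_comm]

lemma matInfNorm_mul_le (A : Matrix I J ℝ) (B : Matrix J K ℝ) :
    matInfNorm (A * B) ≤ matInfNorm A * matInfNorm B := by
  apply matInfNorm_le (mul_nonneg (matInfNorm_nonneg A) (matInfNorm_nonneg B))
  intro i
  calc ∑ k, |(A*B) i k| ≤ ∑ k, ∑ j, |A i j| * |B j k| := by
        refine sum_le_sum fun k _ => ?_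
        rw [Matrix.mul_apply]
        refine (Finset.abs_sum_le_sum_abs _ _).trans (sum_le_sum fun j _ => ?_)
        rw [abs_mul]
    _ = ∑ j, |A i j| * ∑ k, |B j k| := by rw [Finset.sum_comm]; simp [Finset.mul_sum]
    _ ≤ ∑ j, |A i j| * matInfNorm B :=
        sum_le_sum fun j _ => mul_le_mul_of_nonneg_left (rowsum_le B j) (abs_nonneg _)
    _ = (∑ j, |A i j|) * matInfNorm B := by rw [Finset.sum_mul]
    _ ≤ _ := mul_le_mul_of_nonneg_right (rowsum_le A i) (matInfNorm_nonneg B)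

noncomputable def vnorm {I : Type*} [Fintype I] (x : I → ℝ) : ℝ :=
  Real.sqrt (∑ i, x i ^ 2)

lemma vnorm_nonneg (x : I → ℝ) : 0 ≤ vnorm x := Real.sqrt_nonneg _

lemma sq_vnorm (x : I → ℝ) : vnorm x ^ 2 = ∑ i, x i ^ 2 :=
  Real.sq_sqrt (Finset.sum_nonneg fun _ _ => sq_nonneg _)

lemma abs_apply_le_vnorm (x : I → ℝ) (i : I) : |x i| ≤ vnorm x := by
  have h1 : x i ^ 2 ≤ ∑ j, x j ^ 2 :=
    Finset.single_le_sum (f := fun j => x j ^ 2) (fun _ _ => sq_nonneg _) (mem_univ i)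
  have := Real.sqrt_le_sqrt h1
  rwa [Real.sqrt_sq_eq_abs] at this

def OpB (A : Matrix I J ℝ) (M : ℝ) : Prop :=
  ∀ x, vnorm (A.mulVec x) ≤ M * vnorm x

lemma opb_mul {A : Matrix I J ℝ} {B : Matrix J K ℝ} {M N : ℝ}
    (hM : 0 ≤ M) (hA : OpB A M) (hB : OpB B N) : OpB (A * B) (M * N) := by
  intro x
  rw [← Matrix.mulVec_mulVec]
  calc vnorm (A.mulVec (B.mulVec x)) ≤ M * vnorm (B.mulVec x) := hA _
    _ ≤ M * (N * vnorm x) := mul_le_mul_of_nonneg_left (hB x) hM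
    _ = M * N * vnorm x := by ring

lemma vnorm_le_of_opb {A : Matrix I I ℝ} {M : ℝ} (hM : 0 ≤ M) (h : OpB A M)
    (i : I) : vnorm (fun j => A i j) ≤ M := by
  set r : I → ℝ := fun j => A i j with hr
  have key : vnorm r ^ 2 = A.mulVec r i := by
    rw [sq_vnorm]
    simp [Matrix.mulVec, dotProduct, hr, sq]
  have h1 : vnorm r ^ 2 ≤ vnorm (A.mulVec r) := by
    rw [key]
    exact (le_abs_self _).trans (abs_apply_le_vnorm _ i)
  have h2 : vnorm r ^ 2 ≤ M * vnorm r := h1.trans (h r)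
  rcases eq_or_lt_of_le (vnorm_nonneg r) with h0 | h0
  · rw [← h0]; exact hM
  · nlinarith [h2]

lemma matInfNorm_le_of_opb {A : Matrix I I ℝ} {M : ℝ} (hM : 0 ≤ M) (h : OpB A M) :
    matInfNorm A ≤ Real.sqrt (Fintype.card I) * M := by
  apply matInfNorm_le (mul_nonneg (Real.sqrt_nonneg _) hM)
  intro i
  have cs : ∑ j, |A i j| * 1 ≤
      Real.sqrt (∑ j, |A i j| ^ 2) * Real.sqrt (∑ j : I, (1:ℝ) ^ 2) :=
    Real.sum_mul_le_sqrt_mul_sqrt univ _ _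
  simp only [mul_one, one_pow] at cs
  have hc : (∑ j : I, (1:ℝ)) = (Fintype.card I : ℝ) := by simp
  rw [hc] at cs
  have he : Real.sqrt (∑ j, |A i j| ^ 2) = vnorm (fun j => A i j) := by
    unfold vnorm; congr 1; exact Finset.sum_congr rfl fun j _ => sq_abs _
  rw [he] at cs
  calc ∑ j, |A i j| ≤ vnorm (fun j => A i j) * Real.sqrt (Fintype.card I) := cs
    _ ≤ M * Real.sqrt (Fintype.card I) :=
        mul_le_mul_of_nonneg_right (vnorm_le_of_opb hM h i) (Real.sqrt_nonneg _)
    _ = Real.sqrt (Fintype.card I) * M := mul_comm _ _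

lemma rq_bddBelow (A : Matrix I I ℝ) :
    BddBelow { r : ℝ | ∃ x : I → ℝ, ∑ i, (x i) ^ 2 = 1 ∧ r = x ⬝ᵥ A.mulVec x } := by
  refine ⟨-(∑ i, ∑ j, |A i j|), ?_⟩
  rintro r ⟨x, hx, rfl⟩
  have hxi : ∀ i, |x i| ≤ 1 := by
    intro i
    have h1 : x i ^ 2 ≤ 1 := by
      rw [← hx]
      exact Finset.single_le_sum (f := fun j => x j ^ 2) (fun _ _ => sq_nonneg _)
        (mem_univ i)
    nlinarith [abs_nonneg (x i), sq_abs (x i)]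
  have habs : |x ⬝ᵥ A.mulVec x| ≤ ∑ i, ∑ j, |A i j| := by
    unfold dotProduct Matrix.mulVec
    refine (Finset.abs_sum_le_sum_abs _ _).trans (sum_le_sum fun i _ => ?_)
    rw [abs_mul]
    calc |x i| * |∑ j, A i j * x j| ≤ 1 * |∑ j, A i j * x j| :=
          mul_le_mul_of_nonneg_right (hxi i) (abs_nonneg _)
      _ = |∑ j, A i j * x j| := one_mul _
      _ ≤ ∑ j, |A i j * x j| := Finset.abs_sum_le_sum_abs _ _
      _ ≤ ∑ j, |A i j| := by
          refine sum_le_sum fun j _ => ?_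
          rw [abs_mul]
          calc |A i j| * |x j| ≤ |A i j| * 1 :=
                mul_le_mul_of_nonneg_left (hxi j) (abs_nonneg _)
            _ = |A i j| := mul_one _
  linarith [neg_abs_le (x ⬝ᵥ A.mulVec x)]

lemma rayleigh_lower {A : Matrix I I ℝ} {c : ℝ} (hc : c ≤ lambdaMin A)
    (x : I → ℝ) : c * ∑ i, x i ^ 2 ≤ x ⬝ᵥ A.mulVec x := by
  rcases eq_or_lt_of_le (Finset.sum_nonneg (fun i (_ : i ∈ univ) => sq_nonneg (x i)))
    with h0 | h0
  · have hx0 : ∀ i, x i = 0 := by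
      intro i
      have := (Finset.sum_eq_zero_iff_of_nonneg
        (fun i (_ : i ∈ univ) => sq_nonneg (x i))).mp h0.symm i (mem_univ i)
      exact pow_eq_zero_iff (two_ne_zero) |>.mp this
    have : x ⬝ᵥ A.mulVec x = 0 := by
      unfold dotProduct
      exact Finset.sum_eq_zero fun i _ => by rw [hx0 i, zero_mul]
    rw [this, ← h0, mul_zero]
  · set t2 := ∑ i, x i ^ 2 with ht2
    set u : I → ℝ := fun i => x i / Real.sqrt t2 with hu
    have hst : Real.sqrt t2 > 0 := Real.sqrt_pos.mpr h0
    have hu1 : ∑ i, u i ^ 2 = 1 := by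
      simp only [hu, div_pow, Real.sq_sqrt h0.le]
      rw [← Finset.sum_div, ← ht2, div_self h0.ne']
    have huval : u ⬝ᵥ A.mulVec u = (x ⬝ᵥ A.mulVec x) / t2 := by
      have hux : u = (Real.sqrt t2)⁻¹ • x := by
        funext i; simp [hu, div_eq_inv_mul]
      rw [hux, Matrix.mulVec_smul, smul_dotProduct, dotProduct_smul,
        smul_eq_mul, smul_eq_mul]
      rw [← mul_assoc, ← Real.sqrt_inv]
      have : Real.sqrt t2⁻¹ * Real.sqrt t2⁻¹ = t2⁻¹ :=
        Real.mul_self_sqrt (inv_nonneg.mpr h0.le)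
      rw [this, div_eq_inv_mul]
    have hmem : u ⬝ᵥ A.mulVec u ∈
        { r : ℝ | ∃ y : I → ℝ, ∑ i, (y i) ^ 2 = 1 ∧ r = y ⬝ᵥ A.mulVec y } :=
      ⟨u, hu1, rfl⟩
    have hle : lambdaMin A ≤ u ⬝ᵥ A.mulVec u := csInf_le (rq_bddBelow A) hmem
    have : c ≤ (x ⬝ᵥ A.mulVec x) / t2 := by rw [← huval]; exact hc.trans hle
    calc c * t2 ≤ ((x ⬝ᵥ A.mulVec x) / t2) * t2 :=
          mul_le_mul_of_nonneg_right this h0.le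
      _ = x ⬝ᵥ A.mulVec x := div_mul_cancel₀ _ h0.ne'

lemma opb_inv [DecidableEq I] {A : Matrix I I ℝ} {c : ℝ} (hA : IsUnit A) (hc : 0 < c)
    (hl : c ≤ lambdaMin A) : OpB A⁻¹ (1 / c) := by
  intro x
  set y := A⁻¹.mulVec x with hy
  have hAd : IsUnit A.det := (Matrix.isUnit_iff_isUnit_det _).mp hA
  have hAy : A.mulVec y = x := by
    rw [hy, Matrix.mulVec_mulVec, Matrix.mul_nonsing_inv _ hAd, Matrix.one_mulVec]
  have h1 : c * (vnorm y ^ 2) ≤ y ⬝ᵥ A.mulVec y := by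
    rw [sq_vnorm]; exact rayleigh_lower hl y
  have h2 : y ⬝ᵥ A.mulVec y ≤ vnorm y * vnorm x := by
    rw [hAy]
    unfold dotProduct
    calc ∑ i, y i * x i ≤
        Real.sqrt (∑ i, y i ^ 2) * Real.sqrt (∑ i, x i ^ 2) :=
          Real.sum_mul_le_sqrt_mul_sqrt univ _ _
      _ = vnorm y * vnorm x := rfl
  rcases eq_or_lt_of_le (vnorm_nonneg y) with h0 | h0
  · rw [← h0]
    exact mul_nonneg (by positivity) (vnorm_nonneg x)
  · rw [div_mul_eq_mul_div, one_mul, le_div_iff₀ hc]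
    nlinarith

lemma opb_of_hermitian {A : Matrix I I ℝ} (hA : A.IsHermitian) :
    OpB A (matInfNorm A) := by
  intro x
  set N := matInfNorm A with hN
  have hN0 : 0 ≤ N := matInfNorm_nonneg A
  have hsym : ∀ i j, A j i = A i j := by
    intro i j
    have := congrFun (congrFun hA i) j
    rwa [Matrix.conjTranspose_apply, star_trivial] at this
  have key : ∑ i, (A.mulVec x i) ^ 2 ≤ N ^ 2 * ∑ j, x j ^ 2 := by
    have perrow : ∀ i, (A.mulVec x i) ^ 2 ≤
        (∑ j, |A i j|) * (∑ j, |A i j| * x j ^ 2) := by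
      intro i
      have habs : |A.mulVec x i| ≤ ∑ j, |A i j| * |x j| := by
        unfold Matrix.mulVec dotProduct
        refine (Finset.abs_sum_le_sum_abs _ _).trans (sum_le_sum fun j _ => ?_)
        rw [abs_mul]
      have hcs : ∑ j, |A i j| * |x j| ≤
          Real.sqrt (∑ j, |A i j|) * Real.sqrt (∑ j, |A i j| * x j ^ 2) := by
        have : ∀ j, |A i j| * |x j| =
            Real.sqrt (|A i j|) * Real.sqrt (|A i j| * x j ^ 2) := by
          intro j
          rw [Real.sqrt_mul (abs_nonneg _), Real.sqrt_sq_eq_abs]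
          rw [← mul_assoc, Real.mul_self_sqrt (abs_nonneg _)]
        rw [Finset.sum_congr rfl fun j _ => this j]
        exact Real.sum_sqrt_mul_sqrt_le univ (fun j => abs_nonneg _)
          (fun j => mul_nonneg (abs_nonneg _) (sq_nonneg _))
      have h1 : |A.mulVec x i| ^ 2 ≤
          (Real.sqrt (∑ j, |A i j|) * Real.sqrt (∑ j, |A i j| * x j ^ 2)) ^ 2 := by
        apply pow_le_pow_left₀ (abs_nonneg _) (habs.trans hcs)
      rw [mul_pow, Real.sq_sqrt (Finset.sum_nonneg fun _ _ => abs_nonneg _),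
        Real.sq_sqrt (Finset.sum_nonneg fun _ _ =>
          mul_nonneg (abs_nonneg _) (sq_nonneg _)), sq_abs] at h1
      exact h1
    calc ∑ i, (A.mulVec x i) ^ 2
        ≤ ∑ i, (∑ j, |A i j|) * (∑ j, |A i j| * x j ^ 2) :=
          sum_le_sum fun i _ => perrow i
      _ ≤ ∑ i, N * (∑ j, |A i j| * x j ^ 2) :=
          sum_le_sum fun i _ => mul_le_mul_of_nonneg_right (rowsum_le A i)
            (Finset.sum_nonneg fun _ _ => mul_nonneg (abs_nonneg _) (sq_nonneg _))
      _ = N * ∑ j, (∑ i, |A i j|) * x j ^ 2 := by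
          rw [← Finset.mul_sum, Finset.sum_comm]
          congr 1
          exact Finset.sum_congr rfl fun j _ => by rw [Finset.sum_mul]
      _ ≤ N * ∑ j, N * x j ^ 2 := by
          refine mul_le_mul_of_nonneg_left (sum_le_sum fun j _ => ?_) hN0
          refine mul_le_mul_of_nonneg_right ?_ (sq_nonneg _)
          calc ∑ i, |A i j| = ∑ i, |A j i| :=
                Finset.sum_congr rfl fun i _ => by rw [hsym j i]
            _ ≤ N := rowsum_le A j
      _ = N ^ 2 * ∑ j, x j ^ 2 := by rw [← Finset.mul_sum]; ring
  unfold vnorm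
  calc Real.sqrt (∑ i, (A.mulVec x i) ^ 2) ≤
        Real.sqrt (N ^ 2 * ∑ j, x j ^ 2) := Real.sqrt_le_sqrt key
    _ = N * Real.sqrt (∑ j, x j ^ 2) := by
        rw [Real.sqrt_mul (sq_nonneg _), Real.sqrt_sq hN0]

lemma matInv_sub_inv [DecidableEq I] {A B : Matrix I I ℝ} (hA : IsUnit A) (hB : IsUnit B) :
    A⁻¹ - B⁻¹ = B⁻¹ * (B - A) * A⁻¹ := by
  have hA' := (Matrix.isUnit_iff_isUnit_det _).mp hA
  have hB' := (Matrix.isUnit_iff_isUnit_det _).mp hB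
  rw [Matrix.mul_sub, Matrix.nonsing_inv_mul _ hB', Matrix.sub_mul, Matrix.one_mul,
    Matrix.mul_assoc, Matrix.mul_nonsing_inv _ hA', Matrix.mul_one]

end helpers

theorem stmt9 {p k : ℕ} (Qh Q0 : Matrix (Fin p) (Fin p) ℝ)
    (S : Finset (Fin p)) (hSne : S.Nonempty)
    (hQhinv : IsUnit (subm Qh S S)) (hQ0inv : IsUnit (subm Q0 S S))
    (T1 T2 T3 : Matrix ↥Sᶜ ↥S ℝ)
    (hT1 : T1 = subm Q0 Sᶜ S * ((subm Qh S S)⁻¹ - (subm Q0 S S)⁻¹))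
    (hT2 : T2 = (subm Qh Sᶜ S - subm Q0 Sᶜ S) * (subm Q0 S S)⁻¹)
    (hT3 : T3 = (subm Qh Sᶜ S - subm Q0 Sᶜ S) * ((subm Qh S S)⁻¹ - (subm Q0 S S)⁻¹)) :
    subm Qh Sᶜ S * (subm Qh S S)⁻¹
      = T1 + T2 + T3 + subm Q0 Sᶜ S * (subm Q0 S S)⁻¹ ∧
    (S.card ≤ k →
      matInfNorm (subm Q0 Sᶜ S * (subm Q0 S S)⁻¹) < 1 →
      (subm Qh S S).IsHermitian → (subm Q0 S S).IsHermitian →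
      ∀ Cmin : ℝ, 0 < Cmin →
        Cmin / 2 ≤ lambdaMin (subm Qh S S) →
        Cmin ≤ lambdaMin (subm Q0 S S) →
        matInfNorm T1 ≤ (2 * Real.sqrt k / Cmin) * matInfNorm (subm Qh S S - subm Q0 S S) ∧
        matInfNorm T2 ≤ (Real.sqrt k / Cmin) * matInfNorm (subm Qh Sᶜ S - subm Q0 Sᶜ S) ∧
        matInfNorm T3 ≤ (2 * Real.sqrt k / Cmin ^ 2)
          * matInfNorm (subm Qh Sᶜ S - subm Q0 Sᶜ S)
          * matInfNorm (subm Qh S S - subm Q0 S S)) := by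
  constructor
  · subst hT1 hT2 hT3
    rw [Matrix.mul_sub, Matrix.sub_mul, Matrix.sub_mul, Matrix.mul_sub, Matrix.mul_sub]
    abel
  · intro hk h01 hQhH hQ0H c hc hlh hl0
    set A := subm Qh S S with hA
    set B := subm Q0 S S with hB
    set Asc := subm Qh Sᶜ S with hAsc
    set Bsc := subm Q0 Sᶜ S with hBsc
    have hcard : Real.sqrt (Fintype.card ↥S) ≤ Real.sqrt k := by
      apply Real.sqrt_le_sqrt
      have h1 : Fintype.card ↥S ≤ k := by rwa [Fintype.card_coe]
      exact_mod_cast h1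
    have hsk : 0 ≤ Real.sqrt (k : ℝ) := Real.sqrt_nonneg _
    have opA : OpB A⁻¹ (2 / c) := by
      have h := opb_inv hQhinv (by positivity : (0:ℝ) < c / 2) hlh
      rwa [one_div_div] at h
    have opB : OpB B⁻¹ (1 / c) := opb_inv hQ0inv hc hl0
    have hAinf : matInfNorm A⁻¹ ≤ Real.sqrt k * (2 / c) :=
      (matInfNorm_le_of_opb (by positivity) opA).trans
        (mul_le_mul_of_nonneg_right hcard (by positivity))
    have hBinf : matInfNorm B⁻¹ ≤ Real.sqrt k * (1 / c) :=
      (matInfNorm_le_of_opb (by positivity) opB).trans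
        (mul_le_mul_of_nonneg_right hcard (by positivity))
    have hdiffeq : A⁻¹ - B⁻¹ = B⁻¹ * (B - A) * A⁻¹ := matInv_sub_inv hQhinv hQ0inv
    have hDher : (B - A).IsHermitian := hQ0H.sub hQhH
    have opD : OpB (B - A) (matInfNorm (B - A)) := opb_of_hermitian hDher
    have opdiff : OpB (B⁻¹ * (B - A) * A⁻¹)
        (1 / c * matInfNorm (B - A) * (2 / c)) :=
      opb_mul (mul_nonneg (by positivity) (matInfNorm_nonneg _))
        (opb_mul (by positivity) opB opD) opA
    have hdiffnorm : matInfNorm (A⁻¹ - B⁻¹) ≤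
        Real.sqrt k * (1 / c * matInfNorm (B - A) * (2 / c)) := by
      rw [hdiffeq]
      refine (matInfNorm_le_of_opb ?_ opdiff).trans
        (mul_le_mul_of_nonneg_right hcard ?_) <;>
        exact mul_nonneg (mul_nonneg (by positivity) (matInfNorm_nonneg _)) (by positivity)
    have hBAcomm : matInfNorm (B - A) = matInfNorm (A - B) := matInfNorm_sub_comm _ _
    have hdsc0 : 0 ≤ matInfNorm (Asc - Bsc) := matInfNorm_nonneg _
    refine ⟨?_, ?_, ?_⟩
    · rw [hT1, hdiffeq, ← Matrix.mul_assoc, ← Matrix.mul_assoc]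
      calc matInfNorm (Bsc * B⁻¹ * (B - A) * A⁻¹)
          ≤ matInfNorm (Bsc * B⁻¹ * (B - A)) * matInfNorm A⁻¹ :=
            matInfNorm_mul_le _ _
        _ ≤ matInfNorm (Bsc * B⁻¹) * matInfNorm (B - A) * matInfNorm A⁻¹ :=
            mul_le_mul_of_nonneg_right (matInfNorm_mul_le _ _) (matInfNorm_nonneg _)
        _ ≤ 1 * matInfNorm (B - A) * (Real.sqrt k * (2 / c)) := by
            refine mul_le_mul ?_ hAinf (matInfNorm_nonneg _) (mul_nonneg zero_le_one (matInfNorm_nonneg _))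
            exact mul_le_mul_of_nonneg_right h01.le (matInfNorm_nonneg _)
        _ = 2 * Real.sqrt k / c * matInfNorm (A - B) := by rw [hBAcomm]; ring
    · rw [hT2]
      calc matInfNorm ((Asc - Bsc) * B⁻¹)
          ≤ matInfNorm (Asc - Bsc) * matInfNorm B⁻¹ := matInfNorm_mul_le _ _
        _ ≤ matInfNorm (Asc - Bsc) * (Real.sqrt k * (1 / c)) :=
            mul_le_mul_of_nonneg_left hBinf hdsc0
        _ = Real.sqrt k / c * matInfNorm (Asc - Bsc) := by ring
    · rw [hT3]
      calc matInfNorm ((Asc - Bsc) * (A⁻¹ - B⁻¹))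
          ≤ matInfNorm (Asc - Bsc) * matInfNorm (A⁻¹ - B⁻¹) := matInfNorm_mul_le _ _
        _ ≤ matInfNorm (Asc - Bsc) *
            (Real.sqrt k * (1 / c * matInfNorm (B - A) * (2 / c))) :=
            mul_le_mul_of_nonneg_left hdiffnorm hdsc0
        _ = 2 * Real.sqrt k / c ^ 2 * matInfNorm (Asc - Bsc) * matInfNorm (A - B) := by
            rw [hBAcomm]; ring
end

section
/- Let θ* ∈ ℝ^p be nonzero with support S := supp(θ*), k := |S|, θmin := min_{j∈S} |θ*_j|. Let Q̂ ∈ ℝ^{p×p} be symmetric with Q̂_{S,S} positive definite, let Ĝ ∈ ℝ^p, λ > 0. Suppose θ̂ ∈ ℝ^p satisfies supp(θ̂) ⊆ S and there exists ẑ ∈ ℝ^p with ‖ẑ‖∞ ≤ 1 and ẑ_j = sign(θ̂_j) whenever θ̂_j ≠ 0 such that the stationarity condition Q̂(θ̂ − θ*) − Ĝ + λẑ = 0 holds. Then (a) ‖ẑ_{S^c}‖∞ ≤ ‖Q̂_{S^c,S}(Q̂_{S,S})⁻¹‖∞·(1 + ‖Ĝ_S‖∞/λ) + ‖Ĝ_{S^c}‖∞/λ;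 and (b) if in addition ‖Ĝ_S‖∞ ≤ θmin·λmin(Q̂_{S,S})/(2k) − λ, then ‖θ* − θ̂‖∞ ≤ θmin/2. -/
open scoped Matrix

lemma lambdaMin_mul_le {I : Type*} [Fintype I] (A : Matrix I I ℝ) (hpd : A.PosDef)
    (x : I → ℝ) : lambdaMin A * (∑ i, (x i) ^ 2) ≤ x ⬝ᵥ A.mulVec x := by
  set T := ∑ i, (x i) ^ 2 with hT
  have hT0 : 0 ≤ T := Finset.sum_nonneg fun i _ => sq_nonneg _
  rcases eq_or_lt_of_le hT0 with h0 | hpos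
  · have hx0 : x = 0 := by
      funext i
      have := (Finset.sum_eq_zero_iff_of_nonneg (fun i _ => sq_nonneg (x i))).mp h0.symm i
        (Finset.mem_univ i)
      exact pow_eq_zero_iff (two_ne_zero) |>.mp this
    simp [hx0, ← h0]
  · have hsne : Real.sqrt T ≠ 0 := (Real.sqrt_pos.mpr hpos).ne'
    set u : I → ℝ := fun i => x i / Real.sqrt T with hu
    have hu1 : ∑ i, (u i) ^ 2 = 1 := by
      simp only [hu, div_pow, Real.sq_sqrt hT0]
      rw [← Finset.sum_div, ← hT, div_self hpos.ne']
    have hbdd : BddBelow { r : ℝ | ∃ y : I → ℝ, ∑ i, (y i) ^ 2 = 1 ∧ r = y ⬝ᵥ A.mulVec y } := by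
      refine ⟨0, fun r hr => ?_⟩
      obtain ⟨y, hy1, rfl⟩ := hr
      have hy0 : y ≠ 0 := by
        intro h; rw [h] at hy1; simp at hy1
      simpa using (hpd.dotProduct_mulVec_pos hy0).le
    have h1 : lambdaMin A ≤ u ⬝ᵥ A.mulVec u :=
      csInf_le hbdd ⟨u, hu1, rfl⟩
    have huu : u = (Real.sqrt T)⁻¹ • x := by
      funext i; simp [hu, div_eq_inv_mul]
    have h2 : u ⬝ᵥ A.mulVec u = (x ⬝ᵥ A.mulVec x) / T := by
      rw [huu, Matrix.mulVec_smul, smul_dotProduct, dotProduct_smul,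
        smul_eq_mul, smul_eq_mul, ← mul_assoc, ← mul_inv, Real.mul_self_sqrt hT0,
        div_eq_inv_mul]
    rw [h2] at h1
    have := (le_div_iff₀ hpos).mp h1
    linarith

theorem stmt10 {p : ℕ} (θstar : Fin p → ℝ) (hne : θstar ≠ 0)
    (S : Finset (Fin p)) (hS : ∀ j, j ∈ S ↔ θstar j ≠ 0)
    (θmin : ℝ) (hθmin : θmin = ⨅ j : S, |θstar j|)
    (Qh : Matrix (Fin p) (Fin p) ℝ) (hQhsym : Qh.IsHermitian)
    (hpd : (subm Qh S S).PosDef)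
    (Gh : Fin p → ℝ) (lam : ℝ) (hlam : 0 < lam)
    (θh : Fin p → ℝ) (hsupp : ∀ j, θh j ≠ 0 → j ∈ S)
    (z : Fin p → ℝ) (hz1 : ∀ j, |z j| ≤ 1)
    (hz2 : ∀ j, θh j ≠ 0 → z j = Real.sign (θh j))
    (hstat : ∀ i, Qh.mulVec (θh - θstar) i - Gh i + lam * z i = 0) :
    (∀ j ∈ Sᶜ, |z j|
        ≤ matInfNorm (subm Qh Sᶜ S * (subm Qh S S)⁻¹)
            * (1 + (⨆ j : S, |Gh j|) / lam)
          + (⨆ j : ↥Sᶜ, |Gh j|) / lam) ∧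
    ((∀ j ∈ S, |Gh j| ≤ θmin * lambdaMin (subm Qh S S) / (2 * S.card) - lam) →
      ∀ j, |θstar j - θh j| ≤ θmin / 2) := by
  classical
  obtain ⟨j0, hj0⟩ : ∃ j, θstar j ≠ 0 := by
    by_contra h; push_neg at h; exact hne (funext h)
  have hj0S : j0 ∈ S := (hS j0).mpr hj0
  haveI hSne : Nonempty S := ⟨⟨j0, hj0S⟩⟩
  set Δ : Fin p → ℝ := θh - θstar with hΔ
  have hΔ0 : ∀ j ∉ S, Δ j = 0 := by
    intro j hj
    have h1 : θh j = 0 := by by_contra h; exact hj (hsupp j h)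
    have h2 : θstar j = 0 := by by_contra h; exact hj ((hS j).mpr h)
    simp [hΔ, h1, h2]
  have hstat' : ∀ i, Qh.mulVec Δ i = Gh i - lam * z i := by
    intro i; have := hstat i; linarith
  set A := subm Qh S S with hA
  set x : S → ℝ := fun i => Δ i with hx
  have key : ∀ i : Fin p, Qh.mulVec Δ i = ∑ j : S, Qh i (j : Fin p) * x j := by
    intro i
    rw [Finset.sum_coe_sort S (fun j => Qh i j * Δ j)]
    exact (Finset.sum_subset S.subset_univ (fun j _ hj => by rw [hΔ0 j hj, mul_zero])).symm
  have hAx : ∀ i : S, A.mulVec x i = Gh i - lam * z i := by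
    intro i
    rw [← hstat' i, key i]
    rfl
  have hθ0 : 0 ≤ θmin := by
    rw [hθmin]
    exact le_ciInf fun i => abs_nonneg _
  set GS := ⨆ j : S, |Gh j| with hGSdef
  have hGS : ∀ i : S, |Gh (i : Fin p)| ≤ GS := by
    intro i; rw [hGSdef]
    exact le_ciSup (f := fun j : S => |Gh (j : Fin p)|)
      (Set.Finite.bddAbove (Set.finite_range _)) i
  constructor
  · -- part (a)
    intro j hj
    haveI : Nonempty ↥Sᶜ := ⟨⟨j, hj⟩⟩
    set N := subm Qh Sᶜ S * A⁻¹ with hN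
    have hinv : A⁻¹ * A = 1 := Matrix.nonsing_inv_mul A (isUnit_iff_ne_zero.mpr hpd.det_pos.ne')
    have hNA : N * A = subm Qh Sᶜ S := by rw [hN, Matrix.mul_assoc, hinv, Matrix.mul_one]
    set w : S → ℝ := fun i => Gh i - lam * z i with hw
    have hAxw : A.mulVec x = w := funext hAx
    have heq : (subm Qh Sᶜ S).mulVec x = N.mulVec w := by
      rw [← hNA, ← Matrix.mulVec_mulVec, hAxw]
    have hb : (subm Qh Sᶜ S).mulVec x ⟨j, hj⟩ = Qh.mulVec Δ j := by
      rw [key j]; rfl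
    have hzeq : lam * z j = Gh j - N.mulVec w ⟨j, hj⟩ := by
      rw [← heq, hb, hstat' j]; ring
    have hGS0 : 0 ≤ GS := le_trans (abs_nonneg _) (hGS ⟨j0, hj0S⟩)
    have hwb : ∀ i : S, |w i| ≤ GS + lam := by
      intro i
      calc |w i| ≤ |Gh (i : Fin p)| + |lam * z i| := abs_sub _ _
        _ ≤ GS + lam * 1 := by
            rw [abs_mul, abs_of_pos hlam]
            exact add_le_add (hGS i) (mul_le_mul_of_nonneg_left (hz1 i) hlam.le)
        _ = GS + lam := by ring
    have hrow : ∑ i, |N ⟨j, hj⟩ i| ≤ matInfNorm N := by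
      show _ ≤ ⨆ i : ↥Sᶜ, ∑ k, |N i k|
      exact le_ciSup (f := fun i : ↥Sᶜ => ∑ k, |N i k|)
        (Set.Finite.bddAbove (Set.finite_range _)) _
    have hmv : |N.mulVec w ⟨j, hj⟩| ≤ matInfNorm N * (GS + lam) := by
      calc |N.mulVec w ⟨j, hj⟩| ≤ ∑ i, |N ⟨j, hj⟩ i * w i| :=
            Finset.abs_sum_le_sum_abs _ _
        _ ≤ ∑ i, |N ⟨j, hj⟩ i| * (GS + lam) := by
            refine Finset.sum_le_sum fun i _ => ?_
            rw [abs_mul]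
            exact mul_le_mul_of_nonneg_left (hwb i) (abs_nonneg _)
        _ = (∑ i, |N ⟨j, hj⟩ i|) * (GS + lam) := by rw [Finset.sum_mul]
        _ ≤ matInfNorm N * (GS + lam) :=
            mul_le_mul_of_nonneg_right hrow (by linarith)
    have hGc : |Gh j| ≤ ⨆ j : ↥Sᶜ, |Gh (j : Fin p)| :=
      le_ciSup (f := fun j : ↥Sᶜ => |Gh (j : Fin p)|)
        (Set.Finite.bddAbove (Set.finite_range _)) (⟨j, hj⟩ : ↥Sᶜ)
    have hlz : lam * |z j| ≤ matInfNorm N * (GS + lam) + (⨆ j : ↥Sᶜ, |Gh (j : Fin p)|) := by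
      have h1 : |lam * z j| ≤ |Gh j| + |N.mulVec w ⟨j, hj⟩| := by
        rw [hzeq]; exact abs_sub _ _
      rw [abs_mul, abs_of_pos hlam] at h1
      linarith
    have harith : ∀ a b c : ℝ, (a * (b + lam) + c) / lam = a * (1 + b / lam) + c / lam := by
      intro a b c
      rw [add_div, mul_div_assoc, add_div, div_self hlam.ne']
      ring
    rw [← harith]
    rw [le_div_iff₀ hlam]
    linarith
  · -- part (b)
    intro hG j
    set lmn := lambdaMin A with hlmn
    have hkpos : 0 < (S.card : ℝ) := by
      exact_mod_cast Finset.card_pos.mpr ⟨j0, hj0S⟩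
    have hGj0 := hG j0 hj0S
    rcases le_or_gt lmn 0 with hlm | hlm
    · exfalso
      have h1 : θmin * lmn ≤ 0 := mul_nonpos_of_nonneg_of_nonpos hθ0 hlm
      have h2 : θmin * lmn / (2 * (S.card : ℝ)) ≤ 0 :=
        div_nonpos_of_nonpos_of_nonneg h1 (by positivity)
      have := abs_nonneg (Gh j0)
      linarith
    · have hray := lambdaMin_mul_le A hpd x
      rw [← hlmn] at hray
      have hxAx : x ⬝ᵥ A.mulVec x = ∑ i : S, x i * (Gh (i : Fin p) - lam * z i) :=
        Finset.sum_congr rfl fun i _ => by rw [hAx i]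
      obtain ⟨i0, hi0⟩ := Finite.exists_max fun i : S => |x i|
      set M := |x i0| with hM
      have hM0 : 0 ≤ M := abs_nonneg _
      set W := θmin * lmn / (2 * (S.card : ℝ)) with hW
      have hWb : ∀ i : S, |Gh (i : Fin p) - lam * z i| ≤ W := by
        intro i
        calc |Gh (i : Fin p) - lam * z i| ≤ |Gh (i : Fin p)| + |lam * z i| := abs_sub _ _
          _ ≤ (W - lam) + lam * 1 := by
              rw [abs_mul, abs_of_pos hlam]
              exact add_le_add (hG i i.2) (mul_le_mul_of_nonneg_left (hz1 i) hlam.le)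
          _ = W := by ring
      have hW0 : 0 ≤ W := le_trans (abs_nonneg _) (hWb ⟨j0, hj0S⟩)
      have hsum : x ⬝ᵥ A.mulVec x ≤ (S.card : ℝ) * (M * W) := by
        rw [hxAx]
        calc ∑ i : S, x i * (Gh (i : Fin p) - lam * z i)
            ≤ ∑ i : S, |x i * (Gh (i : Fin p) - lam * z i)| :=
              Finset.sum_le_sum fun i _ => le_abs_self _
          _ ≤ ∑ _i : S, M * W := by
              refine Finset.sum_le_sum fun i _ => ?_
              rw [abs_mul]
              exact mul_le_mul (hi0 i) (hWb i) (abs_nonneg _) hM0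
          _ = (S.card : ℝ) * (M * W) := by
              rw [Finset.sum_const, Finset.card_univ, Fintype.card_coe, nsmul_eq_mul]
      have hM2 : M ^ 2 ≤ ∑ i, (x i) ^ 2 := by
        calc M ^ 2 = (x i0) ^ 2 := sq_abs _
          _ ≤ ∑ i, (x i) ^ 2 := Finset.single_le_sum (f := fun i : S => (x i) ^ 2)
              (fun i _ => sq_nonneg _) (Finset.mem_univ i0)
      have hWcard : (S.card : ℝ) * W = θmin * lmn / 2 := by
        rw [hW]; field_simp
      have hfinal : lmn * M ^ 2 ≤ θmin * lmn / 2 * M := by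
        have h1 : lmn * M ^ 2 ≤ lmn * (∑ i, (x i) ^ 2) :=
          mul_le_mul_of_nonneg_left hM2 hlm.le
        have h2 : (S.card : ℝ) * (M * W) = θmin * lmn / 2 * M := by
          rw [← hWcard]; ring
        linarith
      have hMle : M ≤ θmin / 2 := by
        by_contra hcon
        push_neg at hcon
        have hMpos : 0 < M := lt_of_le_of_lt (by linarith) hcon
        have hlt : lmn * M * (θmin / 2) < lmn * M * M :=
          mul_lt_mul_of_pos_left hcon (mul_pos hlm hMpos)
        nlinarith [hlt, hfinal]
      by_cases hjS : j ∈ S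
      · have hxj : |θstar j - θh j| = |x ⟨j, hjS⟩| := by
          show |θstar j - θh j| = |Δ j|
          rw [hΔ]
          simp [abs_sub_comm]
        rw [hxj]
        exact le_trans (hi0 ⟨j, hjS⟩) hMle
      · have h0 := hΔ0 j hjS
        have : θstar j - θh j = 0 := by
          have : θh j - θstar j = 0 := h0
          linarith
        rw [this, abs_zero]
        linarith
end

section
/- Let Θ ∈ ℝ^{p×p}, η > 0, and set ρ := I + ηΘ. If σmax(ρ) < 1, then the series Q := η·Σ_{l=0}^∞ ρ^l (ρᵀ)^l converges and its sum satisfies the modified Lyapunov equation ΘQ + QΘᵀ + ηΘQΘᵀ + I = 0. -/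
open scoped Matrix

section Aux

open scoped Matrix.Norms.L2Operator

variable {p : ℕ}

/-- Euclidean length of a plain vector. -/
private noncomputable def n2 (x : Fin p → ℝ) : ℝ := Real.sqrt (∑ i, (x i) ^ 2)

private lemma n2_nonneg (x : Fin p → ℝ) : 0 ≤ n2 x := Real.sqrt_nonneg _

private lemma enorm_eq (x : Fin p → ℝ) :
    ‖(WithLp.equiv 2 (Fin p → ℝ)).symm x‖ = n2 x := by
  rw [EuclideanSpace.norm_eq]
  simp [n2, Real.norm_eq_abs, sq_abs]

private lemma n2_smul (c : ℝ) (x : Fin p → ℝ) : n2 (c • x) = |c| * n2 x := by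
  simp only [n2, Pi.smul_apply, smul_eq_mul, mul_pow, ← Finset.mul_sum]
  rw [Real.sqrt_mul (sq_nonneg c), Real.sqrt_sq_eq_abs]

private lemma mulVec_n2_le (A : Matrix (Fin p) (Fin p) ℝ) (x : Fin p → ℝ) :
    n2 (A.mulVec x) ≤ ‖A‖ * n2 x := by
  have h : ‖(WithLp.equiv 2 (Fin p → ℝ)).symm (A.mulVec x)‖
      ≤ ‖A‖ * ‖(WithLp.equiv 2 (Fin p → ℝ)).symm x‖ :=
    A.l2_opNorm_mulVec ((WithLp.equiv 2 (Fin p → ℝ)).symm x)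
  rwa [enorm_eq, enorm_eq] at h

private lemma sigma_bddAbove (A : Matrix (Fin p) (Fin p) ℝ) :
    BddAbove { r : ℝ | ∃ x : Fin p → ℝ, ∑ j, (x j) ^ 2 = 1 ∧
      r = Real.sqrt (∑ i, (A.mulVec x i) ^ 2) } := by
  refine ⟨‖A‖, ?_⟩
  rintro r ⟨x, hx, rfl⟩
  have hx1 : n2 x = 1 := by simp [n2, hx]
  have := mulVec_n2_le A x
  rw [hx1, mul_one] at this
  exact this

private lemma sigma_nonneg (hp : 0 < p) (A : Matrix (Fin p) (Fin p) ℝ) :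
    0 ≤ sigmaMax A := by
  have hmem : Real.sqrt (∑ i, (A.mulVec (Pi.single (⟨0, hp⟩ : Fin p) 1) i) ^ 2) ∈
      { r : ℝ | ∃ x : Fin p → ℝ, ∑ j, (x j) ^ 2 = 1 ∧
        r = Real.sqrt (∑ i, (A.mulVec x i) ^ 2) } := by
    refine ⟨Pi.single (⟨0, hp⟩ : Fin p) 1, ?_, rfl⟩
    simp [Pi.single_apply]
  exact le_trans (Real.sqrt_nonneg _) (le_csSup (sigma_bddAbove A) hmem)

private lemma mulVec_le_sigma (hp : 0 < p) (A : Matrix (Fin p) (Fin p) ℝ) (x : Fin p → ℝ) :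
    n2 (A.mulVec x) ≤ sigmaMax A * n2 x := by
  rcases eq_or_ne (n2 x) 0 with h0 | h0
  · have hx0 : x = 0 := by
      have hsum : ∑ i, (x i) ^ 2 = 0 := by
        have := Real.sqrt_eq_zero (by positivity) |>.mp h0
        exact this
      funext i
      have := (Finset.sum_eq_zero_iff_of_nonneg (fun j _ => sq_nonneg (x j))).mp hsum i
        (Finset.mem_univ i)
      exact pow_eq_zero_iff (two_ne_zero) |>.mp this
    subst hx0
    simp [n2, Matrix.mulVec_zero]
  · have hpos : 0 < n2 x := lt_of_le_of_ne (n2_nonneg x) (Ne.symm h0)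
    set u : Fin p → ℝ := (n2 x)⁻¹ • x with hu
    have hsumx : ∑ j, (x j) ^ 2 = (n2 x) ^ 2 := by
      rw [n2, Real.sq_sqrt (by positivity)]
    have hunit : ∑ j, (u j) ^ 2 = 1 := by
      simp only [hu, Pi.smul_apply, smul_eq_mul, mul_pow, ← Finset.mul_sum, hsumx]
      field_simp
    have hmem : Real.sqrt (∑ i, (A.mulVec u i) ^ 2) ∈
        { r : ℝ | ∃ y : Fin p → ℝ, ∑ j, (y j) ^ 2 = 1 ∧
          r = Real.sqrt (∑ i, (A.mulVec y i) ^ 2) } := ⟨u, hunit, rfl⟩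
    have hle : n2 (A.mulVec u) ≤ sigmaMax A := le_csSup (sigma_bddAbove A) hmem
    have hmv : A.mulVec u = (n2 x)⁻¹ • A.mulVec x := by
      rw [hu, Matrix.mulVec_smul]
    rw [hmv, n2_smul, abs_of_pos (inv_pos.mpr hpos)] at hle
    calc n2 (A.mulVec x) = n2 x * ((n2 x)⁻¹ * n2 (A.mulVec x)) := by
          field_simp
      _ ≤ n2 x * sigmaMax A := by
          exact mul_le_mul_of_nonneg_left hle (le_of_lt hpos)
      _ = sigmaMax A * n2 x := mul_comm _ _

private lemma opNorm_le_sigma (hp : 0 < p) (A : Matrix (Fin p) (Fin p) ℝ) :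
    ‖A‖ ≤ sigmaMax A := by
  rw [Matrix.l2_opNorm_def]
  refine ContinuousLinearMap.opNorm_le_bound _ (sigma_nonneg hp A) fun x => ?_
  have hx : x = (WithLp.equiv 2 (Fin p → ℝ)).symm (WithLp.equiv 2 (Fin p → ℝ) x) := rfl
  set y : Fin p → ℝ := WithLp.equiv 2 (Fin p → ℝ) x with hy
  have h1 : ‖(Matrix.toEuclideanLin (𝕜 := ℝ) (m := Fin p) (n := Fin p)).trans
      LinearMap.toContinuousLinearMap A x‖ = n2 (A.mulVec y) := by
    rw [hx]
    exact enorm_eq _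
  have h2 : ‖x‖ = n2 y := by rw [hx]; exact enorm_eq _
  rw [h1, h2]
  exact mulVec_le_sigma hp A y

private lemma entry_le_norm (M : Matrix (Fin p) (Fin p) ℝ) (i j : Fin p) :
    |M i j| ≤ ‖M‖ := by
  have h1 : M i j = M.mulVec (Pi.single j 1) i := by
    simp [Matrix.mulVec_single]
  have h2 : |M.mulVec (Pi.single j 1) i| ≤ n2 (M.mulVec (Pi.single j 1)) := by
    rw [n2, ← Real.sqrt_sq_eq_abs]
    exact Real.sqrt_le_sqrt (Finset.single_le_sum
      (fun k _ => sq_nonneg (M.mulVec (Pi.single j 1) k)) (Finset.mem_univ i))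
  have h3 : n2 (Pi.single j (1:ℝ)) = 1 := by
    simp [n2, Pi.single_apply]
  calc |M i j| ≤ n2 (M.mulVec (Pi.single j 1)) := by rw [h1]; exact h2
    _ ≤ ‖M‖ * n2 (Pi.single j 1) := mulVec_n2_le M _
    _ = ‖M‖ := by rw [h3, mul_one]

private lemma entry_summable (hp : 0 < p) (ρ : Matrix (Fin p) (Fin p) ℝ)
    (hσ : sigmaMax ρ < 1) (i j : Fin p) :
    Summable (fun l : ℕ => (ρ ^ l * (ρᵀ) ^ l) i j) := by
  have hρn : ‖ρ‖ < 1 := lt_of_le_of_lt (opNorm_le_sigma hp ρ) hσ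
  have hρt : ρᵀ = ρᴴ := by
    ext a b; simp [Matrix.conjTranspose_apply]
  have hbound : ∀ l : ℕ, ‖(ρ ^ l * (ρᵀ) ^ l) i j‖ ≤ (‖ρ‖ ^ 2) ^ l := by
    intro l
    rcases Nat.eq_zero_or_pos l with hl | hl
    · subst hl
      simp only [pow_zero, one_mul, Real.norm_eq_abs]
      rw [Matrix.one_apply]
      split <;> simp
    · have h1 : |(ρ ^ l * (ρᵀ) ^ l) i j| ≤ ‖ρ ^ l * (ρᵀ) ^ l‖ := entry_le_norm _ i j
      have h2 : ‖ρ ^ l * (ρᵀ) ^ l‖ ≤ ‖ρ ^ l‖ * ‖(ρᵀ) ^ l‖ := norm_mul_le _ _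
      have h3 : ‖ρ ^ l‖ ≤ ‖ρ‖ ^ l := norm_pow_le' ρ hl
      have h4 : ‖(ρᵀ) ^ l‖ ≤ ‖ρᵀ‖ ^ l := norm_pow_le' _ hl
      have h5 : ‖ρᵀ‖ = ‖ρ‖ := by rw [hρt]; exact Matrix.l2_opNorm_conjTranspose ρ
      rw [Real.norm_eq_abs]
      calc |(ρ ^ l * (ρᵀ) ^ l) i j| ≤ ‖ρ ^ l‖ * ‖(ρᵀ) ^ l‖ := le_trans h1 h2
        _ ≤ ‖ρ‖ ^ l * ‖ρ‖ ^ l := by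
            apply mul_le_mul h3 (by rw [← h5]; exact h4) (norm_nonneg _)
            positivity
        _ = (‖ρ‖ ^ 2) ^ l := by ring
  have hgeo : Summable (fun l : ℕ => (‖ρ‖ ^ 2) ^ l) := by
    apply summable_geometric_of_lt_one (by positivity)
    nlinarith [norm_nonneg ρ]
  exact Summable.of_norm_bounded hgeo hbound

end Aux

theorem stmt12 {p : ℕ} (Θ : Matrix (Fin p) (Fin p) ℝ) (η : ℝ) (hη : 0 < η)
    (ρ : Matrix (Fin p) (Fin p) ℝ) (hρ : ρ = 1 + η • Θ)
    (hσ : sigmaMax ρ < 1) :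
    Summable (fun l : ℕ => ρ ^ l * (ρᵀ) ^ l) ∧
    Θ * (η • ∑' l : ℕ, ρ ^ l * (ρᵀ) ^ l)
      + (η • ∑' l : ℕ, ρ ^ l * (ρᵀ) ^ l) * Θᵀ
      + η • (Θ * (η • ∑' l : ℕ, ρ ^ l * (ρᵀ) ^ l) * Θᵀ) + 1 = 0 := by
  rcases Nat.eq_zero_or_pos p with hp | hp
  · subst hp
    constructor
    · have hz : (fun l : ℕ => ρ ^ l * (ρᵀ) ^ l) = fun _ => 0 := by
        funext l; exact Subsingleton.elim _ _
      rw [hz]; exact summable_zero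
    · exact Subsingleton.elim _ _
  · have hsum : Summable (fun l : ℕ => ρ ^ l * (ρᵀ) ^ l) := by
      refine (Pi.summable (f := fun l : ℕ => fun i j => (ρ ^ l * (ρᵀ) ^ l) i j)).mpr ?_
      intro i
      rw [Pi.summable]
      intro j
      exact entry_summable hp ρ hσ i j
    refine ⟨hsum, ?_⟩
    set S : Matrix (Fin p) (Fin p) ℝ := ∑' l : ℕ, ρ ^ l * (ρᵀ) ^ l with hS
    -- the continuous linear map M ↦ ρ * M * ρᵀ
    let φ : Matrix (Fin p) (Fin p) ℝ →L[ℝ] Matrix (Fin p) (Fin p) ℝ :=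
      { toFun := fun M => ρ * M * ρᵀ
        map_add' := fun a b => by simp [Matrix.mul_add, Matrix.add_mul]
        map_smul' := fun c M => by
          simp [Matrix.mul_smul, Matrix.smul_mul]
        cont := (continuous_const.matrix_mul continuous_id).matrix_mul continuous_const }
    have hmap : ρ * S * ρᵀ = ∑' l : ℕ, ρ * (ρ ^ l * (ρᵀ) ^ l) * ρᵀ := φ.map_tsum hsum
    have hinner : (fun l : ℕ => ρ * (ρ ^ l * (ρᵀ) ^ l) * ρᵀ)
        = fun l : ℕ => ρ ^ (l + 1) * (ρᵀ) ^ (l + 1) := by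
      funext l
      rw [pow_succ ρᵀ l, pow_succ' ρ l]
      simp only [Matrix.mul_assoc]
    have h0 : S = 1 + ∑' l : ℕ, ρ ^ (l + 1) * (ρᵀ) ^ (l + 1) := by
      have := Summable.tsum_eq_zero_add hsum
      simpa using this
    have hLyap : ρ * S * ρᵀ = S - 1 := by
      rw [hmap, hinner]
      rw [h0]
      abel
    have hρT : ρᵀ = 1 + η • Θᵀ := by
      rw [hρ]; simp
    rw [hρT, hρ] at hLyap
    have hexp : (1 + η • Θ) * S * (1 + η • Θᵀ)
        = S + (η • (Θ * S) + η • (S * Θᵀ) + η • (η • (Θ * S * Θᵀ))) := by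
      simp only [add_mul, mul_add, one_mul, mul_one, smul_mul_assoc, mul_smul_comm,
        smul_add, smul_smul, Matrix.mul_assoc]
      abel
    have key : η • (Θ * S) + η • (S * Θᵀ) + η • (η • (Θ * S * Θᵀ)) = -1 := by
      calc η • (Θ * S) + η • (S * Θᵀ) + η • (η • (Θ * S * Θᵀ))
          = (S + (η • (Θ * S) + η • (S * Θᵀ) + η • (η • (Θ * S * Θᵀ)))) - S := by abel
        _ = (S - 1) - S := by rw [← hexp, hLyap]
        _ = -1 := by abel
    simp only [mul_smul_comm, smul_mul_assoc]
    rw [key]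
    abel
end

section
/- Let k ≥ 3 be an integer and let z be a real number with z > 2√(k−1) and z ≠ k. Then ∫_{−2√(k−1)}^{2√(k−1)} (1/(z − ν)) · (k/(2π)) · √(4(k−1) − ν²)/(k² − ν²) dν = −((k−2)z − k√(z² − 4(k−1))) / (2(z² − k²)). -/
open MeasureTheory Real intervalIntegral

lemma semicircle_stieltjes (a w : ℝ) (ha : 0 < a) (hw : a < w) :
    ∫ x in (-a)..a, Real.sqrt (a ^ 2 - x ^ 2) / (w - x)
      = Real.pi * (w - Real.sqrt (w ^ 2 - a ^ 2)) := by
  have hw0 : 0 < w := ha.trans hw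
  set s := Real.sqrt (w ^ 2 - a ^ 2) with hs
  have hs2 : s ^ 2 = w ^ 2 - a ^ 2 := Real.sq_sqrt (by nlinarith)
  have hspos : 0 < s := Real.sqrt_pos.2 (by nlinarith)
  set G : ℝ → ℝ := fun x => w * Real.arcsin (x / a) - Real.sqrt (a ^ 2 - x ^ 2)
      + s * Real.arcsin ((a ^ 2 - w * x) / (a * (w - x))) with hG
  have key : ∀ x ∈ Set.Ioo (-a) a, HasDerivAt G (Real.sqrt (a ^ 2 - x ^ 2) / (w - x)) x := by
    intro x hx
    obtain ⟨hx1, hx2⟩ := hx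
    have hax : 0 < a ^ 2 - x ^ 2 := by nlinarith
    have hwx : 0 < w - x := by nlinarith
    have hQ : 0 < Real.sqrt (a ^ 2 - x ^ 2) := Real.sqrt_pos.2 hax
    have hQ2 : Real.sqrt (a ^ 2 - x ^ 2) ^ 2 = a ^ 2 - x ^ 2 := Real.sq_sqrt hax.le
    set Q := Real.sqrt (a ^ 2 - x ^ 2) with hQdef
    -- term 1 : w * arcsin (x / a)
    have h1 : HasDerivAt (fun y : ℝ => w * Real.arcsin (y / a)) (w / Q) x := by
      have hxa1 : x / a ≠ -1 := by
        intro h; rw [div_eq_iff ha.ne'] at h; nlinarith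
      have hxa2 : x / a ≠ 1 := by
        intro h; rw [div_eq_iff ha.ne'] at h; nlinarith
      have hd : HasDerivAt (fun y : ℝ => y / a) (1 / a) x := by
        simpa using (hasDerivAt_id x).div_const a
      have h := ((Real.hasDerivAt_arcsin hxa1 hxa2).comp x hd).const_mul w
      have e1 : Real.sqrt (1 - (x / a) ^ 2) = Q / a := by
        rw [show (1 : ℝ) - (x / a) ^ 2 = (a ^ 2 - x ^ 2) / a ^ 2 by field_simp,
          Real.sqrt_div hax.le, Real.sqrt_sq ha.le]
      refine h.congr_deriv ?_
      rw [e1]; field_simp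
    -- term 2 : - sqrt (a^2 - x^2)
    have h2 : HasDerivAt (fun y : ℝ => Real.sqrt (a ^ 2 - y ^ 2)) (-x / Q) x := by
      have hd : HasDerivAt (fun y : ℝ => a ^ 2 - y ^ 2) (-(2 * x)) x := by
        simpa using (hasDerivAt_pow 2 x).const_sub (a ^ 2)
      have h := (Real.hasDerivAt_sqrt hax.ne').comp x hd
      refine h.congr_deriv ?_
      field_simp [hQdef]; ring
    -- term 3 : s * arcsin v
    have hden : a * (w - x) ≠ 0 := by positivity
    set v : ℝ := (a ^ 2 - w * x) / (a * (w - x)) with hv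
    have hv2 : 1 - v ^ 2 = s ^ 2 * (a ^ 2 - x ^ 2) / (a * (w - x)) ^ 2 := by
      rw [hs2, hv]; field_simp; ring
    have hv2pos : 0 < 1 - v ^ 2 := by rw [hv2]; positivity
    have hsq : Real.sqrt (1 - v ^ 2) = s * Q / (a * (w - x)) := by
      rw [hv2, Real.sqrt_div (by positivity), Real.sqrt_sq (by positivity),
        Real.sqrt_mul (sq_nonneg s), Real.sqrt_sq hspos.le]
    have hdv : HasDerivAt (fun y : ℝ => (a ^ 2 - w * y) / (a * (w - y)))
        ((-w * (a * (w - x)) - (a ^ 2 - w * x) * (-a)) / (a * (w - x)) ^ 2) x := by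
      have hnum : HasDerivAt (fun y : ℝ => a ^ 2 - w * y) (-w) x := by
        simpa using ((hasDerivAt_id x).const_mul w).const_sub (a ^ 2)
      have hde : HasDerivAt (fun y : ℝ => a * (w - y)) (-a) x := by
        simpa using ((hasDerivAt_id x).const_sub w).const_mul a
      refine (hnum.div hde hden).congr_deriv ?_
      ring
    have hv1 : v ≠ -1 := by
      intro h
      have := hv2pos; rw [h] at this; norm_num at this
    have hv1' : v ≠ 1 := by
      intro h
      have := hv2pos; rw [h] at this; norm_num at this
    have h3 := ((Real.hasDerivAt_arcsin hv1 hv1').comp x hdv).const_mul s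
    -- assemble
    have hsum := (h1.sub h2).add h3
    refine hsum.congr_deriv ?_
    rw [hsq]
    field_simp
    linear_combination (-1 : ℝ) * hQ2
  have hcont : ContinuousOn G (Set.Icc (-a) a) := by
    apply ContinuousOn.add
    · apply ContinuousOn.sub
      · exact (continuous_const.mul (Real.continuous_arcsin.comp (continuous_id.div_const a))).continuousOn
      · exact (Real.continuous_sqrt.comp (continuous_const.sub (continuous_pow 2))).continuousOn
    · apply ContinuousOn.mul continuousOn_const
      apply Real.continuous_arcsin.comp_continuousOn
      apply ContinuousOn.div
      · fun_prop
      · fun_prop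
      · intro x hx
        have : 0 < w - x := by have := hx.2; linarith
        positivity
  have hint : IntervalIntegrable (fun x => Real.sqrt (a ^ 2 - x ^ 2) / (w - x)) volume (-a) a := by
    apply ContinuousOn.intervalIntegrable
    apply ContinuousOn.div
    · fun_prop
    · fun_prop
    · intro x hx
      rw [Set.uIcc_of_le (by linarith)] at hx
      have := hx.2
      intro h; linarith [hx.2]
  rw [integral_eq_sub_of_hasDerivAt_of_le (by linarith) hcont key hint]
  have hGa : G a = w * (Real.pi / 2) - s * (Real.pi / 2) := by
    rw [hG]
    have e1 : a / a = 1 := div_self ha.ne'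
    have e2 : a ^ 2 - a ^ 2 = 0 := by ring
    have e3 : (a ^ 2 - w * a) / (a * (w - a)) = -1 := by
      rw [div_eq_iff (ne_of_gt (by nlinarith : (0:ℝ) < a * (w - a)))]; ring
    simp only [e1, e2, e3, Real.arcsin_one, Real.arcsin_neg_one, Real.sqrt_zero]
    ring
  have hGna : G (-a) = -(w * (Real.pi / 2)) + s * (Real.pi / 2) := by
    rw [hG]
    have e1 : -a / a = -1 := by rw [neg_div, div_self ha.ne']
    have e2 : a ^ 2 - (-a) ^ 2 = 0 := by ring
    have e3 : (a ^ 2 - w * -a) / (a * (w - -a)) = 1 := by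
      rw [div_eq_iff (ne_of_gt (by nlinarith : (0:ℝ) < a * (w - -a)))]; ring
    simp only [e1, e2, e3, Real.arcsin_one, Real.arcsin_neg_one, Real.sqrt_zero]
    ring
  rw [hGa, hGna]; ring

theorem stmt13 (k : ℕ) (hk : 3 ≤ k) (z : ℝ)
    (hz : 2 * Real.sqrt ((k : ℝ) - 1) < z) (hzk : z ≠ (k : ℝ)) :
    ∫ ν in Set.Icc (-(2 * Real.sqrt ((k : ℝ) - 1))) (2 * Real.sqrt ((k : ℝ) - 1)),
        (1 / (z - ν)) * (((k : ℝ) / (2 * Real.pi))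
          * (Real.sqrt (4 * ((k : ℝ) - 1) - ν ^ 2) / ((k : ℝ) ^ 2 - ν ^ 2)))
      = -(((k : ℝ) - 2) * z - (k : ℝ) * Real.sqrt (z ^ 2 - 4 * ((k : ℝ) - 1)))
          / (2 * (z ^ 2 - (k : ℝ) ^ 2)) := by
  have hk3 : (3 : ℝ) ≤ (k : ℝ) := by exact_mod_cast hk
  set K := (k : ℝ) with hK
  have hr2 : Real.sqrt (K - 1) ^ 2 = K - 1 := Real.sq_sqrt (by linarith)
  set a := 2 * Real.sqrt (K - 1) with hadef
  have ha0 : 0 < a := by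
    have : 0 < Real.sqrt (K - 1) := Real.sqrt_pos.2 (by linarith)
    positivity
  have ha2 : a ^ 2 = 4 * (K - 1) := by rw [hadef, mul_pow, hr2]; ring
  have h1r : 1 < Real.sqrt (K - 1) := by
    nlinarith [hr2, Real.sqrt_nonneg (K - 1)]
  have haK : a < K := by nlinarith [mul_pos (sub_pos.2 h1r) (sub_pos.2 h1r), hr2]
  have hz0 : 0 < z := ha0.trans hz
  have hK0 : 0 < K := by linarith
  have hzmK : z - K ≠ 0 := sub_ne_zero.2 hzk
  have hzpK : z + K ≠ 0 := by positivity
  have hKz2 : K ^ 2 - z ^ 2 ≠ 0 := by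
    intro h
    rcases mul_eq_zero.1 (show (K - z) * (K + z) = 0 by nlinarith) with h' | h'
    · exact hzmK (by linarith)
    · exact hzpK (by linarith)
  have hpi : (2 : ℝ) * Real.pi ≠ 0 := by positivity
  -- rewrite 4*(K-1) as a^2
  simp only [← ha2]
  -- convert Icc set integral to interval integral
  rw [MeasureTheory.integral_Icc_eq_integral_Ioc,
    ← intervalIntegral.integral_of_le (by linarith : -a ≤ a)]
  -- integrability of the three pieces
  have hig : ∀ w : ℝ, a < w →
      IntervalIntegrable (fun x => Real.sqrt (a ^ 2 - x ^ 2) / (w - x)) volume (-a) a := by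
    intro w hw
    apply ContinuousOn.intervalIntegrable
    apply ContinuousOn.div
    · fun_prop
    · fun_prop
    · intro x hx
      rw [Set.uIcc_of_le (by linarith)] at hx
      intro h; have := hx.2; linarith
  have hig3 : IntervalIntegrable (fun x => Real.sqrt (a ^ 2 - x ^ 2) / (K + x)) volume (-a) a := by
    apply ContinuousOn.intervalIntegrable
    apply ContinuousOn.div
    · fun_prop
    · fun_prop
    · intro x hx
      rw [Set.uIcc_of_le (by linarith)] at hx
      intro h; have := hx.1; linarith
  -- pointwise decomposition
  have hEq : Set.EqOn
      (fun ν => (1 / (z - ν)) * (K / (2 * Real.pi)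
        * (Real.sqrt (a ^ 2 - ν ^ 2) / (K ^ 2 - ν ^ 2))))
      (fun ν => K / (2 * Real.pi) *
        ((1 / (K ^ 2 - z ^ 2)) * (Real.sqrt (a ^ 2 - ν ^ 2) / (z - ν))
          + ((1 / (2 * K * (z - K))) * (Real.sqrt (a ^ 2 - ν ^ 2) / (K - ν))
            + (1 / (2 * K * (z + K))) * (Real.sqrt (a ^ 2 - ν ^ 2) / (K + ν)))))
      (Set.uIcc (-a) a) := by
    intro ν hν
    rw [Set.uIcc_of_le (by linarith)] at hν
    obtain ⟨h1, h2⟩ := hν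
    have hzν : z - ν ≠ 0 := by intro h; linarith
    have hKν : K - ν ≠ 0 := by intro h; linarith
    have hKν' : K + ν ≠ 0 := by intro h; linarith
    have hKν2 : K ^ 2 - ν ^ 2 ≠ 0 := by
      intro h
      rcases mul_eq_zero.1 (show (K - ν) * (K + ν) = 0 by nlinarith) with h' | h'
      · exact hKν h'
      · exact hKν' h'
    field_simp
    ring
  rw [intervalIntegral.integral_congr hEq, intervalIntegral.integral_const_mul,
    intervalIntegral.integral_add ((hig z hz).const_mul _)
      (((hig K haK).const_mul _).add (hig3.const_mul _)),
    intervalIntegral.integral_add ((hig K haK).const_mul _) (hig3.const_mul _),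
    intervalIntegral.integral_const_mul, intervalIntegral.integral_const_mul,
    intervalIntegral.integral_const_mul]
  -- symmetry: the K+ν integral equals the K-ν integral
  have h3 : (∫ ν in (-a)..a, Real.sqrt (a ^ 2 - ν ^ 2) / (K + ν))
      = ∫ ν in (-a)..a, Real.sqrt (a ^ 2 - ν ^ 2) / (K - ν) := by
    have h := intervalIntegral.integral_comp_neg
      (a := -a) (b := a) (fun x => Real.sqrt (a ^ 2 - x ^ 2) / (K - x))
    simp only [neg_neg, neg_sq, sub_neg_eq_add] at h
    exact h
  rw [h3, semicircle_stieltjes a z ha0 hz, semicircle_stieltjes a K ha0 haK]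
  have hKa : Real.sqrt (K ^ 2 - a ^ 2) = K - 2 := by
    rw [ha2, show K ^ 2 - 4 * (K - 1) = (K - 2) ^ 2 by ring, Real.sqrt_sq (by linarith)]
  rw [hKa]
  have hz2K2 : z ^ 2 - K ^ 2 ≠ 0 := fun h => hKz2 (by linarith)
  field_simp
  ring
end

section
/- Let α > 0 and ρ > 0. Then ∫_{−2√α}^{2√α} (1/(ρ + 2√α − x)) · √(4α − x²)/(2πα) dx = (2√α + ρ − √(ρ·(4√α + ρ))) / (2α). -/
open MeasureTheory

lemma semicircle_integral (R z : ℝ) (hR : 0 < R) (hz : R < z) :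
    ∫ x in (-R)..R, Real.sqrt (R^2 - x^2) / (z - x)
      = Real.pi * (z - Real.sqrt (z^2 - R^2)) := by
  set s := Real.sqrt (z^2 - R^2) with hs
  have hz0 : 0 < z := hR.trans hz
  have hzR2 : 0 < z^2 - R^2 := by nlinarith
  have hs2 : s^2 = z^2 - R^2 := Real.sq_sqrt hzR2.le
  have hspos : 0 < s := Real.sqrt_pos.2 hzR2
  set F : ℝ → ℝ := fun x => z * Real.arcsin (x / R) - Real.sqrt (R^2 - x^2)
      - s * Real.arcsin ((z*x - R^2) / (R * (z - x))) with hF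
  have hab : (-R : ℝ) ≤ R := by linarith
  -- derivative on the open interval
  have hderiv : ∀ x ∈ Set.Ioo (-R) R,
      HasDerivWithinAt F (Real.sqrt (R^2 - x^2) / (z - x)) (Set.Ioi x) x := by
    intro x hx
    obtain ⟨hx1, hx2⟩ := hx
    have hRx : 0 < R^2 - x^2 := by nlinarith
    have hzx : 0 < z - x := by linarith
    set A := Real.sqrt (R^2 - x^2) with hA
    have hA2 : A^2 = R^2 - x^2 := Real.sq_sqrt hRx.le
    have hApos : 0 < A := Real.sqrt_pos.2 hRx
    -- term 1 : z * arcsin (x / R)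
    have hxR1 : x / R ≠ -1 := by
      intro h
      have : x = -R := by field_simp at h; linarith
      linarith
    have hxR2 : x / R ≠ 1 := by
      intro h
      have : x = R := by field_simp at h; linarith
      linarith
    have hsq1 : Real.sqrt (1 - (x/R)^2) = A / R := by
      rw [show (1 : ℝ) - (x/R)^2 = (R^2 - x^2) / R^2 by field_simp,
        Real.sqrt_div hRx.le, Real.sqrt_sq hR.le]
    have h1 : HasDerivAt (fun y : ℝ => Real.arcsin (y / R)) (1 / A) x := by
      have hin : HasDerivAt (fun y : ℝ => y / R) (1 / R) x := by
        simpa using (hasDerivAt_id x).div_const R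
      have := (Real.hasDerivAt_arcsin hxR1 hxR2).comp x hin
      refine this.congr_deriv (Eq.symm ?_)
      rw [hsq1]
      field_simp
    -- term 2 : sqrt (R^2 - x^2)
    have h2 : HasDerivAt (fun y : ℝ => Real.sqrt (R^2 - y^2)) (-x / A) x := by
      have hin : HasDerivAt (fun y : ℝ => R^2 - y^2) (-(2*x)) x := by
        simpa using ((hasDerivAt_pow 2 x).const_sub (R^2))
      have := (Real.hasDerivAt_sqrt hRx.ne').comp x hin
      refine this.congr_deriv (Eq.symm ?_)
      rw [← hA]
      field_simp
    -- term 3 : arcsin (u x)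
    set u : ℝ → ℝ := fun y => (z*y - R^2) / (R * (z - y)) with hu
    have hden : R * (z - x) ≠ 0 := by positivity
    have h1u : 1 - (u x)^2 = (R^2 - x^2) * (z^2 - R^2) / (R * (z - x))^2 := by
      rw [hu]
      field_simp
      ring
    have hu1 : u x ≠ -1 := by
      intro h
      have : 1 - (u x)^2 = 0 := by rw [h]; ring
      rw [h1u] at this
      have h0 : (R * (z - x))^2 > 0 := by positivity
      have := (div_eq_zero_iff.1 this).resolve_right (by positivity)
      nlinarith
    have hu2 : u x ≠ 1 := by
      intro h
      have : 1 - (u x)^2 = 0 := by rw [h]; ring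
      rw [h1u] at this
      have := (div_eq_zero_iff.1 this).resolve_right (by positivity)
      nlinarith
    have hsqu : Real.sqrt (1 - (u x)^2) = A * s / (R * (z - x)) := by
      rw [h1u, Real.sqrt_div (by positivity), Real.sqrt_mul hRx.le,
        Real.sqrt_sq (by positivity : (0:ℝ) ≤ R * (z - x)), ← hA, ← hs]
    have hud : HasDerivAt u (s^2 / (R * (z - x)^2)) x := by
      have hnum : HasDerivAt (fun y : ℝ => z*y - R^2) z x := by
        simpa using ((hasDerivAt_id x).const_mul z).sub_const (R^2)
      have hden' : HasDerivAt (fun y : ℝ => R * (z - y)) (-R) x := by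
        simpa using (((hasDerivAt_id x).const_sub z).const_mul R)
      have := hnum.div hden' hden
      refine this.congr_deriv (Eq.symm ?_)
      rw [hs2]
      field_simp
      ring
    have h3 : HasDerivAt (fun y : ℝ => Real.arcsin (u y))
        (s / ((z - x) * A)) x := by
      have := (Real.hasDerivAt_arcsin hu1 hu2).comp x hud
      refine this.congr_deriv (Eq.symm ?_)
      rw [hsqu]
      field_simp
    have hFderiv : HasDerivAt F (A / (z - x)) x := by
      have := ((h1.const_mul z).sub h2).sub (h3.const_mul s)
      refine this.congr_deriv (Eq.symm ?_)
      have hAzx : A * (z - x) ≠ 0 := by positivity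
      field_simp
      linear_combination hA2 + hs2
    exact hFderiv.hasDerivWithinAt
  -- continuity of F on the closed interval
  have hcont : ContinuousOn F (Set.Icc (-R) R) := by
    have c1 : Continuous fun y : ℝ => z * Real.arcsin (y / R) :=
      continuous_const.mul (Real.continuous_arcsin.comp (continuous_id.div_const R))
    have c2 : Continuous fun y : ℝ => Real.sqrt (R^2 - y^2) :=
      (continuous_const.sub (continuous_pow 2)).sqrt
    have c3 : ContinuousOn (fun y : ℝ => s * Real.arcsin ((z*y - R^2) / (R * (z - y))))
        (Set.Icc (-R) R) := by
      apply ContinuousOn.const_smul ?_ s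
      apply Real.continuous_arcsin.comp_continuousOn
      apply ContinuousOn.div
      · fun_prop
      · fun_prop
      · intro y hy
        have h1 : 0 < z - y := sub_pos.2 (lt_of_le_of_lt hy.2 hz)
        exact (mul_pos hR h1).ne'
    exact ((c1.continuousOn.sub c2.continuousOn).sub c3)
  -- integrability of the integrand
  have hint : IntervalIntegrable (fun x => Real.sqrt (R^2 - x^2) / (z - x))
      MeasureTheory.volume (-R) R := by
    apply ContinuousOn.intervalIntegrable
    rw [Set.uIcc_of_le hab]
    apply ContinuousOn.div
    · fun_prop
    · fun_prop
    · intro y hy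
      have : 0 < z - y := by linarith [hy.2]
      exact this.ne'
  rw [intervalIntegral.integral_eq_sub_of_hasDeriv_right_of_le hab hcont hderiv hint]
  -- evaluate F at endpoints
  have hFR : F R = z * (Real.pi/2) - s * (Real.pi/2) := by
    rw [hF]
    simp only
    rw [show R / R = 1 from div_self hR.ne', Real.arcsin_one,
      show R^2 - R^2 = 0 by ring, Real.sqrt_zero,
      show (z*R - R^2) / (R * (z - R)) = 1 by
        rw [show z*R - R^2 = R * (z - R) by ring]
        exact div_self (mul_pos hR (sub_pos.2 hz)).ne',
      Real.arcsin_one]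
    ring
  have hFnR : F (-R) = -(z * (Real.pi/2)) + s * (Real.pi/2) := by
    rw [hF]
    simp only
    rw [show (-R) / R = -1 by rw [neg_div]; rw [div_self hR.ne'],
      Real.arcsin_neg_one,
      show R^2 - (-R)^2 = 0 by ring, Real.sqrt_zero,
      show (z*(-R) - R^2) / (R * (z - (-R))) = -1 by
        rw [show z*(-R) - R^2 = -(R * (z - (-R))) by ring, neg_div]
        rw [div_self (mul_pos hR (by linarith : (0:ℝ) < z - (-R))).ne'],
      Real.arcsin_neg_one]
    ring
  rw [hFR, hFnR]
  ring

theorem stmt14 (α ρ : ℝ) (hα : 0 < α) (hρ : 0 < ρ) :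
    ∫ x in Set.Icc (-(2 * Real.sqrt α)) (2 * Real.sqrt α),
        (1 / (ρ + 2 * Real.sqrt α - x)) * (Real.sqrt (4 * α - x ^ 2) / (2 * Real.pi * α))
      = (2 * Real.sqrt α + ρ - Real.sqrt (ρ * (4 * Real.sqrt α + ρ))) / (2 * α) := by
  have hsa : 0 < Real.sqrt α := Real.sqrt_pos.2 hα
  set R := 2 * Real.sqrt α with hR
  set z := ρ + 2 * Real.sqrt α with hz
  have hR4 : R^2 = 4 * α := by
    rw [hR]; rw [mul_pow, Real.sq_sqrt hα.le]; ring
  have hRpos : 0 < R := by positivity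
  have hRz : R < z := by rw [hR, hz]; linarith
  have hsub : z^2 - R^2 = ρ * (4 * Real.sqrt α + ρ) := by
    rw [hR, hz]; ring
  have key := semicircle_integral R z hRpos hRz
  rw [MeasureTheory.integral_Icc_eq_integral_Ioc,
    ← intervalIntegral.integral_of_le (by linarith : -R ≤ R)]
  have heq : ∀ x : ℝ, (1 / (ρ + 2 * Real.sqrt α - x)) *
      (Real.sqrt (4 * α - x ^ 2) / (2 * Real.pi * α))
      = (Real.sqrt (R^2 - x^2) / (z - x)) * (1 / (2 * Real.pi * α)) := by
    intro x
    rw [hR4, hz]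
    ring
  refine (intervalIntegral.integral_congr (g := fun x => (Real.sqrt (R^2 - x^2) / (z - x)) * (1 / (2 * Real.pi * α))) (fun x _ => heq x)).trans ?_
  rw [intervalIntegral.integral_mul_const, key, hsub]
  rw [hz]
  have hpi := Real.pi_ne_zero
  field_simp
  ring
end

section
/- Let k ≥ 3 be an integer and define, for real z > 2√(k−1) with z ≠ k, G(k,z) := −((k−2)z − k√(z² − 4(k−1))) / (2(z² − k²)). Then for every such z: z·G(k,z) ≤ 2(k−1)/(k−2); in particular 2√(z·G(k,z)) ≤ √(8(k−1)/(k−2)) ≤ 4. -/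
theorem stmt15 (k : ℕ) (hk : 3 ≤ k) :
    ∀ z : ℝ, 2 * Real.sqrt ((k : ℝ) - 1) < z → z ≠ (k : ℝ) →
      z * (-(((k : ℝ) - 2) * z - (k : ℝ) * Real.sqrt (z ^ 2 - 4 * ((k : ℝ) - 1)))
            / (2 * (z ^ 2 - (k : ℝ) ^ 2)))
          ≤ 2 * ((k : ℝ) - 1) / ((k : ℝ) - 2) ∧
      2 * Real.sqrt (z * (-(((k : ℝ) - 2) * z
              - (k : ℝ) * Real.sqrt (z ^ 2 - 4 * ((k : ℝ) - 1)))
            / (2 * (z ^ 2 - (k : ℝ) ^ 2))))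
          ≤ Real.sqrt (8 * ((k : ℝ) - 1) / ((k : ℝ) - 2)) ∧
      Real.sqrt (8 * ((k : ℝ) - 1) / ((k : ℝ) - 2)) ≤ 4 := by
  intro z hz hzk
  set K : ℝ := (k : ℝ) with hKdef
  have hK : (3:ℝ) ≤ K := by rw [hKdef]; exact_mod_cast hk
  have hK1 : (0:ℝ) ≤ K - 1 := by linarith
  have hK2 : (0:ℝ) < K - 2 := by linarith
  have hz0 : 0 < z := lt_of_le_of_lt (by positivity) hz
  set s : ℝ := Real.sqrt (z ^ 2 - 4 * (K - 1)) with hsdef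
  have hzsq : 4 * (K - 1) < z ^ 2 := by
    have h1 : 0 < z + 2 * Real.sqrt (K - 1) := by positivity
    have h2 := mul_pos (sub_pos.mpr hz) h1
    nlinarith [Real.sq_sqrt hK1]
  have hs2 : s ^ 2 = z ^ 2 - 4 * (K - 1) := Real.sq_sqrt (by linarith)
  have hs0 : 0 ≤ s := Real.sqrt_nonneg _
  have hden : z ^ 2 - K ^ 2 ≠ 0 := by
    have h1 : z + K ≠ 0 := by positivity
    have h2 : (z - K) * (z + K) ≠ 0 := mul_ne_zero (sub_ne_zero.mpr hzk) h1
    intro h; apply h2; linarith [h.symm ▸ (by ring : (z - K) * (z + K) = z ^ 2 - K ^ 2)]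
  have hD : 0 < K * s + (K - 2) * z := by
    have := mul_nonneg (by linarith : (0:ℝ) ≤ K) hs0
    nlinarith [mul_pos hK2 hz0]
  have key : z * (-((K - 2) * z - K * s) / (2 * (z ^ 2 - K ^ 2)))
      = 2 * (K - 1) * z / (K * s + (K - 2) * z) := by
    rw [show z * (-((K - 2) * z - K * s) / (2 * (z ^ 2 - K ^ 2)))
        = (z * -((K - 2) * z - K * s)) / (2 * (z ^ 2 - K ^ 2)) by ring,
      div_eq_div_iff (by simpa using hden) (ne_of_gt hD)]
    linear_combination (z * K ^ 2) * hs2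
  have goal1 : z * (-((K - 2) * z - K * s) / (2 * (z ^ 2 - K ^ 2)))
      ≤ 2 * (K - 1) / (K - 2) := by
    rw [key, div_le_div_iff₀ hD hK2]
    nlinarith [mul_nonneg (mul_nonneg hK1 (by linarith : (0:ℝ) ≤ K)) hs0]
  refine ⟨goal1, ?_, ?_⟩
  · have h4 : 4 * (z * (-((K - 2) * z - K * s) / (2 * (z ^ 2 - K ^ 2))))
        ≤ 8 * (K - 1) / (K - 2) := by
      have : 4 * (2 * (K - 1) / (K - 2)) = 8 * (K - 1) / (K - 2) := by ring
      linarith [goal1]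
    have h4s : Real.sqrt 4 = 2 := by
      rw [show (4:ℝ) = 2 ^ 2 by norm_num]; exact Real.sqrt_sq (by norm_num)
    calc 2 * Real.sqrt (z * (-((K - 2) * z - K * s) / (2 * (z ^ 2 - K ^ 2))))
        = Real.sqrt (4 * (z * (-((K - 2) * z - K * s) / (2 * (z ^ 2 - K ^ 2))))) := by
          rw [Real.sqrt_mul (by norm_num : (0:ℝ) ≤ 4)
            (z * (-((K - 2) * z - K * s) / (2 * (z ^ 2 - K ^ 2)))), h4s]
      _ ≤ Real.sqrt (8 * (K - 1) / (K - 2)) := Real.sqrt_le_sqrt h4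
  · have h16 : 8 * (K - 1) / (K - 2) ≤ 16 := by
      rw [div_le_iff₀ hK2]; nlinarith
    calc Real.sqrt (8 * (K - 1) / (K - 2)) ≤ Real.sqrt 16 := Real.sqrt_le_sqrt h16
      _ = 4 := by
        rw [show (16:ℝ) = 4 ^ 2 by norm_num, Real.sqrt_sq (by norm_num)]
end

section
/- Let z₁,...,z_N be i.i.d. standard Gaussian random variables, let R ∈ ℝ^{N×N} be symmetric with eigenvalues ν₁,...,ν_N, and let γ > 0 satisfy 2γ·|ν_i| ≤ 1/2 for all i. Then for every t > 0: P( Σ_{i=1}^N ν_i(z_i² − 1) > t ) ≤ exp(−γt + 2γ²·Σ_{i=1}^N ν_i²). Equivalently, writing z = (z₁,...,z_N) in an orthonormal eigenbasis of R, P( zᵀRz − tr(R) > t ) ≤ exp(−γt + 2γ²·Σ_i ν_i²). -/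
open MeasureTheory ProbabilityTheory Real
open scoped ENNReal NNReal

lemma gauss_withDensity' : gaussianReal 0 1 =
    volume.withDensity (fun x : ℝ => ((gaussianPDFReal 0 1 x).toNNReal : ℝ≥0∞)) := by
  rw [gaussianReal_of_var_ne_zero 0 one_ne_zero]; rfl

lemma key_eq' {c : ℝ} (x : ℝ) :
    ((gaussianPDFReal 0 1 x).toNNReal : ℝ) * Real.exp (c * x^2)
      = (√(2*π))⁻¹ * Real.exp (-(1/2-c) * x^2) := by
  rw [Real.coe_toNNReal _ (gaussianPDFReal_nonneg 0 1 x)]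
  simp only [gaussianPDFReal, NNReal.coe_one, mul_one, sub_zero]
  rw [mul_assoc, ← Real.exp_add]
  ring_nf

lemma aux_int' {c : ℝ} (hc : c < 1/2) :
    Integrable (fun x => Real.exp (c * x^2)) (gaussianReal 0 1) := by
  rw [gauss_withDensity', integrable_withDensity_iff_integrable_smul
    (measurable_gaussianPDFReal 0 1).real_toNNReal]
  have hb : (0:ℝ) < 1/2 - c := by linarith
  have h : Integrable (fun x : ℝ => (√(2*π))⁻¹ * Real.exp (-(1/2-c) * x^2)) volume :=
    (integrable_exp_neg_mul_sq hb).const_mul _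
  refine h.congr (Filter.Eventually.of_forall fun x => ?_)
  simp only [NNReal.smul_def, smul_eq_mul]
  exact (key_eq' x).symm

lemma aux_val' {c : ℝ} (hc : c < 1/2) :
    (∫ x, Real.exp (c * x^2) ∂(gaussianReal 0 1)) = (Real.sqrt (1 - 2*c))⁻¹ := by
  have hb : (0:ℝ) < 1/2 - c := by linarith
  rw [gauss_withDensity', integral_withDensity_eq_integral_smul
    (measurable_gaussianPDFReal 0 1).real_toNNReal]
  simp only [NNReal.smul_def, smul_eq_mul]
  simp_rw [key_eq']
  rw [integral_const_mul, integral_gaussian]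
  rw [show π / (1/2 - c) = (√(2*π))^2 * (1-2*c)⁻¹ by
    rw [Real.sq_sqrt (by positivity)]; field_simp]
  have h1 : √(√(2*π)^2 * (1-2*c)⁻¹) = √(2*π) * √((1-2*c)⁻¹) := by
    rw [Real.sqrt_mul (sq_nonneg _), Real.sqrt_sq (by positivity)]
  rw [h1, Real.sqrt_inv]
  field_simp

lemma log_one_sub_ge' {x : ℝ} (hx : |x| ≤ 1/2) : -x - x^2 ≤ Real.log (1 - x) := by
  have hx1 : |x| < 1 := lt_of_le_of_lt hx (by norm_num)
  have habs := Real.abs_log_sub_add_sum_range_le hx1 4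
  have hsum : (∑ i ∈ Finset.range 4, x ^ (i + 1) / (i + 1))
      = x + x^2/2 + x^3/3 + x^4/4 := by
    simp [Finset.sum_range_succ]
    ring
  rw [hsum] at habs
  have hxa := abs_le.mp hx
  have h1x : (0:ℝ) < 1 - |x| := by
    rcases abs_cases x with ⟨he, _⟩ | ⟨he, _⟩ <;> rw [he] <;> linarith [hxa.1, hxa.2]
  have h5 : |x|^5 / (1 - |x|) ≤ 2 * |x|^5 := by
    rw [div_le_iff₀ h1x]
    have h2 : |x|^5 * (1/2) ≤ |x|^5 * (1 - |x|) := by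
      apply mul_le_mul_of_nonneg_left _ (by positivity)
      linarith
    nlinarith [pow_nonneg (abs_nonneg x) 5]
  have hlow := (abs_le.mp habs).1
  norm_num at hlow
  rcases le_or_gt 0 x with h0 | h0
  · have hax : |x| = x := abs_of_nonneg h0
    rw [hax] at h5 hlow
    have e1 : x^3 ≤ x^2 * (1/2) := by nlinarith [hxa.2, sq_nonneg x]
    have e2 : x^4 ≤ x^2 * (1/4) := by nlinarith [hxa.2, sq_nonneg x]
    have e3 : x^5 ≤ x^2 * (1/8) := by nlinarith [hxa.2, sq_nonneg x, e1]
    linarith [sq_nonneg x]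
  · have hax : |x| = -x := abs_of_neg h0
    rw [hax] at h5 hlow
    have e1 : x^3 ≤ 0 := by nlinarith [sq_nonneg x]
    have e2 : x^4 ≤ x^2 * (1/4) := by nlinarith [hxa.1, sq_nonneg x]
    have e3 : (-x)^5 ≤ x^2 * (1/8) := by nlinarith [hxa.1, sq_nonneg x, sq_nonneg (x + 1/2)]
    linarith [sq_nonneg x]

lemma factor_bound' {c : ℝ} (hc : |c| ≤ 1/4) :
    Real.exp (-c) * (Real.sqrt (1 - 2*c))⁻¹ ≤ Real.exp (2*c^2) := by
  have hca := abs_le.mp hc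
  have h12 : (0:ℝ) < 1 - 2*c := by linarith
  have hs : 0 < Real.sqrt (1 - 2*c) := Real.sqrt_pos.mpr h12
  have hx : |2*c| ≤ 1/2 := by rw [abs_mul, abs_two]; linarith [hc]
  have hkey : Real.exp (-(2*c) - (2*c)^2) ≤ 1 - 2*c := by
    calc Real.exp (-(2*c) - (2*c)^2) ≤ Real.exp (Real.log (1 - 2*c)) :=
          Real.exp_le_exp.mpr (log_one_sub_ge' hx)
      _ = 1 - 2*c := Real.exp_log h12
  have hsq : Real.exp (-c - 2*c^2) ≤ Real.sqrt (1 - 2*c) := by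
    rw [Real.le_sqrt (Real.exp_nonneg _) h12.le, ← Real.exp_nat_mul]
    calc Real.exp ((2:ℕ) * (-c - 2*c^2)) = Real.exp (-(2*c) - (2*c)^2) := by
          norm_num; ring_nf
      _ ≤ 1 - 2*c := hkey
  calc Real.exp (-c) * (Real.sqrt (1 - 2*c))⁻¹
      ≤ Real.exp (-c) * (Real.exp (-c - 2*c^2))⁻¹ := by
        apply mul_le_mul_of_nonneg_left _ (Real.exp_nonneg _)
        exact inv_anti₀ (Real.exp_pos _) hsq
    _ = Real.exp (2*c^2) := by
        rw [← Real.exp_neg, ← Real.exp_add]; ring_nf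

theorem stmt16 {N : ℕ} {Ω : Type*} [MeasurableSpace Ω] (P : Measure Ω)
    [IsProbabilityMeasure P]
    (z : Fin N → Ω → ℝ)
    (hindep : iIndepFun z P)
    (hlaw : ∀ i, Measure.map (z i) P = gaussianReal 0 1)
    (R : Matrix (Fin N) (Fin N) ℝ) (hR : R.IsHermitian)
    (γ : ℝ) (hγ : 0 < γ)
    (hbound : ∀ i, 2 * γ * |hR.eigenvalues i| ≤ 1 / 2) :
    ∀ t : ℝ, 0 < t →
      P {ω | t < ∑ i, hR.eigenvalues i * ((z i ω) ^ 2 - 1)}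
        ≤ ENNReal.ofReal (Real.exp (-γ * t + 2 * γ ^ 2 * ∑ i, (hR.eigenvalues i) ^ 2)) := by
  intro t ht
  set ν : Fin N → ℝ := hR.eigenvalues with hν
  -- a.e.-measurability of the z i
  have haem : ∀ i, AEMeasurable (z i) P := by
    intro i
    by_contra h
    have h1 := hlaw i
    rw [Measure.map_of_not_aemeasurable h] at h1
    have h2 : (gaussianReal 0 1) Set.univ = 1 := measure_univ
    rw [← h1] at h2
    simp at h2
  -- measurable modifications
  set z' : Fin N → Ω → ℝ := fun i => (haem i).mk (z i) with hz'
  have hz'm : ∀ i, Measurable (z' i) := fun i => (haem i).measurable_mk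
  have hzz' : ∀ i, z i =ᵐ[P] z' i := fun i => (haem i).ae_eq_mk
  have hall : ∀ᵐ ω ∂P, ∀ i, z i ω = z' i ω := ae_all_iff.mpr hzz'
  have hlaw' : ∀ i, Measure.map (z' i) P = gaussianReal 0 1 := fun i => by
    rw [← Measure.map_congr (hzz' i)]; exact hlaw i
  have hindep' : iIndepFun z' P := by
    rw [iIndepFun_iff_measure_inter_preimage_eq_mul] at hindep ⊢
    intro S sets hmeas
    have hpre : ∀ i (s : Set ℝ), P (z' i ⁻¹' s) = P (z i ⁻¹' s) := by
      intro i s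
      apply measure_congr
      rw [Filter.eventuallyEq_set]
      filter_upwards [hzz' i] with ω hω
      simp [Set.mem_preimage, hω]
    have hinter : P (⋂ i ∈ S, z' i ⁻¹' sets i) = P (⋂ i ∈ S, z i ⁻¹' sets i) := by
      apply measure_congr
      rw [Filter.eventuallyEq_set]
      filter_upwards [hall] with ω hω
      simp only [Set.mem_iInter, Set.mem_preimage]
      constructor <;> intro hh i hi
      · rw [hω i]; exact hh i hi
      · rw [← hω i]; exact hh i hi
    rw [hinter, hindep S hmeas]
    exact Finset.prod_congr rfl fun i _ => (hpre i (sets i)).symm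
  -- the summands
  set X : Fin N → Ω → ℝ := fun i ω => ν i * ((z' i ω)^2 - 1) with hX
  have hXm : ∀ i, Measurable (X i) := by
    intro i
    exact (((hz'm i).pow_const 2).sub measurable_const).const_mul _
  have hXindep : iIndepFun X P :=
    hindep'.comp (fun i x => ν i * (x^2 - 1))
      (fun i => (((measurable_id.pow_const 2)).sub measurable_const).const_mul _)
  -- bounds on |γ ν i|
  have hc : ∀ i, |γ * ν i| ≤ 1/4 := by
    intro i
    rw [abs_mul, abs_of_pos hγ]
    have := hbound i
    linarith
  have hc2 : ∀ i, γ * ν i < 1/2 := fun i => by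
    have := (abs_le.mp (hc i)).2; linarith
  -- pointwise rewrite of the exponential
  have hfun : ∀ i (y : ℝ), Real.exp (γ * (ν i * (y^2 - 1)))
      = Real.exp (-(γ * ν i)) * Real.exp ((γ * ν i) * y^2) := by
    intro i y
    rw [← Real.exp_add]
    ring_nf
  -- integrability of exp(γ X i)
  have hint : ∀ i, Integrable (fun ω => Real.exp (γ * X i ω)) P := by
    intro i
    have hg : Integrable (fun y : ℝ => Real.exp (-(γ * ν i)) * Real.exp ((γ * ν i) * y^2))
        (gaussianReal 0 1) := (aux_int' (hc2 i)).const_mul _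
    rw [← hlaw' i] at hg
    have := (integrable_map_measure hg.aestronglyMeasurable (hz'm i).aemeasurable).mp hg
    refine this.congr (Filter.Eventually.of_forall fun ω => ?_)
    simp only [Function.comp_apply, hX]
    rw [← hfun i (z' i ω)]
  -- mgf bound
  have hmgf : ∀ i, mgf (X i) P γ ≤ Real.exp (2 * γ^2 * (ν i)^2) := by
    intro i
    have hmeasg : AEStronglyMeasurable
        (fun y : ℝ => Real.exp (γ * (ν i * (y^2 - 1)))) (Measure.map (z' i) P) := by
      apply Measurable.aestronglyMeasurable
      exact (((measurable_id.pow_const 2).sub measurable_const).const_mul _ |>.const_mul γ).exp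
    have h1 : mgf (X i) P γ
        = ∫ y, Real.exp (γ * (ν i * (y^2 - 1))) ∂(Measure.map (z' i) P) := by
      rw [integral_map (hz'm i).aemeasurable hmeasg]
      rfl
    rw [h1, hlaw' i]
    simp_rw [hfun i]
    rw [integral_const_mul, aux_val' (hc2 i)]
    calc Real.exp (-(γ * ν i)) * (√(1 - 2 * (γ * ν i)))⁻¹
        ≤ Real.exp (2 * (γ * ν i)^2) := factor_bound' (hc i)
      _ = Real.exp (2 * γ^2 * (ν i)^2) := by ring_nf
  -- Chernoff
  have hintsum : Integrable (fun ω => Real.exp (γ * (∑ i, X i) ω)) P :=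
    hXindep.integrable_exp_mul_sum hXm (fun i _ => hint i)
  have hcher := measure_ge_le_exp_mul_mgf (μ := P) (X := ∑ i, X i) t hγ.le hintsum
  have hprod : mgf (∑ i, X i) P γ ≤ Real.exp (2 * γ^2 * ∑ i, (ν i)^2) := by
    rw [hXindep.mgf_sum hXm Finset.univ]
    calc ∏ i, mgf (X i) P γ ≤ ∏ i, Real.exp (2 * γ^2 * (ν i)^2) :=
          Finset.prod_le_prod (fun i _ => mgf_nonneg) (fun i _ => hmgf i)
      _ = Real.exp (∑ i, 2 * γ^2 * (ν i)^2) := (Real.exp_sum _ _).symm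
      _ = Real.exp (2 * γ^2 * ∑ i, (ν i)^2) := by rw [← Finset.mul_sum]
  have hfinal : (P {ω | t ≤ (∑ i, X i) ω}).toReal
      ≤ Real.exp (-γ * t + 2 * γ^2 * ∑ i, (ν i)^2) := by
    calc (P {ω | t ≤ (∑ i, X i) ω}).toReal
        ≤ Real.exp (-γ * t) * mgf (∑ i, X i) P γ := hcher
      _ ≤ Real.exp (-γ * t) * Real.exp (2 * γ^2 * ∑ i, (ν i)^2) := by
          apply mul_le_mul_of_nonneg_left hprod (Real.exp_nonneg _)
      _ = Real.exp (-γ * t + 2 * γ^2 * ∑ i, (ν i)^2) := (Real.exp_add _ _).symm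
  -- transfer back to z
  have hsets : P {ω | t < ∑ i, ν i * ((z i ω)^2 - 1)}
      = P {ω | t < ∑ i, X i ω} := by
    apply measure_congr
    rw [Filter.eventuallyEq_set]
    filter_upwards [hall] with ω hω
    simp only [Set.mem_setOf_eq, hX]
    constructor <;> intro hh
    · refine lt_of_lt_of_eq hh (Finset.sum_congr rfl fun i _ => by rw [hω i])
    · refine lt_of_lt_of_eq hh (Finset.sum_congr rfl fun i _ => by rw [hω i])
  rw [hsets]
  have hmono : P {ω | t < ∑ i, X i ω} ≤ P {ω | t ≤ (∑ i, X i) ω} := by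
    apply measure_mono
    intro ω hω
    simp only [Set.mem_setOf_eq, Finset.sum_apply] at *
    exact hω.le
  refine hmono.trans ?_
  rw [ENNReal.le_ofReal_iff_toReal_le (measure_ne_top P _) (Real.exp_nonneg _)]
  exact hfinal
end
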